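/- arXiv:2503.21273 — 7 statements merged into one kernel-verified Lean document; each statement's English description precedes it below -/
import Mathlib

section
/- Let g : ℝ → ℝ be measurable with g ≥ 0, g(t) = 0 for t < 0, g integrable with ∫_ℝ g < 1, and g essentially bounded. Let ψ : ℝ → ℝ be measurable with ψ ≥ 0, ψ(t) = 0 for t < 0, ψ integrable on compact sets, and ψ(t) = g(t) + (g*ψ)(t) for almost every t ∈ ℝ (convolution over ℝ). Then ψ is integrable with ∫_ℝ ψ = (∫_ℝ g)/(1 − ∫_ℝ g), ψ is essentially bounded with ess sup ψ ≤ (ess sup g)·(1 + ∫_ℝ ψ), and consequently ψ ∈ L²(ℝ). -/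
open MeasureTheory Real Set

open scoped ENNReal

/-- The resolvent of a subcritical nonnegative kernel is integrable (with explicit L¹ norm),
essentially bounded, and square-integrable. -/
theorem resolvent_integrable_bounded_L2 (g ψ : ℝ → ℝ)
    (hg_meas : Measurable g) (hg_nonneg : ∀ t, 0 ≤ g t) (hg_zero : ∀ t < 0, g t = 0)
    (hg_int : Integrable g) (hg_lt : (∫ t, g t) < 1)
    (hg_bdd : MemLp g ⊤ volume)
    (hψ_meas : Measurable ψ) (hψ_nonneg : ∀ t, 0 ≤ ψ t) (hψ_zero : ∀ t < 0, ψ t = 0)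
    (hψ_loc : MeasureTheory.LocallyIntegrable ψ)
    (hψ_eq : ∀ᵐ t : ℝ, ψ t = g t + ∫ s, g (t - s) * ψ s) :
    Integrable ψ ∧ (∫ t, ψ t) = (∫ t, g t) / (1 - ∫ t, g t) ∧
    MemLp ψ ⊤ volume ∧
    eLpNorm ψ ⊤ volume ≤ eLpNorm g ⊤ volume * ENNReal.ofReal (1 + ∫ t, ψ t) ∧
    MemLp ψ 2 volume := by
  classical
  set a : ℝ := ∫ t, g t with ha_def
  have ha_nonneg : 0 ≤ a := integral_nonneg hg_nonneg
  have h1a : 0 < 1 - a := by linarith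
  set G : ℝ → ℝ≥0∞ := fun t => ENNReal.ofReal (g t) with hG_def
  set Ψ : ℝ → ℝ≥0∞ := fun t => ENNReal.ofReal (ψ t) with hΨ_def
  have hG_meas : Measurable G := hg_meas.ennreal_ofReal
  have hΨ_meas : Measurable Ψ := hψ_meas.ennreal_ofReal
  set A : ℝ≥0∞ := ENNReal.ofReal a with hA_def
  have hA : ∫⁻ t, G t = A :=
    (ofReal_integral_eq_lintegral_ofReal hg_int (ae_of_all _ hg_nonneg)).symm
  have hA_ne_top : A ≠ ∞ := ENNReal.ofReal_ne_top
  have hΨnorm : ∀ t, (‖ψ t‖₊ : ℝ≥0∞) = Ψ t := fun t => Real.enorm_eq_ofReal (hψ_nonneg t)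
  -- the kernel and the convolution in `ℝ≥0∞`
  set K : ℝ → ℝ → ℝ≥0∞ := fun t s => G (t - s) * Ψ s with hK_def
  have hK_meas : Measurable (Function.uncurry K) :=
    ((hg_meas.comp (measurable_fst.sub measurable_snd)).ennreal_ofReal).mul
      ((hψ_meas.comp measurable_snd).ennreal_ofReal)
  set Φ : ℝ → ℝ≥0∞ := fun t => ∫⁻ s, K t s with hΦ_def
  have hΦ_meas : Measurable Φ := hK_meas.lintegral_prod_right'
  -- translation invariance
  have h_transl : ∀ s : ℝ, (∫⁻ t, G (t - s)) = A := by
    intro s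
    rw [lintegral_sub_right_eq_self G s]
    exact hA
  -- Tonelli swap on a restricted region
  have h_swap : ∀ S : Set ℝ, MeasurableSet S →
      (∫⁻ t in S, Φ t) = ∫⁻ s, Ψ s * ∫⁻ t in S, G (t - s) := by
    intro S hS
    have h1 : (∫⁻ t in S, Φ t) = ∫⁻ s, ∫⁻ t in S, K t s := by
      simpa only [hΦ_def] using
        lintegral_lintegral_swap (μ := volume.restrict S) (ν := volume) hK_meas.aemeasurable
    rw [h1]
    refine lintegral_congr fun s => ?_
    rw [show (fun t => K t s) = fun t => G (t - s) * Ψ s from rfl,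
      lintegral_mul_const' (Ψ s) _ ENNReal.ofReal_ne_top, mul_comm]
  -- truncated convolution estimate
  have key_n : ∀ n : ℕ, (∫⁻ t in Icc (0:ℝ) n, Φ t) ≤ A * ∫⁻ t in Icc (0:ℝ) n, Ψ t := by
    intro n
    rw [h_swap _ measurableSet_Icc]
    have hbd : ∀ s, Ψ s * (∫⁻ t in Icc (0:ℝ) n, G (t - s)) ≤
        A * (Icc (0:ℝ) n).indicator Ψ s := by
      intro s
      by_cases hs : s ∈ Icc (0:ℝ) (n:ℝ)
      · rw [indicator_of_mem hs, mul_comm A (Ψ s)]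
        exact mul_le_mul_right (le_trans (setLIntegral_le_lintegral _ _) (h_transl s).le) _
      · rw [indicator_of_notMem hs, mul_zero]
        rcases lt_or_ge s 0 with h0 | h0
        · have : Ψ s = 0 := by simp [hΨ_def, hψ_zero s h0]
          rw [this, zero_mul]
        · have hsn : (n:ℝ) < s := by
            by_contra h
            exact hs ⟨h0, le_of_not_gt h⟩
          have hz : (∫⁻ t in Icc (0:ℝ) n, G (t - s)) = 0 := by
            have : (∫⁻ t in Icc (0:ℝ) n, G (t - s)) = ∫⁻ t in Icc (0:ℝ) n, 0 := by
              refine setLIntegral_congr_fun measurableSet_Icc (fun t ht => ?_)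
              have : t - s < 0 := by
                have := ht.2
                linarith
              simp [hG_def, hg_zero _ this]
            rw [this, lintegral_zero]
          rw [hz, mul_zero]
    calc (∫⁻ s, Ψ s * ∫⁻ t in Icc (0:ℝ) n, G (t - s))
        ≤ ∫⁻ s, A * (Icc (0:ℝ) n).indicator Ψ s := lintegral_mono hbd
      _ = A * ∫⁻ s, (Icc (0:ℝ) n).indicator Ψ s :=
          lintegral_const_mul' _ _ hA_ne_top
      _ = A * ∫⁻ t in Icc (0:ℝ) n, Ψ t := by
          rw [lintegral_indicator measurableSet_Icc]
  -- truncated integrals of Ψ are finite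
  have hI_fin : ∀ n : ℕ, (∫⁻ t in Icc (0:ℝ) n, Ψ t) < ∞ := by
    intro n
    have h1 : IntegrableOn ψ (Icc (0:ℝ) n) := hψ_loc.integrableOn_isCompact isCompact_Icc
    have h2 : (∫⁻ t in Icc (0:ℝ) n, Ψ t) = ∫⁻ t in Icc (0:ℝ) n, (‖ψ t‖₊ : ℝ≥0∞) :=
      lintegral_congr fun t => (hΨnorm t).symm
    rw [h2]
    exact h1.2
  -- the convolution vanishes for negative times
  have hΦ_zero_neg : ∀ t < 0, Φ t = 0 := by
    intro t ht
    have hz : ∀ s, K t s = 0 := by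
      intro s
      rcases lt_or_ge s 0 with h' | h'
      · simp [hK_def, hΨ_def, hψ_zero s h']
      · have : t - s < 0 := by linarith
        simp [hK_def, hG_def, hg_zero _ this]
    simp [hΦ_def, hz]
  -- the convolution is finite a.e.
  have hΦ_ae_fin : ∀ᵐ t : ℝ, Φ t < ∞ := by
    have hmem : ∀ n : ℕ, ∀ᵐ t : ℝ, t ∈ Icc (0:ℝ) n → Φ t < ∞ := by
      intro n
      have hfin : (∫⁻ t in Icc (0:ℝ) n, Φ t) ≠ ∞ :=
        (lt_of_le_of_lt (key_n n) (ENNReal.mul_lt_top hA_ne_top.lt_top (hI_fin n))).ne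
      exact (ae_restrict_iff' measurableSet_Icc).mp (ae_lt_top hΦ_meas hfin)
    have hall : ∀ᵐ t : ℝ, ∀ n : ℕ, t ∈ Icc (0:ℝ) n → Φ t < ∞ := ae_all_iff.2 hmem
    filter_upwards [hall] with t ht
    rcases lt_or_ge t 0 with h' | h'
    · rw [hΦ_zero_neg t h']
      exact ENNReal.zero_lt_top
    · exact ht ⌈t⌉₊ ⟨h', Nat.le_ceil t⟩
  -- the key pointwise identity in ℝ≥0∞
  have hkey : ∀ᵐ t : ℝ, Ψ t = G t + Φ t := by
    filter_upwards [hψ_eq, hΦ_ae_fin] with t ht hfin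
    have hmeas_t : AEStronglyMeasurable (fun s => g (t - s) * ψ s) volume :=
      ((hg_meas.comp (measurable_const.sub measurable_id)).mul hψ_meas).aestronglyMeasurable
    have hconv_eq : (∫ s, g (t - s) * ψ s) = (Φ t).toReal := by
      rw [integral_eq_lintegral_of_nonneg_ae
        (ae_of_all _ fun s => mul_nonneg (hg_nonneg _) (hψ_nonneg _)) hmeas_t]
      congr 1
      exact lintegral_congr fun s => ENNReal.ofReal_mul (hg_nonneg _)
    have h1 : Ψ t = ENNReal.ofReal (g t + (Φ t).toReal) := by
      rw [hΨ_def]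
      simp only
      rw [ht, hconv_eq]
    rw [h1, ENNReal.ofReal_add (hg_nonneg t) ENNReal.toReal_nonneg,
      ENNReal.ofReal_toReal hfin.ne]
  -- the uniform truncated bound
  set c : ℝ := a / (1 - a) with hc_def
  have hc_nonneg : 0 ≤ c := div_nonneg ha_nonneg h1a.le
  have hIn_le : ∀ n : ℕ, (∫⁻ t in Icc (0:ℝ) n, Ψ t) ≤ ENNReal.ofReal c := by
    intro n
    set In := ∫⁻ t in Icc (0:ℝ) n, Ψ t with hIn_def
    have hfin : In ≠ ∞ := (hI_fin n).ne
    have hstep : In ≤ A + A * In := by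
      calc In = ∫⁻ t in Icc (0:ℝ) n, (G t + Φ t) :=
            lintegral_congr_ae (ae_restrict_of_ae hkey)
        _ = (∫⁻ t in Icc (0:ℝ) n, G t) + ∫⁻ t in Icc (0:ℝ) n, Φ t :=
            lintegral_add_left hG_meas _
        _ ≤ A + A * In :=
            add_le_add (le_trans (setLIntegral_le_lintegral _ _) hA.le) (key_n n)
    have hRHS_ne : A + A * In ≠ ∞ :=
      ENNReal.add_ne_top.mpr ⟨hA_ne_top, ENNReal.mul_ne_top hA_ne_top hfin⟩
    set x : ℝ := In.toReal with hx_def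
    have hx_nonneg : 0 ≤ x := ENNReal.toReal_nonneg
    have hreal : x ≤ a + a * x := by
      have h := ENNReal.toReal_mono hRHS_ne hstep
      rwa [ENNReal.toReal_add hA_ne_top (ENNReal.mul_ne_top hA_ne_top hfin),
        ENNReal.toReal_mul, hA_def, ENNReal.toReal_ofReal ha_nonneg] at h
    have hxc : x ≤ c := by
      rw [hc_def, le_div_iff₀ h1a]
      nlinarith
    calc In = ENNReal.ofReal x := (ENNReal.ofReal_toReal hfin).symm
      _ ≤ ENNReal.ofReal c := ENNReal.ofReal_le_ofReal hxc
  -- monotone convergence : the full integral of Ψ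
  set L : ℝ≥0∞ := ∫⁻ t, Ψ t with hL_def
  have hL_le : L ≤ ENNReal.ofReal c := by
    set f : ℕ → ℝ → ℝ≥0∞ := fun n => (Icc (0:ℝ) (n:ℝ)).indicator Ψ with hf_def
    have hf_meas : ∀ n, Measurable (f n) := fun n => hΨ_meas.indicator measurableSet_Icc
    have hf_mono : Monotone f := by
      intro m n hmn t
      exact indicator_le_indicator_of_subset
        (Icc_subset_Icc_right (by exact_mod_cast hmn)) (fun _ => zero_le) t
    have hf_sup : ∀ t, (⨆ n, f n t) = Ψ t := by
      intro t
      rcases lt_or_ge t 0 with h' | h'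
      · have h1 : ∀ n, f n t = 0 := fun n =>
          indicator_of_notMem (fun h => absurd h.1 (not_le.mpr h')) _
        have h2 : Ψ t = 0 := by simp [hΨ_def, hψ_zero t h']
        simp [h1, h2]
      · refine le_antisymm (iSup_le fun n => ?_) ?_
        · exact indicator_apply_le fun _ => le_rfl
        · refine le_iSup_of_le ⌈t⌉₊ ?_
          have hmem : t ∈ Icc (0:ℝ) ((⌈t⌉₊ : ℕ) : ℝ) := ⟨h', Nat.le_ceil t⟩
          rw [hf_def]
          simp only
          rw [indicator_of_mem hmem]
    have hmc : L = ⨆ n, ∫⁻ t, f n t := by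
      rw [hL_def, ← lintegral_iSup hf_meas hf_mono]
      exact lintegral_congr fun t => (hf_sup t).symm
    rw [hmc]
    refine iSup_le fun n => ?_
    rw [hf_def]
    simp only
    rw [lintegral_indicator measurableSet_Icc]
    exact hIn_le n
  have hL_fin : L ≠ ∞ := (lt_of_le_of_lt hL_le ENNReal.ofReal_lt_top).ne
  -- integrability of ψ
  have hψ_int : Integrable ψ := by
    have h := integrable_toReal_of_lintegral_ne_top hΨ_meas.aemeasurable hL_fin
    have heq : ∀ t : ℝ, (Ψ t).toReal = ψ t := fun t => ENNReal.toReal_ofReal (hψ_nonneg t)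
    exact h.congr (ae_of_all _ heq)
  -- exact value of the integral
  set ℓ : ℝ := ∫ t, ψ t with hℓ_def
  have hℓ_nonneg : 0 ≤ ℓ := integral_nonneg hψ_nonneg
  have hL_eq : L = ENNReal.ofReal ℓ :=
    (ofReal_integral_eq_lintegral_ofReal hψ_int (ae_of_all _ hψ_nonneg)).symm
  have hglobswap : (∫⁻ t, Φ t) = A * L := by
    have h := h_swap univ MeasurableSet.univ
    rw [Measure.restrict_univ] at h
    rw [h]
    simp only [h_transl]
    rw [lintegral_mul_const' A Ψ hA_ne_top, mul_comm, hL_def]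
  have hglob : L = A + A * L := by
    calc L = ∫⁻ t, (G t + Φ t) := lintegral_congr_ae hkey
      _ = (∫⁻ t, G t) + ∫⁻ t, Φ t := lintegral_add_left hG_meas _
      _ = A + A * L := by rw [hA, hglobswap]
  have hℓ_eq : ℓ = a + a * ℓ := by
    have h := congrArg ENNReal.toReal hglob
    rwa [ENNReal.toReal_add hA_ne_top (ENNReal.mul_ne_top hA_ne_top hL_fin),
      ENNReal.toReal_mul, hA_def, ENNReal.toReal_ofReal ha_nonneg, hL_eq,
      ENNReal.toReal_ofReal hℓ_nonneg] at h
  have hℓ_val : ℓ = a / (1 - a) := by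
    rw [eq_div_iff h1a.ne']
    nlinarith
  -- the essential bound
  set M : ℝ≥0∞ := eLpNorm g ⊤ volume with hM_def
  have hM_eq : M = essSup G volume := by
    rw [hM_def, eLpNorm_exponent_top, eLpNormEssSup]
    exact essSup_congr_ae (ae_of_all _ fun t => Real.enorm_eq_ofReal (hg_nonneg t))
  have hM_fin : M ≠ ∞ := hg_bdd.2.ne
  have hgM : ∀ᵐ u : ℝ, G u ≤ M := by
    rw [hM_eq]
    exact ENNReal.ae_le_essSup G
  have hΦ_le : ∀ t, Φ t ≤ M * L := by
    intro t
    have hmp : MeasurePreserving (fun s : ℝ => t - s) volume volume :=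
      Measure.measurePreserving_sub_left volume t
    have hae : ∀ᵐ s : ℝ, G (t - s) ≤ M := hmp.quasiMeasurePreserving.ae hgM
    calc Φ t ≤ ∫⁻ s, M * Ψ s :=
          lintegral_mono_ae (hae.mono fun s hs => mul_le_mul_left hs _)
      _ = M * L := by rw [lintegral_const_mul' M Ψ hM_fin, hL_def]
  have hψ_ae_bd : ∀ᵐ t : ℝ, (‖ψ t‖₊ : ℝ≥0∞) ≤ M * ENNReal.ofReal (1 + ℓ) := by
    filter_upwards [hkey, hgM] with t h1 h2
    rw [hΨnorm t]
    calc Ψ t = G t + Φ t := h1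
      _ ≤ M + M * L := add_le_add h2 (hΦ_le t)
      _ = M * (1 + L) := by ring
      _ = M * ENNReal.ofReal (1 + ℓ) := by
          rw [hL_eq, ENNReal.ofReal_add zero_le_one hℓ_nonneg, ENNReal.ofReal_one]
  have heLp_bound : eLpNorm ψ ⊤ volume ≤ M * ENNReal.ofReal (1 + ℓ) := by
    rw [eLpNorm_exponent_top, eLpNormEssSup]
    exact essSup_le_of_ae_le _ hψ_ae_bd
  have hψ_top : MemLp ψ ⊤ volume :=
    ⟨hψ_meas.aestronglyMeasurable,
      lt_of_le_of_lt heLp_bound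
        (ENNReal.mul_lt_top hM_fin.lt_top ENNReal.ofReal_lt_top)⟩
  -- L² membership
  have hψ_L2 : MemLp ψ 2 volume := by
    refine ⟨hψ_meas.aestronglyMeasurable, ?_⟩
    have hC : ∀ᵐ x : ℝ, (‖ψ x‖₊ : ℝ≥0∞) ^ (2:ℝ) ≤
        (M * ENNReal.ofReal (1 + ℓ)) * (‖ψ x‖₊ : ℝ≥0∞) := by
      filter_upwards [hψ_ae_bd] with x hx
      have hsq : (‖ψ x‖₊ : ℝ≥0∞) ^ (2:ℝ) = (‖ψ x‖₊ : ℝ≥0∞) * (‖ψ x‖₊ : ℝ≥0∞) := by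
        rw [show (2:ℝ) = ((2:ℕ):ℝ) by norm_num, ENNReal.rpow_natCast, pow_two]
      rw [hsq]
      exact mul_le_mul_left hx _
    have hCne : M * ENNReal.ofReal (1 + ℓ) ≠ ∞ :=
      ENNReal.mul_ne_top hM_fin ENNReal.ofReal_ne_top
    have hfin2 : (∫⁻ x, (‖ψ x‖₊ : ℝ≥0∞) ^ (2:ℝ)) ≠ ∞ := by
      refine ne_of_lt (lt_of_le_of_lt (lintegral_mono_ae hC) ?_)
      rw [lintegral_const_mul' _ _ hCne]
      have hnorm : (∫⁻ x, (‖ψ x‖₊ : ℝ≥0∞)) = L := lintegral_congr fun t => hΨnorm t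
      rw [hnorm]
      exact ENNReal.mul_lt_top hCne.lt_top hL_fin.lt_top
    rw [eLpNorm_eq_lintegral_rpow_enorm_toReal (by norm_num) (by norm_num)]
    have h2 : (2 : ℝ≥0∞).toReal = (2:ℝ) := by norm_num
    rw [h2]
    exact ENNReal.rpow_lt_top_of_nonneg (by norm_num) hfin2
  exact ⟨hψ_int, hℓ_val, hψ_top, heLp_bound, hψ_L2⟩
end

section
/- Under Assumption (A), for every T > 1, with a_T := 1 − 1/T and Ψ a resolvent of a_T·φ, the rescaled function Ψ^{(T)} : t ↦ Ψ(T·t) belongs to L²(ℝ); moreover ∫_ℝ Ψ = a_T/(1 − a_T) and ∫_ℝ Ψ^{(T)} = a_T. -/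
open MeasureTheory Real Set

/-- Assumption (A) on the Hawkes kernel φ. -/
def AssumptionA (φ : ℝ → ℝ) : Prop :=
  Measurable φ ∧ (∀ t, 0 ≤ φ t) ∧ (∀ t < 0, φ t = 0) ∧
  Integrable φ ∧ (∫ t, φ t) = 1 ∧
  IntegrableOn (fun t => t * φ t) (Set.Ioi 0) ∧
  IntegrableOn (fun t => t ^ 2 * φ t) (Set.Ioi 0) ∧
  (0 < ∫ t in Set.Ioi (0 : ℝ), t * φ t) ∧
  Differentiable ℝ φ ∧ (∃ K, ∀ t, |deriv φ t| ≤ K) ∧ Integrable (deriv φ)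

/-- First moment `m` of φ. -/
noncomputable def mom1 (φ : ℝ → ℝ) : ℝ := ∫ t in Set.Ioi (0 : ℝ), t * φ t

/-- Second moment `m₂` of φ. -/
noncomputable def mom2 (φ : ℝ → ℝ) : ℝ := ∫ t in Set.Ioi (0 : ℝ), t ^ 2 * φ t

/-- `Ψ` is a resolvent of the kernel `g`: measurable, nonnegative, vanishing on negatives,
locally integrable, and satisfying `Ψ = g + g * Ψ` a.e. (convolution over ℝ). -/
def IsResolvent (g Ψ : ℝ → ℝ) : Prop :=
  Measurable Ψ ∧ (∀ t, 0 ≤ Ψ t) ∧ (∀ t < 0, Ψ t = 0) ∧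
  MeasureTheory.LocallyIntegrable Ψ ∧
  (∀ᵐ t : ℝ, Ψ t = g t + ∫ s, g (t - s) * Ψ s)

open scoped ENNReal


private lemma ennreal_solve {X : ℝ≥0∞} {a : ℝ} (ha0 : 0 ≤ a) (ha1 : a < 1)
    (hX : X ≠ ⊤) (h : X ≤ ENNReal.ofReal a + ENNReal.ofReal a * X) :
    X ≤ ENNReal.ofReal (a / (1 - a)) := by
  have hfin : ENNReal.ofReal a + ENNReal.ofReal a * X ≠ ⊤ :=
    ENNReal.add_ne_top.2 ⟨ENNReal.ofReal_ne_top, ENNReal.mul_ne_top ENNReal.ofReal_ne_top hX⟩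
  have hx : X.toReal ≤ a + a * X.toReal := by
    have := ENNReal.toReal_mono hfin h
    rwa [ENNReal.toReal_add ENNReal.ofReal_ne_top
      (ENNReal.mul_ne_top ENNReal.ofReal_ne_top hX), ENNReal.toReal_mul,
      ENNReal.toReal_ofReal ha0] at this
  have hx2 : X.toReal ≤ a / (1 - a) := by
    rw [le_div_iff₀ (by linarith)]
    nlinarith
  calc X = ENNReal.ofReal X.toReal := (ENNReal.ofReal_toReal hX).symm
    _ ≤ _ := ENNReal.ofReal_le_ofReal hx2

private lemma resolvent_integral {φ : ℝ → ℝ} (hφm : Measurable φ) (hφnn : ∀ t, 0 ≤ φ t)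
    (hφneg : ∀ t < 0, φ t = 0) (hφint : Integrable φ) (hφ1 : (∫ t, φ t) = 1)
    {a : ℝ} (ha0 : 0 < a) (ha1 : a < 1) {Ψ : ℝ → ℝ}
    (hΨm : Measurable Ψ) (hΨnn : ∀ t, 0 ≤ Ψ t) (hΨneg : ∀ t < 0, Ψ t = 0)
    (hΨloc : LocallyIntegrable Ψ)
    (hae : ∀ᵐ t : ℝ, Ψ t = a * φ t + ∫ s, a * φ (t - s) * Ψ s) :
    Integrable Ψ ∧ (∫ t, Ψ t) = a / (1 - a) := by
  set g : ℝ → ℝ≥0∞ := fun t => ENNReal.ofReal (a * φ t) with hgdef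
  set F : ℝ → ℝ≥0∞ := fun t => ENNReal.ofReal (Ψ t) with hFdef
  have hgm : Measurable g := (hφm.const_mul a).ennreal_ofReal
  have hFm : Measurable F := hΨm.ennreal_ofReal
  have hga : (∫⁻ t, g t) = ENNReal.ofReal a := by
    rw [← ofReal_integral_eq_lintegral_ofReal (hφint.const_mul a)
      (Filter.Eventually.of_forall fun t => mul_nonneg ha0.le (hφnn t))]
    rw [integral_const_mul, hφ1, mul_one]
  have hKg : ∀ s : ℝ, (∫⁻ t, g (t - s)) = ENNReal.ofReal a := fun s => by
    rw [lintegral_sub_right_eq_self g s, hga]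
  have swap_eq : ∀ F' : ℝ → ℝ≥0∞, Measurable F' →
      (∫⁻ t, ∫⁻ s, g (t - s) * F' s) = ENNReal.ofReal a * ∫⁻ s, F' s := by
    intro F' hF'
    rw [lintegral_lintegral_swap
      (((hgm.comp (measurable_fst.sub measurable_snd)).mul
        (hF'.comp measurable_snd)).aemeasurable)]
    calc (∫⁻ s, ∫⁻ t, g (t - s) * F' s)
        = ∫⁻ s, (∫⁻ t, g (t - s)) * F' s := by
          refine lintegral_congr fun s => ?_
          exact lintegral_mul_const _ (hgm.comp (measurable_id.sub measurable_const))
      _ = ∫⁻ s, ENNReal.ofReal a * F' s := by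
          refine lintegral_congr fun s => by rw [hKg]
      _ = ENNReal.ofReal a * ∫⁻ s, F' s := lintegral_const_mul _ hF'
  have hbound : ∀ᵐ t : ℝ, F t ≤ g t + ∫⁻ s, g (t - s) * F s := by
    filter_upwards [hae] with t ht
    have h2 : ENNReal.ofReal (∫ s, a * φ (t - s) * Ψ s) ≤ ∫⁻ s, g (t - s) * F s := by
      by_cases hI : Integrable (fun s => a * φ (t - s) * Ψ s)
      · rw [ofReal_integral_eq_lintegral_ofReal hI (Filter.Eventually.of_forall fun s =>
          mul_nonneg (mul_nonneg ha0.le (hφnn _)) (hΨnn s))]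
        refine lintegral_mono fun s => ?_
        rw [ENNReal.ofReal_mul (mul_nonneg ha0.le (hφnn _))]
      · rw [integral_undef hI]; simp
    calc F t = ENNReal.ofReal (a * φ t + ∫ s, a * φ (t - s) * Ψ s) := by rw [hFdef]; simp [ht]
      _ ≤ ENNReal.ofReal (a * φ t) + ENNReal.ofReal (∫ s, a * φ (t - s) * Ψ s) :=
          ENNReal.ofReal_add_le
      _ ≤ g t + ∫⁻ s, g (t - s) * F s := add_le_add le_rfl h2
  -- truncation
  have hfin : ∀ n : ℕ, (∫⁻ t in Iic (n : ℝ), F t) ≠ ⊤ := by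
    intro n
    have hsub : Iic (n : ℝ) ⊆ Iio 0 ∪ Icc 0 (n : ℝ) := by
      intro x hx
      rcases lt_or_ge x 0 with h | h
      · exact Or.inl h
      · exact Or.inr ⟨h, hx⟩
    have h0 : (∫⁻ t in Iio (0 : ℝ), F t) = 0 := by
      have hz : ∀ x ∈ Iio (0 : ℝ), F x = (fun _ : ℝ => (0 : ℝ≥0∞)) x := fun x hx => by
        simp [hFdef, hΨneg x hx]
      rw [setLIntegral_congr_fun measurableSet_Iio hz,
        lintegral_zero]
    have h1 : (∫⁻ t in Icc (0 : ℝ) (n : ℝ), F t) < ⊤ := by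
      have hio : IntegrableOn Ψ (Icc (0 : ℝ) (n : ℝ)) :=
        hΨloc.integrableOn_isCompact isCompact_Icc
      have := hio.2
      rw [hasFiniteIntegral_iff_ofReal (Filter.Eventually.of_forall fun t => hΨnn t)] at this
      exact this
    refine ne_of_lt (lt_of_le_of_lt (le_trans (lintegral_mono_set hsub)
      (lintegral_union_le _ _ _)) ?_)
    rw [h0, zero_add]
    exact h1
  have hXn : ∀ n : ℕ, (∫⁻ t in Iic (n : ℝ), F t) ≤ ENNReal.ofReal (a / (1 - a)) := by
    intro n
    set F' : ℝ → ℝ≥0∞ := (Iic (n : ℝ)).indicator F with hF'def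
    have hF'm : Measurable F' := hFm.indicator measurableSet_Iic
    have hkey : ∀ t ∈ Iic (n : ℝ), ∀ s, g (t - s) * F s = g (t - s) * F' s := by
      intro t ht s
      by_cases hs : s ∈ Iic (n : ℝ)
      · rw [hF'def, indicator_of_mem hs]
      · have hts : t - s < 0 := by
          simp only [mem_Iic, not_le] at hs ht ⊢
          linarith
        simp [hgdef, hφneg _ hts]
    have step : (∫⁻ t in Iic (n : ℝ), F t) ≤
        ENNReal.ofReal a + ENNReal.ofReal a * ∫⁻ t in Iic (n : ℝ), F t := by
      calc (∫⁻ t in Iic (n : ℝ), F t)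
          ≤ ∫⁻ t in Iic (n : ℝ), (g t + ∫⁻ s, g (t - s) * F s) :=
            lintegral_mono_ae (ae_restrict_of_ae hbound)
        _ = (∫⁻ t in Iic (n : ℝ), g t) + ∫⁻ t in Iic (n : ℝ), ∫⁻ s, g (t - s) * F s :=
            lintegral_add_left hgm _
        _ ≤ ENNReal.ofReal a + ENNReal.ofReal a * ∫⁻ t in Iic (n : ℝ), F t := by
            refine add_le_add ?_ ?_
            · rw [← hga]; exact setLIntegral_le_lintegral _ _
            · calc (∫⁻ t in Iic (n : ℝ), ∫⁻ s, g (t - s) * F s)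
                  = ∫⁻ t in Iic (n : ℝ), ∫⁻ s, g (t - s) * F' s := by
                    refine setLIntegral_congr_fun measurableSet_Iic
                      (fun t ht => ?_)
                    exact lintegral_congr fun s => hkey t ht s
                _ ≤ ∫⁻ t, ∫⁻ s, g (t - s) * F' s := setLIntegral_le_lintegral _ _
                _ = ENNReal.ofReal a * ∫⁻ s, F' s := swap_eq F' hF'm
                _ = ENNReal.ofReal a * ∫⁻ t in Iic (n : ℝ), F t := by
                    rw [hF'def, lintegral_indicator measurableSet_Iic]
    exact ennreal_solve ha0.le ha1 (hfin n) step
  have hsup : (∫⁻ t, F t) = ⨆ n : ℕ, ∫⁻ t in Iic (n : ℝ), F t := by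
    have hfun : ∀ x : ℝ, (⨆ n : ℕ, (Iic ((n : ℕ) : ℝ)).indicator F x) = F x := by
      intro x
      refine le_antisymm (iSup_le fun n => indicator_le_self _ _ x) ?_
      refine le_iSup_of_le ⌈x⌉₊ ?_
      rw [indicator_of_mem (by simpa using Nat.le_ceil x)]
    calc (∫⁻ t, F t) = ∫⁻ x, ⨆ n : ℕ, (Iic ((n : ℕ) : ℝ)).indicator F x :=
          lintegral_congr fun x => (hfun x).symm
      _ = ⨆ n : ℕ, ∫⁻ x, (Iic ((n : ℕ) : ℝ)).indicator F x := by
          refine lintegral_iSup (fun n => hFm.indicator measurableSet_Iic) ?_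
          intro n m hnm
          exact indicator_le_indicator_of_subset (Iic_subset_Iic.2 (by exact_mod_cast hnm))
            (fun x => zero_le)
      _ = ⨆ n : ℕ, ∫⁻ t in Iic ((n : ℕ) : ℝ), F t := by
          simp_rw [lintegral_indicator measurableSet_Iic]
  have hL : (∫⁻ t, F t) ≤ ENNReal.ofReal (a / (1 - a)) := by
    rw [hsup]; exact iSup_le hXn
  have hLfin : (∫⁻ t, F t) ≠ ⊤ := (lt_of_le_of_lt hL ENNReal.ofReal_lt_top).ne
  have hΨint : Integrable Ψ := by
    refine ⟨hΨm.aestronglyMeasurable, ?_⟩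
    rw [hasFiniteIntegral_iff_ofReal (Filter.Eventually.of_forall hΨnn)]
    exact lt_of_le_of_lt hL ENNReal.ofReal_lt_top
  have htone : (∫⁻ t, ∫⁻ s, g (t - s) * F s) = ENNReal.ofReal a * ∫⁻ t, F t := swap_eq F hFm
  have hKm : Measurable fun t => ∫⁻ s, g (t - s) * F s :=
    Measurable.lintegral_prod_right
      ((hgm.comp (measurable_fst.sub measurable_snd)).mul (hFm.comp measurable_snd))
  have hKfin : ∀ᵐ t : ℝ, (∫⁻ s, g (t - s) * F s) < ⊤ := by
    refine ae_lt_top hKm ?_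
    rw [htone]
    exact ENNReal.mul_ne_top ENNReal.ofReal_ne_top hLfin
  have haeint : ∀ᵐ t : ℝ, Integrable (fun s => a * φ (t - s) * Ψ s) := by
    filter_upwards [hKfin] with t ht
    refine ⟨(((hφm.comp (measurable_const.sub measurable_id)).const_mul a).mul
      hΨm).aestronglyMeasurable, ?_⟩
    rw [hasFiniteIntegral_iff_ofReal (Filter.Eventually.of_forall fun s =>
      mul_nonneg (mul_nonneg ha0.le (hφnn _)) (hΨnn s))]
    have hcong : (∫⁻ s, ENNReal.ofReal (a * φ (t - s) * Ψ s)) = ∫⁻ s, g (t - s) * F s :=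
      lintegral_congr fun s => by rw [ENNReal.ofReal_mul (mul_nonneg ha0.le (hφnn _))]
    rwa [hcong]
  have heq : ∀ᵐ t : ℝ, F t = g t + ∫⁻ s, g (t - s) * F s := by
    filter_upwards [hae, haeint] with t ht hti
    have hC : 0 ≤ ∫ s, a * φ (t - s) * Ψ s :=
      integral_nonneg fun s => mul_nonneg (mul_nonneg ha0.le (hφnn _)) (hΨnn s)
    rw [hFdef]
    simp only [ht]
    rw [ENNReal.ofReal_add (mul_nonneg ha0.le (hφnn t)) hC,
      ofReal_integral_eq_lintegral_ofReal hti (Filter.Eventually.of_forall fun s =>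
        mul_nonneg (mul_nonneg ha0.le (hφnn _)) (hΨnn s))]
    congr 1
    exact lintegral_congr fun s => by rw [ENNReal.ofReal_mul (mul_nonneg ha0.le (hφnn _))]
  have hLeq : (∫⁻ t, F t) = ENNReal.ofReal a + ENNReal.ofReal a * ∫⁻ t, F t := by
    conv_lhs => rw [lintegral_congr_ae heq]
    rw [lintegral_add_left hgm, hga, htone]
  have hIeq : (∫ t, Ψ t) = (∫⁻ t, F t).toReal :=
    integral_eq_lintegral_of_nonneg_ae (Filter.Eventually.of_forall hΨnn)
      hΨm.aestronglyMeasurable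
  have hxeq : (∫⁻ t, F t).toReal = a + a * (∫⁻ t, F t).toReal := by
    conv_lhs => rw [hLeq]
    rw [ENNReal.toReal_add ENNReal.ofReal_ne_top
      (ENNReal.mul_ne_top ENNReal.ofReal_ne_top hLfin), ENNReal.toReal_mul,
      ENNReal.toReal_ofReal ha0.le]
  refine ⟨hΨint, ?_⟩
  rw [hIeq, eq_div_iff (by linarith : (1 : ℝ) - a ≠ 0)]
  linear_combination hxeq

private lemma phi_bounded {φ : ℝ → ℝ} (hdiff : Differentiable ℝ φ)
    (hd : Integrable (deriv φ)) : ∃ M : ℝ, 0 ≤ M ∧ ∀ t, |φ t| ≤ M := by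
  have habs : (0:ℝ) ≤ ∫ s, |deriv φ s| := integral_nonneg fun s => abs_nonneg _
  refine ⟨|φ 0| + ∫ s, |deriv φ s|, by positivity, fun t => ?_⟩
  have hii : IntervalIntegrable (deriv φ) volume 0 t := hd.intervalIntegrable
  have hftc : (∫ s in (0:ℝ)..t, deriv φ s) = φ t - φ 0 :=
    intervalIntegral.integral_deriv_eq_sub (fun x _ => hdiff x) hii
  have h1 : ‖∫ s in (0:ℝ)..t, deriv φ s‖ ≤ ∫ s in Set.uIoc (0:ℝ) t, ‖deriv φ s‖ :=
    intervalIntegral.norm_integral_le_integral_norm_uIoc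
  have h2 : (∫ s in Set.uIoc (0:ℝ) t, ‖deriv φ s‖) ≤ ∫ s, ‖deriv φ s‖ :=
    setIntegral_le_integral hd.norm (Filter.Eventually.of_forall fun s => norm_nonneg _)
  have h3 : |φ t - φ 0| ≤ ∫ s, |deriv φ s| := by
    rw [← hftc]
    simpa [Real.norm_eq_abs] using le_trans h1 h2
  calc |φ t| = |φ 0 + (φ t - φ 0)| := by ring_nf
    _ ≤ |φ 0| + |φ t - φ 0| := abs_add_le _ _
    _ ≤ |φ 0| + ∫ s, |deriv φ s| := by linarith

/-- For the nearly unstable kernel `a_T·φ` with `a_T = 1 - 1/T`, `T > 1`, the rescaled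
resolvent `Ψ^{(T)} : t ↦ Ψ(T t)` is in L²(ℝ), `∫ Ψ = a_T/(1 - a_T)` and `∫ Ψ^{(T)} = a_T`. -/
theorem rescaled_resolvent_L2_and_L1 (φ : ℝ → ℝ) (hφ : AssumptionA φ)
    (T : ℝ) (hT : 1 < T) (Ψ : ℝ → ℝ)
    (hΨ : IsResolvent (fun t => (1 - 1 / T) * φ t) Ψ) :
    MemLp (fun t => Ψ (T * t)) 2 volume ∧
    Integrable Ψ ∧ (∫ t, Ψ t) = (1 - 1 / T) / (1 - (1 - 1 / T)) ∧
    Integrable (fun t => Ψ (T * t)) ∧ (∫ t, Ψ (T * t)) = 1 - 1 / T := by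
  obtain ⟨hφm, hφnn, hφneg, hφint, hφ1, -, -, -, hdiff, -, hd⟩ := hφ
  obtain ⟨hΨm, hΨnn, hΨneg, hΨloc, hae⟩ := hΨ
  have haT : (0:ℝ) < T := lt_trans one_pos hT
  set a : ℝ := 1 - 1 / T with hadef
  have ha0 : 0 < a := by
    have : 1 / T < 1 := by rw [div_lt_one haT]; exact hT
    simp only [hadef]; linarith
  have ha1 : a < 1 := by
    have : 0 < 1 / T := by positivity
    simp only [hadef]; linarith
  have hae' : ∀ᵐ t : ℝ, Ψ t = a * φ t + ∫ s, a * φ (t - s) * Ψ s := hae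
  obtain ⟨hint, hval⟩ := resolvent_integral hφm hφnn hφneg hφint hφ1 ha0 ha1
    hΨm hΨnn hΨneg hΨloc hae'
  have hTint : Integrable (fun t => Ψ (T * t)) := hint.comp_mul_left' haT.ne'
  have hTval : (∫ t, Ψ (T * t)) = a := by
    rw [Measure.integral_comp_mul_left Ψ T, hval, smul_eq_mul,
      abs_of_pos (inv_pos.2 haT)]
    have hT0 : T ≠ 0 := haT.ne'
    simp only [hadef]
    field_simp
    ring
  -- boundedness of Ψ, then L²
  obtain ⟨M, hM0, hMb⟩ := phi_bounded hdiff hd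
  have hφle : ∀ t, φ t ≤ M := fun t => (abs_le.1 (hMb t)).2
  have hΨI0 : (0:ℝ) ≤ ∫ t, Ψ t := integral_nonneg hΨnn
  set C : ℝ := a * M + a * M * ∫ t, Ψ t with hCdef
  have hC0 : 0 ≤ C := by positivity
  have hconv : ∀ t : ℝ, (∫ s, a * φ (t - s) * Ψ s) ≤ a * M * ∫ s, Ψ s := by
    intro t
    have hbnd : ∀ s, a * φ (t - s) * Ψ s ≤ a * M * Ψ s := fun s =>
      mul_le_mul_of_nonneg_right (mul_le_mul_of_nonneg_left (hφle _) ha0.le) (hΨnn s)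
    have hInt : Integrable (fun s => a * φ (t - s) * Ψ s) := by
      refine Integrable.mono' (hint.const_mul (a * M))
        ((((hφm.comp (measurable_const.sub measurable_id)).const_mul a).mul
          hΨm).aestronglyMeasurable) (Filter.Eventually.of_forall fun s => ?_)
      rw [Real.norm_eq_abs, abs_of_nonneg
        (mul_nonneg (mul_nonneg ha0.le (hφnn _)) (hΨnn s))]
      exact hbnd s
    calc (∫ s, a * φ (t - s) * Ψ s) ≤ ∫ s, a * M * Ψ s :=
          integral_mono hInt (hint.const_mul _) hbnd
      _ = a * M * ∫ s, Ψ s := integral_const_mul _ _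
  have hΨle : ∀ᵐ t : ℝ, Ψ t ≤ C := by
    filter_upwards [hae'] with t ht
    rw [ht, hCdef]
    have h1 : a * φ t ≤ a * M := mul_le_mul_of_nonneg_left (hφle t) ha0.le
    have h2 := hconv t
    linarith
  have hae2 : ∀ᵐ t : ℝ, Ψ (T * t) ≤ C := by
    rw [ae_iff] at hΨle ⊢
    have hpre : {t : ℝ | ¬ Ψ (T * t) ≤ C} = (fun t => T * t) ⁻¹' {x | ¬ Ψ x ≤ C} := rfl
    rw [hpre, Real.volume_preimage_mul_left haT.ne' _, hΨle, mul_zero]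
  have hsq : Integrable (fun t => Ψ (T * t) ^ 2) := by
    refine Integrable.mono' (hTint.const_mul C)
      ((hΨm.comp (measurable_const_mul T)).pow_const 2).aestronglyMeasurable ?_
    filter_upwards [hae2] with t ht
    rw [Real.norm_eq_abs, abs_of_nonneg (sq_nonneg _)]
    calc Ψ (T * t) ^ 2 = Ψ (T * t) * Ψ (T * t) := sq (Ψ (T * t))
      _ ≤ C * Ψ (T * t) := mul_le_mul_of_nonneg_right ht (hΨnn _)
  refine ⟨(memLp_two_iff_integrable_sq
    ((hΨm.comp (measurable_const_mul T)).aestronglyMeasurable)).2 hsq, hint, hval, hTint, hTval⟩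
end

section
/- Under Assumption (A), define for T ≥ 2 and z ∈ ℝ the complex numbers G_T(z) := ∫₀^∞ e^{i z t}·(1 − 1/T)·φ(T·t) dt and ε^T(z) := (i·z·m − 1 + T·(1 − T·G_T(z))) / (T·(1 − T·G_T(z))·(i·z·m − 1)). Then there exists α > 0 such that for every T ≥ 2 and every z ∈ ℝ with |z| ≤ α·T, the denominator T·(1 − T·G_T(z))·(i·z·m − 1) is nonzero and |ε^T(z)| ≤ 4/(T·√(z²·m² + 1)) + 4·|z|·m₂/(T·m·√(z²·m² + 1)). -/
open MeasureTheory Real Set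

/-- `G_T(z) = ∫₀^∞ e^{izt}·(1 - 1/T)·φ(Tt) dt`, the Fourier transform of the rescaled
subcritical kernel `φ^{(T),-}`. -/
noncomputable def GT (φ : ℝ → ℝ) (T z : ℝ) : ℂ :=
  ∫ t in Set.Ioi (0 : ℝ), Complex.exp (Complex.I * z * t) * ((1 - 1 / T) * φ (T * t))


namespace EpsTAux

open intervalIntegral

noncomputable def phiFT (φ : ℝ → ℝ) (u : ℝ) : ℂ :=
  ∫ s in Set.Ioi (0 : ℝ), Complex.exp (Complex.I * u * s) * (φ s : ℂ)

lemma exp_I_sub_one_le (x : ℝ) : ‖Complex.exp (Complex.I * x) - 1‖ ≤ |x| := by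
  have h : ∫ t in (0:ℝ)..x, Complex.exp (Complex.I * t) =
      (Complex.exp (Complex.I * x) - Complex.exp (Complex.I * 0)) / Complex.I :=
    integral_exp_mul_complex Complex.I_ne_zero
  have h2 : Complex.exp (Complex.I * x) - 1 =
      Complex.I * ∫ t in (0:ℝ)..x, Complex.exp (Complex.I * t) := by
    rw [h]; rw [mul_zero, Complex.exp_zero, mul_div_cancel₀ _ Complex.I_ne_zero]
  rw [h2]
  rw [norm_mul, Complex.norm_I, one_mul]
  have := intervalIntegral.norm_integral_le_of_norm_le_const
    (C := 1) (f := fun t : ℝ => Complex.exp (Complex.I * t)) (a := (0:ℝ)) (b := x) ?_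
  · simpa using this
  · intro t ht
    simp [Complex.norm_exp]

lemma exp_I_taylor2_nonneg {x : ℝ} (hx : 0 ≤ x) :
    ‖Complex.exp (Complex.I * x) - 1 - Complex.I * x‖ ≤ x ^ 2 / 2 := by
  have h : ∫ t in (0:ℝ)..x, Complex.exp (Complex.I * t) =
      (Complex.exp (Complex.I * x) - Complex.exp (Complex.I * 0)) / Complex.I :=
    integral_exp_mul_complex Complex.I_ne_zero
  have hi : IntervalIntegrable (fun t : ℝ => Complex.exp (Complex.I * t) - 1) volume 0 x :=
    (Continuous.intervalIntegrable (by continuity) _ _)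
  have h2 : Complex.exp (Complex.I * x) - 1 - Complex.I * x =
      Complex.I * ∫ t in (0:ℝ)..x, (Complex.exp (Complex.I * t) - 1) := by
    rw [intervalIntegral.integral_sub (Continuous.intervalIntegrable (by continuity) _ _)
      (intervalIntegrable_const), h]
    rw [mul_zero, Complex.exp_zero]
    simp only [intervalIntegral.integral_const, sub_zero, Complex.real_smul, mul_one]
    rw [mul_sub, mul_div_cancel₀ _ Complex.I_ne_zero]
  rw [h2, norm_mul, Complex.norm_I, one_mul]
  have hb : ∀ᵐ (t : ℝ) ∂(volume.restrict (Set.uIoc (0:ℝ) x)),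
      ‖Complex.exp (Complex.I * t) - 1‖ ≤ t := by
    filter_upwards [ae_restrict_mem measurableSet_uIoc] with t ht
    rw [Set.uIoc_of_le hx] at ht
    calc ‖Complex.exp (Complex.I * t) - 1‖ ≤ |t| := exp_I_sub_one_le t
    _ = t := abs_of_pos ht.1
  have := intervalIntegral.norm_integral_le_abs_of_norm_le hb
    (intervalIntegral.intervalIntegrable_id)
  rw [integral_id] at this
  calc ‖∫ t in (0:ℝ)..x, (Complex.exp (Complex.I * t) - 1)‖ ≤
      |(x ^ 2 - 0 ^ 2) / 2| := this
  _ = x ^ 2 / 2 := by rw [abs_of_nonneg (by nlinarith)]; ring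

lemma exp_I_taylor2 (x : ℝ) :
    ‖Complex.exp (Complex.I * x) - 1 - Complex.I * x‖ ≤ x ^ 2 / 2 := by
  rcases le_or_gt 0 x with hx | hx
  · exact exp_I_taylor2_nonneg hx
  · have hy : (0:ℝ) ≤ -x := by linarith
    have := exp_I_taylor2_nonneg hy
    have hc : Complex.exp (Complex.I * (-x:ℝ)) - 1 - Complex.I * (-x:ℝ) =
        (starRingEnd ℂ) (Complex.exp (Complex.I * x) - 1 - Complex.I * x) := by
      rw [map_sub, map_sub, ← Complex.exp_conj]
      push_cast
      simp [Complex.conj_I, mul_comm]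
    rw [hc, Complex.norm_conj] at this
    calc ‖Complex.exp (Complex.I * x) - 1 - Complex.I * x‖ ≤ (-x) ^ 2 / 2 := this
    _ = x ^ 2 / 2 := by ring

variable {φ : ℝ → ℝ}

lemma int_Ioi_one (hneg : ∀ t < 0, φ t = 0) (hi : Integrable φ)
    (h1 : (∫ t, φ t) = 1) : (∫ t in Set.Ioi (0:ℝ), φ t) = 1 := by
  have hne : ∀ᵐ t : ℝ, t ≠ 0 := by
    rw [MeasureTheory.ae_iff]
    simp only [ne_eq, not_not, Set.setOf_eq_eq_singleton']
    exact Real.volume_singleton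
  have hz : ∀ᵐ t ∂(volume.restrict (Set.Iic (0:ℝ))), φ t = 0 := by
    filter_upwards [ae_restrict_mem measurableSet_Iic, ae_restrict_of_ae hne] with t ht hne'
    exact hneg t (lt_of_le_of_ne ht hne')
  have h0 : (∫ t in Set.Iic (0:ℝ), φ t) = 0 := by
    rw [MeasureTheory.integral_congr_ae hz, integral_zero]
  have := intervalIntegral.integral_Iic_add_Ioi (b := (0:ℝ)) hi.integrableOn hi.integrableOn
  rw [h0, zero_add] at this
  rw [this, h1]

lemma exp_mul_integrable' (hi : Integrable φ) (u : ℝ) :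
    IntegrableOn (fun s : ℝ => Complex.exp (Complex.I * u * s) * (φ s : ℂ)) (Set.Ioi (0:ℝ)) := by
  apply MeasureTheory.Integrable.bdd_mul (c := 1) (hi.integrableOn.ofReal)
  · exact (Complex.continuous_exp.comp (by continuity)).aestronglyMeasurable
  · exact Filter.Eventually.of_forall (fun s => by simp [Complex.norm_exp, Complex.mul_re])

lemma phiFT_sub_one (hpos : ∀ t, 0 ≤ φ t) (hi : Integrable φ)
    (h1 : (∫ t in Set.Ioi (0:ℝ), φ t) = 1)
    (hmom1 : IntegrableOn (fun t => t * φ t) (Set.Ioi 0)) (u : ℝ) :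
    ‖phiFT φ u - 1‖ ≤ |u| * ∫ t in Set.Ioi (0:ℝ), t * φ t := by
  have e1 : (∫ s in Set.Ioi (0:ℝ), (φ s : ℂ)) = 1 := by
    rw [show (∫ s in Set.Ioi (0:ℝ), (φ s : ℂ)) = ((∫ s in Set.Ioi (0:ℝ), φ s : ℝ) : ℂ) from
      integral_ofReal, h1, Complex.ofReal_one]
  have hsub : (∫ s in Set.Ioi (0:ℝ), (Complex.exp (Complex.I * u * s) - 1) * (φ s : ℂ)) =
      (∫ s in Set.Ioi (0:ℝ), Complex.exp (Complex.I * u * s) * (φ s : ℂ)) -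
      (∫ s in Set.Ioi (0:ℝ), (φ s : ℂ)) := by
    rw [show (fun s : ℝ => (Complex.exp (Complex.I * u * s) - 1) * (φ s : ℂ)) =
      (fun s : ℝ => Complex.exp (Complex.I * u * s) * (φ s : ℂ) - (φ s : ℂ)) from
      funext fun s => by ring]
    exact integral_sub (exp_mul_integrable' hi u) hi.integrableOn.ofReal
  have key : phiFT φ u - 1 =
      ∫ s in Set.Ioi (0:ℝ), (Complex.exp (Complex.I * u * s) - 1) * (φ s : ℂ) := by
    rw [phiFT, hsub, e1]
  rw [key]
  have hg : Integrable (fun s : ℝ => |u| * (s * φ s)) (volume.restrict (Set.Ioi 0)) :=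
    hmom1.const_mul _
  refine le_trans (MeasureTheory.norm_integral_le_of_norm_le hg ?_) ?_
  · filter_upwards [ae_restrict_mem measurableSet_Ioi] with s hs
    have hc : Complex.I * (u:ℂ) * (s:ℂ) = Complex.I * ((u * s : ℝ) : ℂ) := by push_cast; ring
    rw [norm_mul, hc]
    calc ‖Complex.exp (Complex.I * ((u*s:ℝ):ℂ)) - 1‖ * ‖(φ s : ℂ)‖
        ≤ |u * s| * ‖(φ s : ℂ)‖ :=
          mul_le_mul_of_nonneg_right (exp_I_sub_one_le (u*s)) (norm_nonneg _)
      _ = |u| * (s * φ s) := by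
          rw [Complex.norm_real, Real.norm_eq_abs, abs_mul, abs_of_pos (show (0:ℝ) < s from hs),
            abs_of_nonneg (hpos s)]; ring
  · rw [MeasureTheory.integral_const_mul]

lemma phiFT_taylor2 (hpos : ∀ t, 0 ≤ φ t) (hi : Integrable φ)
    (h1 : (∫ t in Set.Ioi (0:ℝ), φ t) = 1)
    (hmom1 : IntegrableOn (fun t => t * φ t) (Set.Ioi 0))
    (hmom2 : IntegrableOn (fun t => t ^ 2 * φ t) (Set.Ioi 0)) (u : ℝ) :
    ‖phiFT φ u - 1 - Complex.I * u * ((∫ t in Set.Ioi (0:ℝ), t * φ t : ℝ) : ℂ)‖ ≤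
      u ^ 2 / 2 * ∫ t in Set.Ioi (0:ℝ), t ^ 2 * φ t := by
  have e1 : (∫ s in Set.Ioi (0:ℝ), (φ s : ℂ)) = 1 := by
    rw [show (∫ s in Set.Ioi (0:ℝ), (φ s : ℂ)) = ((∫ s in Set.Ioi (0:ℝ), φ s : ℝ) : ℂ) from
      integral_ofReal, h1, Complex.ofReal_one]
  have e2 : Complex.I * u * ((∫ t in Set.Ioi (0:ℝ), t * φ t : ℝ) : ℂ) =
      ∫ s in Set.Ioi (0:ℝ), Complex.I * u * ((s * φ s : ℝ) : ℂ) := by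
    rw [MeasureTheory.integral_const_mul, show (∫ s in Set.Ioi (0:ℝ), ((s * φ s : ℝ) : ℂ)) =
      ((∫ s in Set.Ioi (0:ℝ), s * φ s : ℝ) : ℂ) from integral_ofReal]
  have hsub : (∫ s in Set.Ioi (0:ℝ),
        (Complex.exp (Complex.I * u * s) - 1 - Complex.I * u * s) * (φ s : ℂ)) =
      ((∫ s in Set.Ioi (0:ℝ), Complex.exp (Complex.I * u * s) * (φ s : ℂ)) -
      (∫ s in Set.Ioi (0:ℝ), (φ s : ℂ))) -
      (∫ s in Set.Ioi (0:ℝ), Complex.I * u * ((s * φ s : ℝ) : ℂ)) := by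
    rw [show (fun s : ℝ => (Complex.exp (Complex.I * u * s) - 1 - Complex.I * u * s) * (φ s : ℂ)) =
      (fun s : ℝ => (Complex.exp (Complex.I * u * s) * (φ s : ℂ) - (φ s : ℂ)) -
        Complex.I * u * ((s * φ s : ℝ) : ℂ)) from funext fun s => by push_cast; ring]
    have hint1 : Integrable (fun s : ℝ =>
        Complex.exp (Complex.I * u * s) * (φ s : ℂ) - (φ s : ℂ))
        (volume.restrict (Set.Ioi 0)) := (exp_mul_integrable' hi u).sub hi.integrableOn.ofReal
    have hint2 : Integrable (fun s : ℝ => Complex.I * u * ((s * φ s : ℝ) : ℂ))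
        (volume.restrict (Set.Ioi 0)) := (hmom1.ofReal).const_mul _
    rw [integral_sub (f := fun s : ℝ =>
        Complex.exp (Complex.I * u * s) * (φ s : ℂ) - (φ s : ℂ))
      (g := fun s : ℝ => Complex.I * u * ((s * φ s : ℝ) : ℂ)) hint1 hint2,
      integral_sub (f := fun s : ℝ => Complex.exp (Complex.I * u * s) * (φ s : ℂ))
        (g := fun s : ℝ => ((φ s : ℝ) : ℂ)) (exp_mul_integrable' hi u) hi.integrableOn.ofReal]
  have key : phiFT φ u - 1 - Complex.I * u * ((∫ t in Set.Ioi (0:ℝ), t * φ t : ℝ) : ℂ) =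
      ∫ s in Set.Ioi (0:ℝ),
        (Complex.exp (Complex.I * u * s) - 1 - Complex.I * u * s) * (φ s : ℂ) := by
    rw [phiFT, e2, hsub, e1]
  rw [key]
  have hg : Integrable (fun s : ℝ => u ^ 2 / 2 * (s ^ 2 * φ s)) (volume.restrict (Set.Ioi 0)) :=
    hmom2.const_mul _
  refine le_trans (MeasureTheory.norm_integral_le_of_norm_le hg ?_) ?_
  · filter_upwards [ae_restrict_mem measurableSet_Ioi] with s hs
    have hc : Complex.I * (u:ℂ) * (s:ℂ) = Complex.I * ((u * s : ℝ) : ℂ) := by push_cast; ring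
    rw [norm_mul, hc]
    calc ‖Complex.exp (Complex.I * ((u*s:ℝ):ℂ)) - 1 - Complex.I * ((u*s:ℝ):ℂ)‖ * ‖(φ s : ℂ)‖
        ≤ (u * s) ^ 2 / 2 * ‖(φ s : ℂ)‖ :=
          mul_le_mul_of_nonneg_right (exp_I_taylor2 (u*s)) (norm_nonneg _)
      _ = u ^ 2 / 2 * (s ^ 2 * φ s) := by
          rw [Complex.norm_real, Real.norm_eq_abs, abs_of_nonneg (hpos s)]; ring
  · rw [MeasureTheory.integral_const_mul]

lemma GT_chvar {T : ℝ} (hT : 0 < T) (z : ℝ) :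
    (T : ℂ) * GT φ T z = ((1 - 1 / T : ℝ) : ℂ) * phiFT φ (z / T) := by
  have hTne : (T : ℂ) ≠ 0 := by exact_mod_cast hT.ne'
  set u := z / T with hu
  set g : ℝ → ℂ := fun s => Complex.exp (Complex.I * (u:ℂ) * (s:ℂ)) * ((φ s : ℝ) : ℂ) with hgdef
  have hfun : ∀ t : ℝ, Complex.exp (Complex.I * z * t) * ((1 - 1/(T:ℂ)) * ((φ (T*t) : ℝ) : ℂ))
      = ((1 - 1/T : ℝ) : ℂ) * g (T * t) := by
    intro t
    have hz : u * (T*t) = z*t := by rw [hu]; field_simp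
    have harg : Complex.I * (u:ℂ) * ((T*t : ℝ):ℂ) = Complex.I * (z:ℂ) * (t:ℂ) := by
      rw [mul_assoc, ← Complex.ofReal_mul, hz, Complex.ofReal_mul, ← mul_assoc]
    simp only [hgdef]
    rw [harg]
    push_cast; ring
  have e : GT φ T z = ((1 - 1/T : ℝ) : ℂ) * ∫ t in Set.Ioi (0:ℝ), g (T * t) := by
    rw [GT, ← MeasureTheory.integral_const_mul]
    congr 1; funext t; exact hfun t
  have e2 : (∫ t in Set.Ioi (0:ℝ), g (T * t)) = T⁻¹ • ∫ s in Set.Ioi (0:ℝ), g s := by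
    have := MeasureTheory.integral_comp_mul_left_Ioi g 0 hT
    rwa [mul_zero] at this
  have e3 : phiFT φ u = ∫ s in Set.Ioi (0:ℝ), g s := rfl
  rw [e, e2, ← e3, Complex.real_smul]
  push_cast
  field_simp

end EpsTAux

open EpsTAux

set_option maxHeartbeats 1000000 in
/-- Bound on `ε^T(z) = FΨ^{(T),-}(z) - Fρ⁻(z) + 1/T`: there is `α > 0` such that for all
`T ≥ 2` and `|z| ≤ αT` the relevant denominator is nonzero and the explicit bound holds. -/
theorem eps_T_bound (φ : ℝ → ℝ) (hφ : AssumptionA φ) :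
    ∃ α > 0, ∀ T : ℝ, 2 ≤ T → ∀ z : ℝ, |z| ≤ α * T →
      (T : ℂ) * (1 - T * GT φ T z) * (Complex.I * z * mom1 φ - 1) ≠ 0 ∧
      ‖(Complex.I * z * mom1 φ - 1 + T * (1 - T * GT φ T z)) /
          ((T : ℂ) * (1 - T * GT φ T z) * (Complex.I * z * mom1 φ - 1))‖ ≤
        4 / (T * Real.sqrt (z ^ 2 * mom1 φ ^ 2 + 1)) +
          4 * |z| * mom2 φ / (T * mom1 φ * Real.sqrt (z ^ 2 * mom1 φ ^ 2 + 1)) := by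
  obtain ⟨hmeas, hpos, hneg, hi, hint1, hmom1, hmom2, hmpos, -, -, -⟩ := hφ
  set m : ℝ := mom1 φ with hmdef
  set m2 : ℝ := mom2 φ with hm2def
  have hm : 0 < m := hmpos
  have hm2 : 0 ≤ m2 := by
    apply setIntegral_nonneg measurableSet_Ioi
    intro t ht
    exact mul_nonneg (sq_nonneg t) (hpos t)
  have hIoi1 : (∫ t in Set.Ioi (0:ℝ), φ t) = 1 := int_Ioi_one hneg hi hint1
  set α : ℝ := min (1/(4*m)) (m/(2*m2+1)) with hαdef
  have hα : 0 < α := by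
    apply lt_min
    · positivity
    · positivity
  refine ⟨α, hα, ?_⟩
  intro T hT z hz
  have hT0 : (0:ℝ) < T := by linarith
  have hTne : (T:ℂ) ≠ 0 := by exact_mod_cast hT0.ne'
  set u : ℝ := z / T with hu
  set Φ : ℂ := phiFT φ u with hΦ
  set S : ℝ := Real.sqrt (z ^ 2 * m ^ 2 + 1) with hS
  have hS1 : 1 ≤ S := by
    have h := Real.sqrt_le_sqrt (show (1:ℝ) ≤ z ^ 2 * m ^ 2 + 1 by nlinarith [mul_nonneg (sq_nonneg z) (sq_nonneg m)])
    rwa [Real.sqrt_one] at h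
  have hS0 : 0 < S := lt_of_lt_of_le one_pos hS1
  have hS2 : S ^ 2 = z ^ 2 * m ^ 2 + 1 := by
    rw [hS, Real.sq_sqrt]; positivity
  have hSz : |z| * m ≤ S := by
    have e : Real.sqrt (z^2 * m^2) = |z| * m := by
      rw [show z^2*m^2 = (|z| * m)^2 by rw [← sq_abs z]; ring]
      exact Real.sqrt_sq (by positivity)
    rw [hS, ← e]
    exact Real.sqrt_le_sqrt (by linarith)
  -- bounds from α
  have ham : α * m ≤ 1/4 := by
    have h1 : α ≤ 1/(4*m) := min_le_left _ _
    calc α * m ≤ 1/(4*m) * m := mul_le_mul_of_nonneg_right h1 hm.le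
      _ = 1/4 := by field_simp
  have ham2 : α * m2 ≤ m / 2 := by
    have h1 : α ≤ m/(2*m2+1) := min_le_right _ _
    have h2 : α * (2*m2+1) ≤ m := by
      rw [← le_div_iff₀ (by positivity)]; exact h1
    nlinarith [hα.le]
  -- abs of I z m - 1
  have habs : ‖Complex.I * z * m - 1‖ = S := by
    rw [hS, Complex.norm_def]
    congr 1
    simp [Complex.normSq_apply, Complex.mul_re, Complex.mul_im]
    ring
  have habs' : ‖1 - Complex.I * z * m‖ = S := by
    rw [← habs, ← norm_neg]; congr 1; ring
  -- key identity
  have hTG : (T:ℂ) * GT φ T z = ((1 - 1/T : ℝ):ℂ) * Φ := GT_chvar hT0 z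
  set Num : ℂ := (Φ - 1) - T * (Φ - 1 - Complex.I * u * (m:ℂ)) with hNum
  have hTu : (T:ℂ) * (u:ℂ) = (z:ℂ) := by
    rw [hu]; push_cast; field_simp
  have hAeq : (T:ℂ) * (1 - T * GT φ T z) = (1 - Complex.I * z * m) + Num := by
    have e : (T:ℂ) * (1 - T * GT φ T z) = T - T * ((T:ℂ) * GT φ T z) := by ring
    rw [e, hTG, hNum]
    have : Complex.I * (z:ℂ) * (m:ℂ) = Complex.I * ((T:ℂ) * (u:ℂ)) * (m:ℂ) := by rw [hTu]
    rw [this]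
    push_cast
    field_simp
    ring
  -- bound on Num
  have hNumB : ‖Num‖ ≤ |z| * m / T + z^2 * m2 / (2*T) := by
    rw [hNum]
    calc ‖(Φ - 1) - T * (Φ - 1 - Complex.I * u * (m:ℂ))‖
        ≤ ‖Φ - 1‖ + ‖(T:ℂ) * (Φ - 1 - Complex.I * u * (m:ℂ))‖ := by
          apply norm_sub_le
      _ ≤ |u| * m + T * (u^2/2 * m2) := by
          apply add_le_add
          · exact phiFT_sub_one hpos hi hIoi1 hmom1 u
          · rw [norm_mul, Complex.norm_real, Real.norm_eq_abs, abs_of_pos hT0]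
            exact mul_le_mul_of_nonneg_left (phiFT_taylor2 hpos hi hIoi1 hmom1 hmom2 u) hT0.le
      _ = |z| * m / T + z^2 * m2 / (2*T) := by
          rw [hu, abs_div, abs_of_pos hT0]
          field_simp
  have hzB : |z| ≤ α * T := hz
  have hNumS : ‖Num‖ ≤ S / 2 := by
    refine hNumB.trans ?_
    have h1 : |z| * m / T ≤ S / 4 := by
      rw [div_le_div_iff₀ hT0 (by norm_num : (0:ℝ) < 4)]
      nlinarith [mul_le_mul_of_nonneg_right hzB hm.le,
        mul_le_mul_of_nonneg_right ham hT0.le,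
        mul_nonneg hT0.le (by linarith : (0:ℝ) ≤ S - 1)]
    have hzz : z^2 * m2 ≤ T * (|z| * m / 2) := by
      calc z^2*m2 = |z| * (|z| * m2) := by rw [← sq_abs z]; ring
        _ ≤ α*T * (|z| * m2) := mul_le_mul_of_nonneg_right hzB (mul_nonneg (abs_nonneg z) hm2)
        _ = (T * |z|) * (α * m2) := by ring
        _ ≤ (T * |z|) * (m/2) :=
            mul_le_mul_of_nonneg_left ham2 (mul_nonneg hT0.le (abs_nonneg z))
        _ = T * (|z| * m / 2) := by ring
    have h2 : z^2 * m2 / (2*T) ≤ S / 4 := by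
      rw [div_le_div_iff₀ (by positivity) (by norm_num : (0:ℝ) < 4)]
      nlinarith [hzz, hT0, hSz]
    linarith
  -- lower bound on abs A
  set A : ℂ := (T:ℂ) * (1 - T * GT φ T z) with hA
  have hAlow : S / 2 ≤ ‖A‖ := by
    have htri : ‖1 - Complex.I * z * m‖ ≤
        ‖(1 - Complex.I * z * m) + Num‖ + ‖Num‖ := by
      have h := norm_sub_le ((1 - Complex.I * z * (m:ℂ)) + Num) Num
      rwa [add_sub_cancel_right] at h
    have e : ‖(1 - Complex.I * z * m) + Num‖ = ‖A‖ := by rw [hAeq]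
    rw [e, habs'] at htri
    linarith
  have hAne : A ≠ 0 := by
    intro h
    rw [h, norm_zero] at hAlow
    linarith
  have hDne2 : Complex.I * z * (m:ℂ) - 1 ≠ 0 := by
    intro h
    rw [h, norm_zero] at habs
    linarith
  constructor
  · exact mul_ne_zero hAne hDne2
  · have hNumEq : Complex.I * z * (m:ℂ) - 1 + A = Num := by
      rw [hAeq]; ring
    rw [hNumEq, norm_div, norm_mul, habs]
    have hB : ‖Num‖ / (‖A‖ * S) ≤
        (|z| * m / T + z^2 * m2 / (2*T)) / (S/2 * S) := by
      apply div_le_div₀ (by positivity) hNumB (by positivity)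
      exact mul_le_mul_of_nonneg_right hAlow hS0.le
    refine hB.trans ?_
    have e : (|z| * m / T + z^2 * m2 / (2*T)) / (S/2 * S) =
        2 * |z| * m / (T * S^2) + z^2 * m2 / (T * S^2) := by
      field_simp
    rw [e]
    have t1 : 2 * |z| * m / (T * S^2) ≤ 4 / (T * S) := by
      rw [div_le_div_iff₀ (by positivity) (by positivity)]
      nlinarith [mul_le_mul_of_nonneg_right hSz (mul_pos hT0 hS0).le,
        mul_nonneg (mul_nonneg hT0.le hS0.le) hS0.le]
    have t2 : z^2 * m2 / (T * S^2) ≤ 4 * |z| * m2 / (T * m * S) := by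
      rw [div_le_div_iff₀ (by positivity) (by positivity), ← sq_abs z]
      nlinarith [mul_nonneg (mul_nonneg (mul_nonneg (abs_nonneg z) hm2) hT0.le) (sq_nonneg S),
        mul_le_mul_of_nonneg_right hSz
          (mul_nonneg (mul_nonneg (mul_nonneg (abs_nonneg z) hm2) hT0.le) hS0.le)]
    exact add_le_add t1 t2
end

section
/- Under Assumption (A), let T > 1, a_T := 1 + 1/T, let b_T > 0 satisfy ∫₀^∞ e^{−b_T·s} φ(s) ds = a_T^{−2}, set φ̃(t) := e^{−b_T·t}·a_T·φ(t), let Ψ̃ be a resolvent of φ̃ (i.e. Ψ̃ ≥ 0, Ψ̃(t) = 0 for t < 0, Ψ̃ locally integrable, Ψ̃ = φ̃ + φ̃*Ψ̃ a.e.), and set Ψ̃^{(T)}(t) := Ψ̃(T·t) and φ̃^{(T)}(t) := φ̃(T·t). Then Ψ̃^{(T)} ∈ L¹(ℝ) ∩ L²(ℝ), and for every z ∈ ℝ one has 1 − T·(F φ̃^{(T)})(z) ≠ 0 and (F Ψ̃^{(T)})(z) = (F φ̃^{(T)})(z) / (1 − T·(F φ̃^{(T)})(z)). -/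
open MeasureTheory Real Set
open scoped ENNReal NNReal Convolution

/-- Fourier transform `(F f)(z) = ∫_ℝ e^{izt} f(t) dt`. -/
noncomputable def FT (f : ℝ → ℝ) (z : ℝ) : ℂ :=
  ∫ t : ℝ, Complex.exp (Complex.I * z * t) * f t

lemma ft_integrand_integrable {f : ℝ → ℝ} (hf : Integrable f) (z : ℝ) :
    Integrable (fun t : ℝ => Complex.exp (Complex.I * z * t) * (f t : ℂ)) := by
  refine (hf.ofReal (𝕜 := ℂ)).bdd_mul (c := 1) ?_ (Filter.Eventually.of_forall fun t => ?_)
  · exact (Complex.continuous_exp.comp (by continuity)).aestronglyMeasurable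
  · rw [Complex.norm_exp]
    simp [mul_comm]

lemma ft_norm_le {f : ℝ → ℝ} (hnn : ∀ t, 0 ≤ f t) (z : ℝ) :
    ‖FT f z‖ ≤ ∫ t, f t := by
  have h := norm_integral_le_integral_norm (μ := volume)
    (fun t : ℝ => Complex.exp (Complex.I * z * t) * (f t : ℂ))
  refine h.trans (le_of_eq ?_)
  refine integral_congr_ae (Filter.Eventually.of_forall fun t => ?_)
  simp only [norm_mul, Complex.norm_exp]
  simp [abs_of_nonneg (hnn t), mul_comm]

lemma ft_scale {f : ℝ → ℝ} {T : ℝ} (hT : 0 < T) (z : ℝ) :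
    FT (fun t => f (T * t)) z = (T : ℂ)⁻¹ * FT f (z / T) := by
  have hT' : (T : ℂ) ≠ 0 := by exact_mod_cast hT.ne'
  have key : ∀ t : ℝ, Complex.exp (Complex.I * z * t) * (f (T * t) : ℂ)
      = (fun u : ℝ => Complex.exp (Complex.I * (z / T) * u) * (f u : ℂ)) (T * t) := by
    intro t
    simp only
    congr 2
    push_cast
    field_simp
  unfold FT
  simp_rw [key]
  rw [Measure.integral_comp_mul_left
    (fun u : ℝ => Complex.exp (Complex.I * (z / T) * u) * (f u : ℂ)) T]
  rw [abs_of_pos (inv_pos.mpr hT)]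
  push_cast
  simp

lemma ft_conv {f g : ℝ → ℝ} (hf : Integrable f) (hg : Integrable g) (z : ℝ) :
    FT (fun t => ∫ s, f (t - s) * g s) z = FT f z * FT g z := by
  set F : ℝ → ℂ := fun u => Complex.exp (Complex.I * z * u) * (f u : ℂ) with hF
  set G : ℝ → ℂ := fun u => Complex.exp (Complex.I * z * u) * (g u : ℂ) with hG
  have hFi : Integrable F := ft_integrand_integrable hf z
  have hGi : Integrable G := ft_integrand_integrable hg z
  have key : ∀ t : ℝ, Complex.exp (Complex.I * z * t) * ((∫ s, f (t - s) * g s : ℝ) : ℂ)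
      = (G ⋆[ContinuousLinearMap.mul ℂ ℂ] F) t := by
    intro t
    rw [convolution_def]
    have cast1 : ((∫ s, f (t - s) * g s : ℝ) : ℂ) = ∫ s, ((f (t - s) * g s : ℝ) : ℂ) :=
      (integral_ofReal (𝕜 := ℂ)).symm
    rw [cast1, ← integral_const_mul]
    refine integral_congr_ae (Filter.Eventually.of_forall fun s => ?_)
    simp only [ContinuousLinearMap.mul_apply', hF, hG]
    push_cast
    rw [show Complex.I * z * t = Complex.I * z * s + Complex.I * z * (t - s) by ring,
      Complex.exp_add]
    ring
  unfold FT
  simp_rw [key]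
  rw [integral_convolution (ContinuousLinearMap.mul ℂ ℂ) hGi hFi]
  simp only [ContinuousLinearMap.mul_apply']
  exact mul_comm _ _

lemma resolvent_L1 {g Ψ : ℝ → ℝ} (hgm : Measurable g) (hgnn : ∀ t, 0 ≤ g t)
    (hgz : ∀ t < 0, g t = 0) (hgi : Integrable g)
    (hρ1 : (∫ t, g t) < 1)
    (hΨm : Measurable Ψ) (hΨnn : ∀ t, 0 ≤ Ψ t) (hΨz : ∀ t < 0, Ψ t = 0)
    (hΨloc : MeasureTheory.LocallyIntegrable Ψ)
    (hae : ∀ᵐ t : ℝ, Ψ t = g t + ∫ s, g (t - s) * Ψ s) :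
    Integrable Ψ := by
  set ρ := ∫ t, g t with hρdef
  have hρ0 : 0 ≤ ρ := integral_nonneg hgnn
  set P : ℝ → ℝ≥0∞ := fun t => ENNReal.ofReal (Ψ t) with hPdef
  set Gg : ℝ → ℝ≥0∞ := fun t => ENNReal.ofReal (g t) with hGdef
  have hPm : Measurable P := hΨm.ennreal_ofReal
  have hGm : Measurable Gg := hgm.ennreal_ofReal
  have hGint : ∫⁻ t, Gg t = ENNReal.ofReal ρ :=
    (ofReal_integral_eq_lintegral_ofReal hgi (Filter.Eventually.of_forall hgnn)).symm
  have key : ∀ᵐ t : ℝ, P t ≤ Gg t + ∫⁻ s, Gg (t - s) * P s := by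
    filter_upwards [hae] with t ht
    have hc : 0 ≤ ∫ s, g (t - s) * Ψ s :=
      integral_nonneg fun s => mul_nonneg (hgnn _) (hΨnn _)
    have : P t = Gg t + ENNReal.ofReal (∫ s, g (t - s) * Ψ s) := by
      rw [hPdef]; simp only; rw [ht, ENNReal.ofReal_add (hgnn t) hc]
    rw [this]
    gcongr
    calc ENNReal.ofReal (∫ s, g (t - s) * Ψ s)
        ≤ ‖∫ s, g (t - s) * Ψ s‖ₑ := Real.ofReal_le_enorm _
      _ ≤ ∫⁻ s, ‖g (t - s) * Ψ s‖ₑ := enorm_integral_le_lintegral_enorm _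
      _ = ∫⁻ s, Gg (t - s) * P s := by
          refine lintegral_congr fun s => ?_
          rw [Real.enorm_eq_ofReal (mul_nonneg (hgnn _) (hΨnn _)),
            ENNReal.ofReal_mul (hgnn _)]
  set J : ℕ → ℝ≥0∞ := fun n => ∫⁻ t in Icc (0 : ℝ) n, P t with hJdef
  have hJfin : ∀ n : ℕ, J n ≠ ∞ := by
    intro n
    have hIn : IntegrableOn Ψ (Icc (0 : ℝ) n) :=
      hΨloc.integrableOn_isCompact isCompact_Icc
    have := (hasFiniteIntegral_iff_ofReal
      (Filter.Eventually.of_forall hΨnn : (0 : ℝ → ℝ) ≤ᵐ[volume.restrict (Icc (0:ℝ) n)] Ψ)).1 hIn.2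
    exact this.ne
  have hbound : ∀ n : ℕ, J n ≤ ENNReal.ofReal ρ + ENNReal.ofReal ρ * J n := by
    intro n
    have h1 : ∫⁻ t in Icc (0 : ℝ) n, Gg t ≤ ENNReal.ofReal ρ := by
      rw [← hGint]; exact setLIntegral_le_lintegral _ _
    have h2 : (∫⁻ t in Icc (0 : ℝ) n, ∫⁻ s, Gg (t - s) * P s) ≤ ENNReal.ofReal ρ * J n := by
      have hswap : (∫⁻ t in Icc (0 : ℝ) n, ∫⁻ s, Gg (t - s) * P s)
          = ∫⁻ s, ∫⁻ t in Icc (0 : ℝ) n, Gg (t - s) * P s := by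
        apply lintegral_lintegral_swap
        exact (((hgm.comp (measurable_fst.sub measurable_snd)).ennreal_ofReal).mul
          (hPm.comp measurable_snd)).aemeasurable
      rw [hswap]
      have hpt : ∀ s : ℝ, (∫⁻ t in Icc (0 : ℝ) n, Gg (t - s) * P s)
          ≤ (Icc (0 : ℝ) n).indicator (fun s => ENNReal.ofReal ρ * P s) s := by
        intro s
        have hconst : (∫⁻ t in Icc (0 : ℝ) n, Gg (t - s) * P s)
            = (∫⁻ t in Icc (0 : ℝ) n, Gg (t - s)) * P s :=
          lintegral_mul_const _ (hGm.comp (measurable_id.sub measurable_const))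
        by_cases hs : s ∈ Icc (0 : ℝ) n
        · rw [indicator_of_mem hs, hconst]
          have : (∫⁻ t in Icc (0 : ℝ) n, Gg (t - s)) ≤ ENNReal.ofReal ρ := by
            refine le_trans (setLIntegral_le_lintegral _ _) ?_
            rw [lintegral_sub_right_eq_self Gg s, hGint]
          exact mul_le_mul_left this _
        · rw [indicator_of_notMem hs]
          rw [mem_Icc, not_and_or] at hs
          rcases hs with hs | hs
          · have : P s = 0 := by
              rw [hPdef]; simp only
              rw [hΨz s (lt_of_not_ge hs), ENNReal.ofReal_zero]
            rw [hconst, this, mul_zero]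
          · have hz : ∀ t ∈ Icc (0 : ℝ) (n : ℝ), Gg (t - s) = (fun _ => (0:ℝ≥0∞)) t := by
              intro t ht
              rw [hGdef]; simp only
              rw [hgz (t - s) (by push_neg at hs; have := ht.2; linarith), ENNReal.ofReal_zero]
            have : (∫⁻ t in Icc (0 : ℝ) n, Gg (t - s)) = 0 := by
              rw [setLIntegral_congr_fun measurableSet_Icc
                hz, lintegral_zero]
            rw [hconst, this, zero_mul]
      calc (∫⁻ s, ∫⁻ t in Icc (0 : ℝ) n, Gg (t - s) * P s)
          ≤ ∫⁻ s, (Icc (0 : ℝ) n).indicator (fun s => ENNReal.ofReal ρ * P s) s :=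
            lintegral_mono hpt
        _ = ∫⁻ s in Icc (0 : ℝ) n, ENNReal.ofReal ρ * P s :=
            lintegral_indicator measurableSet_Icc _
        _ = ENNReal.ofReal ρ * J n := lintegral_const_mul _ hPm
    calc J n ≤ ∫⁻ t in Icc (0 : ℝ) n, (Gg t + ∫⁻ s, Gg (t - s) * P s) :=
          lintegral_mono_ae (ae_restrict_of_ae key)
      _ = (∫⁻ t in Icc (0 : ℝ) n, Gg t) + ∫⁻ t in Icc (0 : ℝ) n, ∫⁻ s, Gg (t - s) * P s :=
          lintegral_add_left hGm _
      _ ≤ ENNReal.ofReal ρ + ENNReal.ofReal ρ * J n := add_le_add h1 h2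
  have hJle : ∀ n : ℕ, J n ≤ ENNReal.ofReal (ρ / (1 - ρ)) := by
    intro n
    set x := (J n).toReal with hxdef
    have hx0 : 0 ≤ x := ENNReal.toReal_nonneg
    have hxeq : J n = ENNReal.ofReal x := (ENNReal.ofReal_toReal (hJfin n)).symm
    have hxle : x ≤ ρ + ρ * x := by
      have h := hbound n
      rw [hxeq, ← ENNReal.ofReal_mul hρ0, ← ENNReal.ofReal_add hρ0
        (mul_nonneg hρ0 hx0)] at h
      have := ENNReal.toReal_le_toReal (hxeq ▸ hJfin n) ENNReal.ofReal_ne_top |>.2 h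
      rwa [ENNReal.toReal_ofReal hx0, ENNReal.toReal_ofReal
        (by positivity : (0:ℝ) ≤ ρ + ρ * x)] at this
    have hxfin : x ≤ ρ / (1 - ρ) := by
      rw [le_div_iff₀ (by linarith : (0:ℝ) < 1 - ρ)]
      nlinarith
    rw [hxeq]
    exact ENNReal.ofReal_le_ofReal hxfin
  have hglobal : (∫⁻ t, P t) ≤ ENNReal.ofReal (ρ / (1 - ρ)) := by
    have hPeq : ∀ t, P t = ⨆ n : ℕ, (Icc (0 : ℝ) n).indicator P t := by
      intro t
      by_cases ht : 0 ≤ t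
      · refine le_antisymm ?_ (iSup_le fun n => Set.indicator_le_self _ _ t)
        obtain ⟨n, hn⟩ := exists_nat_ge t
        exact le_iSup_of_le n (by rw [indicator_of_mem (Set.mem_Icc.2 ⟨ht, hn⟩)])
      · have h0 : P t = 0 := by
          rw [hPdef]; simp only; rw [hΨz t (lt_of_not_ge ht), ENNReal.ofReal_zero]
        simp [Set.indicator_apply, h0]
    calc (∫⁻ t, P t) = ∫⁻ t, ⨆ n : ℕ, (Icc (0 : ℝ) n).indicator P t :=
          lintegral_congr hPeq
      _ = ⨆ n : ℕ, ∫⁻ t, (Icc (0 : ℝ) n).indicator P t := by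
          refine lintegral_iSup (fun n => hPm.indicator measurableSet_Icc) ?_
          intro m n hmn
          exact Set.indicator_le_indicator_of_subset
            (Icc_subset_Icc_right (by exact_mod_cast hmn)) (fun t => zero_le)
      _ = ⨆ n : ℕ, J n := by
          refine iSup_congr fun n => ?_
          rw [lintegral_indicator measurableSet_Icc]
      _ ≤ ENNReal.ofReal (ρ / (1 - ρ)) := iSup_le hJle
  refine ⟨hΨm.aestronglyMeasurable, ?_⟩
  rw [hasFiniteIntegral_iff_ofReal (Filter.Eventually.of_forall hΨnn)]
  exact lt_of_le_of_lt hglobal ENNReal.ofReal_lt_top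

lemma bounded_of_lipschitz_integrable {φ : ℝ → ℝ} {K : ℝ}
    (hnn : ∀ t, 0 ≤ φ t) (hint : Integrable φ) (hI : (∫ t, φ t) = 1)
    (hdiff : Differentiable ℝ φ) (hK : ∀ t, |deriv φ t| ≤ K) :
    ∃ C : ℝ, 0 < C ∧ ∀ t, φ t ≤ C := by
  set K' : ℝ := max K 1 with hK'def
  have hK'pos : 0 < K' := lt_of_lt_of_le one_pos (le_max_right _ _)
  have hlip : ∀ x y : ℝ, |φ x - φ y| ≤ K' * |x - y| := by
    intro x y
    have := Convex.norm_image_sub_le_of_norm_deriv_le (f := φ) (s := Set.univ) (C := K')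
      (fun u _ => (hdiff u).hasDerivAt.differentiableAt)
      (fun u _ => le_trans (by rw [Real.norm_eq_abs]; exact hK u) (le_max_left K 1))
      convex_univ (mem_univ y) (mem_univ x)
    simpa [Real.norm_eq_abs] using this
  refine ⟨1 + 4 * K', by positivity, fun t => ?_⟩
  set M := φ t with hM
  by_cases hMpos : M ≤ 0
  · nlinarith
  push_neg at hMpos
  have hlow : ∀ x ∈ Icc t (t + M / (2 * K')), M / 2 ≤ φ x := by
    intro x hx
    have h1 : |φ x - φ t| ≤ K' * |x - t| := hlip x t
    have h2 : |x - t| ≤ M / (2 * K') := by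
      rw [abs_of_nonneg (by linarith [hx.1])]
      have := hx.2; linarith
    have : |φ x - φ t| ≤ M / 2 := by
      calc |φ x - φ t| ≤ K' * |x - t| := h1
        _ ≤ K' * (M / (2 * K')) := by nlinarith [abs_nonneg (x - t)]
        _ = M / 2 := by field_simp
    have := abs_le.1 this
    linarith [this.1]
  have hmeasI : volume (Icc t (t + M / (2 * K'))) ≠ ∞ := by
    rw [Real.volume_Icc]; exact ENNReal.ofReal_ne_top
  have hge : M / 2 * (volume (Icc t (t + M / (2 * K')))).toReal
      ≤ ∫ x in Icc t (t + M / (2 * K')), φ x :=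
    setIntegral_ge_of_const_le_real measurableSet_Icc hmeasI hlow hint.integrableOn
  have hle1 : (∫ x in Icc t (t + M / (2 * K')), φ x) ≤ 1 := by
    rw [← hI]
    exact setIntegral_le_integral hint (Filter.Eventually.of_forall hnn)
  have hvol : (volume (Icc t (t + M / (2 * K')))).toReal = M / (2 * K') := by
    rw [Real.volume_Icc, ENNReal.toReal_ofReal
      (by linarith [div_pos hMpos (by positivity : (0:ℝ) < 2 * K')] :
        (0:ℝ) ≤ t + M / (2*K') - t)]
    ring_nf
  rw [hvol] at hge
  have hsq : M * M ≤ 4 * K' := by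
    have : M / 2 * (M / (2 * K')) ≤ 1 := le_trans hge hle1
    have h4 : M * M ≤ 4 * K' * 1 := by
      calc M * M = (4 * K') * (M / 2 * (M / (2 * K'))) := by field_simp; ring
        _ ≤ 4 * K' * 1 := by nlinarith
    linarith
  nlinarith [sq_nonneg (M - 1)]

/-- With `a_T = 1 + 1/T`, `b_T` the Malthusian parameter (`∫₀^∞ e^{-b_T s} φ(s) ds = a_T⁻²`),
`φ̃(t) = e^{-b_T t} a_T φ(t)` and `Ψ̃` a resolvent of `φ̃`, the rescaled resolvent
`Ψ̃^{(T)} : t ↦ Ψ̃(Tt)` is in L¹ ∩ L² and its Fourier transform is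
`F φ̃^{(T)} / (1 - T·F φ̃^{(T)})`. -/
theorem tilted_resolvent_fourier (φ : ℝ → ℝ) (hφ : AssumptionA φ)
    (T : ℝ) (hT : 1 < T) (b : ℝ) (hb : 0 < b)
    (hbeq : (∫ s in Set.Ioi (0 : ℝ), Real.exp (-b * s) * φ s) = ((1 + 1 / T) ^ 2)⁻¹)
    (Ψt : ℝ → ℝ)
    (hΨt : IsResolvent (fun t => Real.exp (-b * t) * ((1 + 1 / T) * φ t)) Ψt) :
    Integrable (fun t => Ψt (T * t)) ∧ MemLp (fun t => Ψt (T * t)) 2 volume ∧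
    ∀ z : ℝ,
      (1 - (T : ℂ) *
          FT (fun t => Real.exp (-b * (T * t)) * ((1 + 1 / T) * φ (T * t))) z) ≠ 0 ∧
      FT (fun t => Ψt (T * t)) z =
        FT (fun t => Real.exp (-b * (T * t)) * ((1 + 1 / T) * φ (T * t))) z /
          (1 - (T : ℂ) *
            FT (fun t => Real.exp (-b * (T * t)) * ((1 + 1 / T) * φ (T * t))) z) := by
  obtain ⟨hφm, hφnn, hφz, hφint, hφI, hm1, hm2, hm1pos, hφdiff, ⟨K, hK⟩, hderiv⟩ := hφ
  obtain ⟨hΨm, hΨnn, hΨz, hΨloc, hae⟩ := hΨt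
  have hT0 : 0 < T := lt_trans one_pos hT
  have hT' : (T : ℂ) ≠ 0 := by exact_mod_cast hT0.ne'
  set a : ℝ := 1 + 1 / T with ha
  have hTinv : 0 < 1 / T := by positivity
  have ha1 : 1 < a := by rw [ha]; linarith
  have ha0 : 0 < a := lt_trans one_pos ha1
  have ha2 : a ≤ 2 := by
    rw [ha]
    have : 1 / T < 1 := by rw [div_lt_one hT0]; exact hT
    linarith
  set g : ℝ → ℝ := fun t => Real.exp (-b * t) * (a * φ t) with hg
  have hgm : Measurable g := ((measurable_id.const_mul (-b)).exp).mul (hφm.const_mul a)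
  have hgnn : ∀ t, 0 ≤ g t := fun t =>
    mul_nonneg (exp_nonneg _) (mul_nonneg ha0.le (hφnn t))
  have hgz : ∀ t < 0, g t = 0 := by
    intro t ht
    rw [hg]; simp only
    rw [hφz t ht, mul_zero, mul_zero]
  have hgle : ∀ t, g t ≤ a * φ t := by
    intro t
    by_cases ht : 0 ≤ t
    · have h1 : Real.exp (-b * t) ≤ 1 := by
        rw [Real.exp_le_one_iff]
        nlinarith
      calc g t ≤ 1 * (a * φ t) :=
            mul_le_mul_of_nonneg_right h1 (mul_nonneg ha0.le (hφnn t))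
        _ = a * φ t := one_mul _
    · push_neg at ht
      rw [hgz t ht, hφz t ht, mul_zero]
  have hgi : Integrable g := by
    refine (hφint.const_mul a).mono' hgm.aestronglyMeasurable ?_
    refine Filter.Eventually.of_forall fun t => ?_
    rw [Real.norm_eq_abs, abs_of_nonneg (hgnn t)]
    exact hgle t
  have hgval : (∫ t, g t) = a⁻¹ := by
    have h1 : (∫ t, g t) = ∫ t in Ici (0 : ℝ), g t :=
      (setIntegral_eq_integral_of_forall_compl_eq_zero fun t ht =>
        hgz t (by simpa using ht)).symm
    have h2 : (∫ t in Ici (0 : ℝ), g t) = ∫ t in Ioi (0 : ℝ), g t :=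
      integral_Ici_eq_integral_Ioi
    have h3 : (∫ t in Ioi (0 : ℝ), g t) = a * ∫ t in Ioi (0 : ℝ), Real.exp (-b * t) * φ t := by
      rw [← integral_const_mul]
      refine integral_congr_ae (Filter.Eventually.of_forall fun t => ?_)
      rw [hg]; simp only; ring
    rw [h1, h2, h3, hbeq, sq, mul_inv, ← mul_assoc, mul_inv_cancel₀ ha0.ne', one_mul]
  have hρlt : (∫ t, g t) < 1 := by
    rw [hgval]
    exact inv_lt_one_of_one_lt₀ ha1
  have hΨint : Integrable Ψt :=
    resolvent_L1 hgm hgnn hgz hgi hρlt hΨm hΨnn hΨz hΨloc hae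
  -- boundedness
  obtain ⟨C, hC0, hCb⟩ := bounded_of_lipschitz_integrable hφnn hφint hφI hφdiff hK
  have hgb : ∀ t, g t ≤ 2 * C := fun t =>
    le_trans (hgle t) (mul_le_mul ha2 (hCb t) (hφnn t) (by norm_num))
  set M : ℝ := 2 * C + 2 * C * ∫ t, Ψt t with hMdef
  have hbddae : ∀ᵐ t : ℝ, Ψt t ≤ M := by
    filter_upwards [hae] with t ht
    have hcb : (∫ s, g (t - s) * Ψt s) ≤ 2 * C * ∫ s, Ψt s := by
      rw [← integral_const_mul]
      refine integral_mono_of_nonneg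
        (Filter.Eventually.of_forall fun s => mul_nonneg (hgnn _) (hΨnn _))
        (hΨint.const_mul _) (Filter.Eventually.of_forall fun s => ?_)
      exact mul_le_mul_of_nonneg_right (hgb _) (hΨnn _)
    rw [ht, hMdef]
    have := hgb t
    linarith
  have hΨsq : Integrable (fun t => Ψt t ^ 2) := by
    refine (hΨint.const_mul M).mono'
      ((hΨm.pow_const 2).aestronglyMeasurable) ?_
    filter_upwards [hbddae] with t ht
    rw [Real.norm_eq_abs, abs_of_nonneg (by positivity)]
    calc Ψt t ^ 2 = Ψt t * Ψt t := sq _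
      _ ≤ M * Ψt t := mul_le_mul_of_nonneg_right ht (hΨnn t)
  have hΨTint : Integrable (fun t => Ψt (T * t)) := hΨint.comp_mul_left' hT0.ne'
  have hΨTL2 : MemLp (fun t => Ψt (T * t)) 2 volume := by
    refine (memLp_two_iff_integrable_sq
      ((hΨm.comp (measurable_const_mul T)).aestronglyMeasurable)).2 ?_
    exact hΨsq.comp_mul_left' hT0.ne'
  refine ⟨hΨTint, hΨTL2, fun z => ?_⟩
  -- Fourier identities
  have hFTid : ∀ w : ℝ, FT Ψt w = FT g w + FT g w * FT Ψt w := by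
    intro w
    have hsplit : FT Ψt w
        = ∫ t : ℝ, (Complex.exp (Complex.I * w * t) * (g t : ℂ)
            + Complex.exp (Complex.I * w * t) * ((∫ s, g (t - s) * Ψt s : ℝ) : ℂ)) := by
      unfold FT
      refine integral_congr_ae ?_
      filter_upwards [hae] with t ht
      rw [ht]
      push_cast
      ring
    have hconv_int : Integrable (fun t : ℝ => ∫ s, g (t - s) * Ψt s) := by
      have h := hΨint.integrable_convolution (ContinuousLinearMap.mul ℝ ℝ) hgi
      refine h.congr (Filter.Eventually.of_forall fun t => ?_)
      rw [convolution_def]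
      refine integral_congr_ae (Filter.Eventually.of_forall fun s => ?_)
      simp only [ContinuousLinearMap.mul_apply']
      ring
    have hconvft : (∫ t : ℝ, Complex.exp (Complex.I * w * t) * ((∫ s, g (t - s) * Ψt s : ℝ) : ℂ))
        = FT g w * FT Ψt w := ft_conv hgi hΨint w
    calc FT Ψt w = _ := hsplit
      _ = (∫ t : ℝ, Complex.exp (Complex.I * w * t) * (g t : ℂ))
          + ∫ t : ℝ, Complex.exp (Complex.I * w * t) * ((∫ s, g (t - s) * Ψt s : ℝ) : ℂ) :=
        integral_add (ft_integrand_integrable hgi w) (ft_integrand_integrable hconv_int w)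
      _ = FT g w + FT g w * FT Ψt w := by rw [hconvft]; rfl
  have hlt1 : ∀ w : ℝ, ‖FT g w‖ < 1 := by
    intro w
    calc ‖FT g w‖ ≤ ∫ t, g t := ft_norm_le hgnn w
      _ < 1 := hρlt
  have hne : ∀ w : ℝ, (1 : ℂ) - FT g w ≠ 0 := by
    intro w h
    rw [sub_eq_zero] at h
    have : ‖FT g w‖ = 1 := by rw [← h]; simp
    linarith [hlt1 w]
  have hsolve : ∀ w : ℝ, FT Ψt w = FT g w / (1 - FT g w) := by
    intro w
    rw [eq_div_iff (hne w)]
    linear_combination hFTid w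
  -- scaling
  have hfun_eq : (fun t : ℝ => Real.exp (-b * (T * t)) * ((1 + 1 / T) * φ (T * t)))
      = fun t => g (T * t) := by
    funext t
    rw [hg]
  have hsc2 : FT (fun t => Real.exp (-b * (T * t)) * ((1 + 1 / T) * φ (T * t))) z
      = (T : ℂ)⁻¹ * FT g (z / T) := by
    rw [hfun_eq]
    exact ft_scale hT0 z
  have hsc1 : FT (fun t => Ψt (T * t)) z = (T : ℂ)⁻¹ * FT Ψt (z / T) := ft_scale hT0 z
  have hden : (1 : ℂ) - (T : ℂ) *
      FT (fun t => Real.exp (-b * (T * t)) * ((1 + 1 / T) * φ (T * t))) z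
      = 1 - FT g (z / T) := by
    rw [hsc2, ← mul_assoc, mul_inv_cancel₀ hT', one_mul]
  constructor
  · rw [hden]; exact hne (z / T)
  · rw [hden, hsc1, hsc2, hsolve (z / T), mul_div_assoc]
end

section
/- Under Assumption (A), there exists C > 0 such that for every T > 1 and every z ∈ ℝ, the Fourier transform F φ̃_T(z) := ∫₀^∞ e^{i z t}·e^{−b_T·t}·a_T·φ(t) dt satisfies |F φ̃_T(z)| ≤ C, and moreover |F φ̃_T(z)| ≤ C/|z| whenever z ≠ 0. Here a_T := 1 + 1/T and b_T > 0 satisfies ∫₀^∞ e^{−b_T·s} φ(s) ds = a_T^{−2}. -/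
open MeasureTheory Real Set

/-- Fourier transform over `(0,∞)`: `∫₀^∞ e^{izt} f(t) dt`. -/
noncomputable def FTpos (f : ℝ → ℝ) (z : ℝ) : ℂ :=
  ∫ t in Set.Ioi (0 : ℝ), Complex.exp (Complex.I * z * t) * f t

lemma phi_zero {φ : ℝ → ℝ} (hdiff : Differentiable ℝ φ) (hneg : ∀ t < 0, φ t = 0) :
    φ 0 = 0 := by
  have h1 : Filter.Tendsto φ (nhdsWithin 0 (Set.Iio 0)) (nhds (φ 0)) :=
    ((hdiff.continuous.tendsto 0).mono_left nhdsWithin_le_nhds)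
  have h2 : Filter.Tendsto φ (nhdsWithin 0 (Set.Iio 0)) (nhds 0) := by
    refine Filter.Tendsto.congr' ?_ tendsto_const_nhds
    exact eventually_nhdsWithin_of_forall fun x hx => (hneg x hx).symm
  exact tendsto_nhds_unique h1 h2

lemma phi_lin {φ : ℝ → ℝ} {K : ℝ} (hdiff : Differentiable ℝ φ)
    (hK : ∀ t, |deriv φ t| ≤ K) (h0 : φ 0 = 0) {t : ℝ} (ht : 0 ≤ t) : φ t ≤ K * t := by
  have := Convex.norm_image_sub_le_of_norm_deriv_le (s := Set.univ)
    (fun x _ => hdiff x) (fun x _ => hK x) convex_univ (Set.mem_univ 0) (Set.mem_univ t)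
  simp [h0, Real.norm_eq_abs, abs_of_nonneg ht] at this
  calc φ t ≤ |φ t| := le_abs_self _
    _ ≤ K * t := this

lemma phi_tendsto {φ : ℝ → ℝ} (hdiff : Differentiable ℝ φ) (hd_int : Integrable (deriv φ))
    (h0 : φ 0 = 0) :
    Filter.Tendsto φ Filter.atTop (nhds (∫ s in Set.Ioi (0:ℝ), deriv φ s)) := by
  have h := intervalIntegral_tendsto_integral_Ioi (0:ℝ) hd_int.integrableOn Filter.tendsto_id
  refine h.congr fun t => ?_
  simp only [id]
  rw [intervalIntegral.integral_deriv_eq_sub (fun x _ => hdiff x)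
    hd_int.intervalIntegrable, h0, sub_zero]

lemma hasDeriv_f {φ : ℝ → ℝ} (hdiff : Differentiable ℝ φ) (a b t : ℝ) :
    HasDerivAt (fun t => Real.exp (-b * t) * (a * φ t))
      ((Real.exp (-b * t) * (-b)) * (a * φ t) + Real.exp (-b * t) * (a * deriv φ t)) t := by
  have hExp : HasDerivAt (fun t : ℝ => Real.exp (-b * t)) (Real.exp (-b * t) * (-b)) t := by
    simpa [Function.comp] using ((hasDerivAt_id t).const_mul (-b)).exp
  exact hExp.mul ((hdiff t).hasDerivAt.const_mul a)

lemma hasDeriv_cexp (z t : ℝ) :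
    HasDerivAt (fun t : ℝ => Complex.exp (Complex.I * z * t))
      (Complex.exp (Complex.I * z * t) * (Complex.I * z)) t := by
  have h1 : HasDerivAt (fun t : ℝ => Complex.I * z * (t : ℂ)) (Complex.I * z) t := by
    simpa using (Complex.ofRealCLM.hasDerivAt (x := t)).const_mul (Complex.I * z)
  simpa using h1.cexp

lemma hasDeriv_F {φ : ℝ → ℝ} (hdiff : Differentiable ℝ φ) (a b z t : ℝ) :
    HasDerivAt (fun t : ℝ => Complex.exp (Complex.I * z * t) * ((Real.exp (-b * t) * (a * φ t) : ℝ) : ℂ))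
      ((Complex.exp (Complex.I * z * t) * (Complex.I * z)) * ((Real.exp (-b * t) * (a * φ t) : ℝ) : ℂ)
        + Complex.exp (Complex.I * z * t) *
          (((Real.exp (-b * t) * (-b)) * (a * φ t) + Real.exp (-b * t) * (a * deriv φ t) : ℝ) : ℂ)) t :=
  (hasDeriv_cexp z t).mul (hasDeriv_f hdiff a b t).ofReal_comp

lemma int_e {φ : ℝ → ℝ} (hmeas : Measurable φ) (hpos : ∀ t, 0 ≤ φ t)
    (hint : Integrable φ) {b : ℝ} (hb : 0 < b) :
    IntegrableOn (fun t => Real.exp (-b * t) * φ t) (Set.Ioi 0) := by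
  refine Integrable.mono' hint.integrableOn
    ((Real.continuous_exp.comp (continuous_const.mul continuous_id)).aestronglyMeasurable.mul
      hmeas.aestronglyMeasurable) ?_
  filter_upwards [self_mem_ae_restrict measurableSet_Ioi] with t ht
  have h1 : Real.exp (-b * t) ≤ 1 := by
    rw [Real.exp_le_one_iff]
    nlinarith [le_of_lt (show (0:ℝ) < t from ht)]
  rw [Real.norm_eq_abs, abs_of_nonneg (mul_nonneg (Real.exp_pos _).le (hpos t))]
  nlinarith [hpos t, Real.exp_pos (-b * t)]

lemma bt_exp_le {b t : ℝ} : b * t * Real.exp (-(b * t)) ≤ 1 := by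
  rcases le_or_gt (b * t) 0 with h | h
  · have := Real.exp_pos (-(b * t)); nlinarith
  · rw [Real.exp_neg, ← div_eq_mul_inv, div_le_one (Real.exp_pos _)]
    linarith [Real.add_one_le_exp (b * t)]

lemma moment_bd {φ : ℝ → ℝ} (hmeas : Measurable φ) (hpos : ∀ t, 0 ≤ φ t)
    (hint : Integrable φ) (hint1 : (∫ t, φ t) = 1) {K b : ℝ} (hK0 : 0 ≤ K)
    (hlin : ∀ t, 0 ≤ t → φ t ≤ K * t) (hb : 0 < b) :
    ∫ t in Set.Ioi (0:ℝ), b * (Real.exp (-b * t) * φ t) ≤ K + 1 := by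
  have hg_int : IntegrableOn (fun t => b * (Real.exp (-b * t) * φ t)) (Set.Ioi 0) :=
    (int_e hmeas hpos hint hb).const_mul b
  have hsplit : (∫ t in Set.Ioi (0:ℝ), b * (Real.exp (-b * t) * φ t))
      = (∫ t in Set.Ioc (0:ℝ) 1, b * (Real.exp (-b * t) * φ t))
        + ∫ t in Set.Ioi (1:ℝ), b * (Real.exp (-b * t) * φ t) := by
    rw [← setIntegral_union (Set.Ioc_disjoint_Ioi le_rfl) measurableSet_Ioi
      (hg_int.mono_set (by intro x hx; exact hx.1)) (hg_int.mono_set (fun x hx => lt_trans one_pos hx)),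
      Set.Ioc_union_Ioi_eq_Ioi zero_le_one]
  have h1 : (∫ t in Set.Ioc (0:ℝ) 1, b * (Real.exp (-b * t) * φ t)) ≤ K := by
    have hmono : (∫ t in Set.Ioc (0:ℝ) 1, b * (Real.exp (-b * t) * φ t))
        ≤ ∫ _ in Set.Ioc (0:ℝ) 1, K := by
      refine setIntegral_mono_on (hg_int.mono_set (fun x hx => hx.1))
        ((integrableOn_const_iff (C := K)).mpr (Or.inr (by simp [Real.volume_Ioc]))) measurableSet_Ioc ?_
      intro t ht
      have h2 : φ t ≤ K * t := hlin t ht.1.le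
      have h3 : b * t * Real.exp (-(b * t)) ≤ 1 := bt_exp_le
      have h4 : Real.exp (-b * t) = Real.exp (-(b * t)) := by ring_nf
      rw [h4]
      nlinarith [Real.exp_pos (-(b * t)), hpos t, ht.1, mul_nonneg (mul_nonneg hb.le ht.1.le) (Real.exp_pos (-(b*t))).le]
    calc (∫ t in Set.Ioc (0:ℝ) 1, b * (Real.exp (-b * t) * φ t))
        ≤ ∫ _ in Set.Ioc (0:ℝ) 1, K := hmono
      _ = K := by simp [Real.volume_Ioc]
  have h2 : (∫ t in Set.Ioi (1:ℝ), b * (Real.exp (-b * t) * φ t)) ≤ 1 := by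
    have hb1 : (∫ t in Set.Ioi (1:ℝ), b * (Real.exp (-b * t) * φ t)) ≤ ∫ t in Set.Ioi (1:ℝ), φ t := by
      refine setIntegral_mono_on (hg_int.mono_set (fun x hx => Set.mem_Ioi.mpr (lt_trans one_pos hx)))
        (hint.integrableOn) measurableSet_Ioi ?_
      intro t ht
      have h3 : b * t * Real.exp (-(b * t)) ≤ 1 := bt_exp_le
      have h4 : Real.exp (-b * t) = Real.exp (-(b * t)) := by ring_nf
      have ht1 : (1:ℝ) ≤ t := le_of_lt ht
      rw [h4]
      nlinarith [Real.exp_pos (-(b * t)), hpos t, mul_nonneg hb.le (Real.exp_pos (-(b*t))).le]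
    calc (∫ t in Set.Ioi (1:ℝ), b * (Real.exp (-b * t) * φ t)) ≤ ∫ t in Set.Ioi (1:ℝ), φ t := hb1
      _ ≤ ∫ t, φ t := setIntegral_le_integral hint (Filter.Eventually.of_forall hpos)
      _ = 1 := hint1
  linarith [hsplit, h1, h2]

/-- Uniform bound on the Fourier transform of the tilted supercritical kernel
`φ̃_T(t) = e^{-b_T t}·a_T·φ(t)`: it is bounded by `C` and by `C/|z|` for `z ≠ 0`. -/
theorem tilted_kernel_fourier_bound (φ : ℝ → ℝ) (hφ : AssumptionA φ) :
    ∃ C > 0, ∀ T : ℝ, 1 < T → ∀ b : ℝ, 0 < b →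
      (∫ s in Set.Ioi (0 : ℝ), Real.exp (-b * s) * φ s) = ((1 + 1 / T) ^ 2)⁻¹ →
      ∀ z : ℝ,
        ‖FTpos (fun t => Real.exp (-b * t) * ((1 + 1 / T) * φ t)) z‖ ≤ C ∧
        (z ≠ 0 →
          ‖FTpos (fun t => Real.exp (-b * t) * ((1 + 1 / T) * φ t)) z‖ ≤
            C / |z|) := by
  obtain ⟨hmeas, hpos, hneg, hint, hint1, -, -, -, hdiff, ⟨K, hK⟩, hd_int⟩ := hφ
  have hφ0 : φ 0 = 0 := phi_zero hdiff hneg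
  have hK0 : 0 ≤ K := le_trans (abs_nonneg _) (hK 0)
  have hlin : ∀ t, 0 ≤ t → φ t ≤ K * t := fun t ht => phi_lin hdiff hK hφ0 ht
  set J : ℝ := ∫ t in Set.Ioi (0:ℝ), |deriv φ t| with hJdef
  have hJ0 : 0 ≤ J := setIntegral_nonneg measurableSet_Ioi (fun t _ => abs_nonneg _)
  refine ⟨2*(K+1+J)+1, by positivity, ?_⟩
  intro T hT b hb hbint z
  set a : ℝ := 1 + 1/T with ha
  have hT0 : (0:ℝ) < T := lt_trans one_pos hT
  have ha1 : 1 < a := by rw [ha]; nlinarith [one_div_pos.mpr hT0]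
  have ha2 : a ≤ 2 := by
    rw [ha]
    have : 1/T ≤ 1 := by rw [div_le_one hT0]; linarith
    linarith
  have ha0 : 0 < a := lt_trans one_pos ha1
  -- the tilted kernel g and its derivative g'
  set g : ℝ → ℝ := fun t => Real.exp (-b * t) * (a * φ t) with hgdef
  set g' : ℝ → ℝ := fun t =>
    (Real.exp (-b * t) * (-b)) * (a * φ t) + Real.exp (-b * t) * (a * deriv φ t) with hg'def
  have hgeq : g = (fun t => a * (Real.exp (-b * t) * φ t)) := by funext t; rw [hgdef]; ring
  have hg_nonneg : ∀ t, 0 ≤ g t := fun t =>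
    mul_nonneg (Real.exp_pos _).le (mul_nonneg ha0.le (hpos t))
  have hint_e : IntegrableOn (fun t => Real.exp (-b * t) * φ t) (Set.Ioi 0) :=
    int_e hmeas hpos hint hb
  have hint_g : IntegrableOn g (Set.Ioi 0) := by rw [hgeq]; exact hint_e.const_mul a
  have hg_meas : Measurable g :=
    ((Real.continuous_exp.comp (continuous_const.mul continuous_id)).measurable).mul
      ((hmeas.const_mul a))
  have hg'_meas : Measurable g' := by
    refine Measurable.add (Measurable.mul ?_ ((hmeas.const_mul a))) (Measurable.mul ?_ ?_)
    · exact ((Real.continuous_exp.comp (continuous_const.mul continuous_id)).measurable).mul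
        measurable_const
    · exact (Real.continuous_exp.comp (continuous_const.mul continuous_id)).measurable
    · exact (measurable_deriv φ).const_mul a
  -- pointwise bound on g'
  have hBbd : ∀ t ∈ Set.Ioi (0:ℝ), |g' t| ≤ b * g t + a * |deriv φ t| := by
    intro t ht
    have hexp1 : Real.exp (-b * t) ≤ 1 := by
      rw [Real.exp_le_one_iff]; nlinarith [le_of_lt (show (0:ℝ) < t from ht)]
    have h1 : |(Real.exp (-b * t) * (-b)) * (a * φ t)| = b * g t := by
      rw [abs_mul, abs_mul, abs_mul, abs_of_nonneg (Real.exp_pos (-b*t)).le, abs_neg,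
        abs_of_nonneg hb.le, abs_of_nonneg ha0.le, abs_of_nonneg (hpos t), hgdef]
      ring
    have h2 : |Real.exp (-b * t) * (a * deriv φ t)| ≤ a * |deriv φ t| := by
      rw [abs_mul, abs_mul, abs_of_nonneg (Real.exp_pos (-b*t)).le, abs_of_nonneg ha0.le]
      nlinarith [abs_nonneg (deriv φ t), Real.exp_pos (-b * t), mul_nonneg ha0.le (abs_nonneg (deriv φ t))]
    calc |g' t| ≤ |(Real.exp (-b * t) * (-b)) * (a * φ t)| + |Real.exp (-b * t) * (a * deriv φ t)| :=
        abs_add_le _ _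
      _ ≤ b * g t + a * |deriv φ t| := by rw [h1]; linarith
  have hintB : IntegrableOn (fun t => b * g t + a * |deriv φ t|) (Set.Ioi 0) :=
    (hint_g.const_mul b).add ((hd_int.abs.integrableOn).const_mul a)
  have hint_g' : IntegrableOn g' (Set.Ioi 0) := by
    refine Integrable.mono' hintB hg'_meas.aestronglyMeasurable ?_
    filter_upwards [self_mem_ae_restrict measurableSet_Ioi] with t ht
    exact hBbd t ht
  -- norm of the complex integrand
  have hnorm : ∀ (h : ℝ → ℝ) (t : ℝ),
      ‖Complex.exp (Complex.I * z * t) * ((h t : ℝ) : ℂ)‖ = |h t| := by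
    intro h t
    rw [norm_mul, Complex.norm_exp, Complex.norm_real, Real.norm_eq_abs]
    have hre : (Complex.I * z * t).re = 0 := by simp
    rw [hre, Real.exp_zero, one_mul]
  have hcg_meas : AEStronglyMeasurable (fun t : ℝ => Complex.exp (Complex.I * z * t)) volume :=
    (Complex.continuous_exp.comp ((continuous_const.mul Complex.continuous_ofReal))).aestronglyMeasurable
  have hint_cg : IntegrableOn (fun t : ℝ => Complex.exp (Complex.I * z * t) * ((g t : ℝ) : ℂ)) (Set.Ioi 0) := by
    refine Integrable.mono' hint_g
      (hcg_meas.restrict.mul ((Complex.measurable_ofReal.comp hg_meas).aestronglyMeasurable)) ?_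
    refine Filter.Eventually.of_forall fun t => ?_
    rw [hnorm g t, abs_of_nonneg (hg_nonneg t)]
  have hint_cg' : IntegrableOn (fun t : ℝ => Complex.exp (Complex.I * z * t) * ((g' t : ℝ) : ℂ)) (Set.Ioi 0) := by
    refine Integrable.mono' hint_g'.abs
      (hcg_meas.restrict.mul ((Complex.measurable_ofReal.comp hg'_meas).aestronglyMeasurable)) ?_
    exact Filter.Eventually.of_forall fun t => le_of_eq (hnorm g' t)
  -- value of ∫ g
  have hval : (∫ t in Set.Ioi (0:ℝ), g t) = a⁻¹ := by
    have h1 : (∫ t in Set.Ioi (0:ℝ), g t) = a * ∫ t in Set.Ioi (0:ℝ), Real.exp (-b * t) * φ t := by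
      rw [← integral_const_mul]
      exact integral_congr_ae (Filter.Eventually.of_forall fun t => by rw [hgdef]; ring)
    rw [h1, hbint, sq, mul_inv, ← mul_assoc, mul_inv_cancel₀ (ne_of_gt ha0), one_mul]
  -- first bound
  have hFT : FTpos (fun t => Real.exp (-b * t) * (a * φ t)) z
      = ∫ t in Set.Ioi (0:ℝ), Complex.exp (Complex.I * z * t) * ((g t : ℝ) : ℂ) := rfl
  have habs1 : ‖FTpos (fun t => Real.exp (-b * t) * (a * φ t)) z‖ ≤ 1 := by
    rw [hFT]
    calc ‖∫ t in Set.Ioi (0:ℝ), Complex.exp (Complex.I * z * t) * ((g t : ℝ) : ℂ)‖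
        ≤ ∫ t in Set.Ioi (0:ℝ), ‖Complex.exp (Complex.I * z * t) * ((g t : ℝ) : ℂ)‖ :=
          norm_integral_le_integral_norm _
      _ = ∫ t in Set.Ioi (0:ℝ), g t := by
          refine integral_congr_ae (Filter.Eventually.of_forall fun t => ?_)
          show ‖Complex.exp (Complex.I * z * t) * ((g t : ℝ) : ℂ)‖ = g t
          rw [hnorm g t, abs_of_nonneg (hg_nonneg t)]
      _ = a⁻¹ := hval
      _ ≤ 1 := inv_le_one_of_one_le₀ ha1.le
  -- tendsto of F at infinity
  have he0 : Filter.Tendsto (fun t : ℝ => Real.exp (-b * t)) Filter.atTop (nhds 0) := by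
    have h1 : Filter.Tendsto (fun t : ℝ => b * t) Filter.atTop Filter.atTop :=
      Filter.Tendsto.const_mul_atTop hb Filter.tendsto_id
    exact (Real.tendsto_exp_neg_atTop_nhds_zero.comp h1).congr fun t => by
      simp only [Function.comp]; rw [neg_mul]
  have hL := phi_tendsto hdiff hd_int hφ0
  have hgl : Filter.Tendsto g Filter.atTop (nhds 0) := by
    have := he0.mul (hL.const_mul a)
    simpa [hgdef] using this
  have htendF : Filter.Tendsto
      (fun t : ℝ => Complex.exp (Complex.I * z * t) * ((g t : ℝ) : ℂ)) Filter.atTop (nhds 0) := by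
    refine squeeze_zero_norm (fun t => ?_) (by simpa using hgl.abs)
    exact le_of_eq (hnorm g t)
  -- integration by parts
  have hIBP : (∫ t in Set.Ioi (0:ℝ),
      ((Complex.exp (Complex.I * z * t) * (Complex.I * z)) * ((g t : ℝ) : ℂ)
        + Complex.exp (Complex.I * z * t) * ((g' t : ℝ) : ℂ))) = 0 := by
    have h := integral_Ioi_of_hasDerivAt_of_tendsto' (a := 0)
      (f := fun t : ℝ => Complex.exp (Complex.I * z * t) * ((g t : ℝ) : ℂ))
      (f' := fun t : ℝ => (Complex.exp (Complex.I * z * t) * (Complex.I * z)) * ((g t : ℝ) : ℂ)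
        + Complex.exp (Complex.I * z * t) * ((g' t : ℝ) : ℂ))
      (fun x _ => hasDeriv_F hdiff a b z x)
      ((hint_cg.const_mul (Complex.I * z)).congr ?_ |>.add hint_cg') htendF
    · rw [h]
      simp [hgdef, hφ0]
    · refine Filter.Eventually.of_forall fun t => ?_
      ring
  have hsum : (Complex.I * z) * (FTpos (fun t => Real.exp (-b * t) * (a * φ t)) z)
      + (∫ t in Set.Ioi (0:ℝ), Complex.exp (Complex.I * z * t) * ((g' t : ℝ) : ℂ)) = 0 := by
    rw [hFT, ← integral_const_mul]
    rw [← integral_add ((hint_cg.const_mul (Complex.I * z)).congr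
      (Filter.Eventually.of_forall fun t => by ring)) hint_cg']
    rw [← hIBP]
    refine integral_congr_ae (Filter.Eventually.of_forall fun t => ?_)
    ring
  -- bound on ∫ |g'|
  have hbd_g' : (∫ t in Set.Ioi (0:ℝ), |g' t|) ≤ 2*(K+1+J) := by
    have hmom : (∫ t in Set.Ioi (0:ℝ), b * (Real.exp (-b * t) * φ t)) ≤ K + 1 :=
      moment_bd hmeas hpos hint hint1 hK0 hlin hb
    have e1 : (∫ t in Set.Ioi (0:ℝ), b * g t)
        = a * ∫ t in Set.Ioi (0:ℝ), b * (Real.exp (-b * t) * φ t) := by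
      rw [← integral_const_mul]
      exact integral_congr_ae (Filter.Eventually.of_forall fun t => by rw [hgdef]; ring)
    have e2 : (∫ t in Set.Ioi (0:ℝ), a * |deriv φ t|) = a * J := by
      rw [hJdef, ← integral_const_mul]
    have hsplit : (∫ t in Set.Ioi (0:ℝ), (b * g t + a * |deriv φ t|))
        = a * (∫ t in Set.Ioi (0:ℝ), b * (Real.exp (-b * t) * φ t)) + a * J := by
      rw [integral_add (hint_g.const_mul b) ((hd_int.abs.integrableOn).const_mul a), e1, e2]
    have hmono : (∫ t in Set.Ioi (0:ℝ), |g' t|) ≤ ∫ t in Set.Ioi (0:ℝ), (b * g t + a * |deriv φ t|) := by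
      refine integral_mono_ae hint_g'.abs hintB ?_
      filter_upwards [self_mem_ae_restrict measurableSet_Ioi] with t ht
      exact hBbd t ht
    have h2 : a * (∫ t in Set.Ioi (0:ℝ), b * (Real.exp (-b * t) * φ t)) ≤ 2 * (K + 1) := by
      calc a * (∫ t in Set.Ioi (0:ℝ), b * (Real.exp (-b * t) * φ t)) ≤ a * (K+1) := by
            apply mul_le_mul_of_nonneg_left hmom ha0.le
        _ ≤ 2 * (K+1) := by nlinarith
    have h3 : a * J ≤ 2 * J := by nlinarith
    linarith [hmono, hsplit ▸ hmono]
  -- main derivative bound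
  have hmain : |z| * ‖FTpos (fun t => Real.exp (-b * t) * (a * φ t)) z‖ ≤ 2*(K+1+J) := by
    have heq : (Complex.I * z) * (FTpos (fun t => Real.exp (-b * t) * (a * φ t)) z)
        = - ∫ t in Set.Ioi (0:ℝ), Complex.exp (Complex.I * z * t) * ((g' t : ℝ) : ℂ) := by
      linear_combination hsum
    have habs : ‖(Complex.I * z) * (FTpos (fun t => Real.exp (-b * t) * (a * φ t)) z)‖
        = |z| * ‖FTpos (fun t => Real.exp (-b * t) * (a * φ t)) z‖ := by
      rw [norm_mul, norm_mul, Complex.norm_I, Complex.norm_real, Real.norm_eq_abs, one_mul]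
    rw [← habs, heq, norm_neg]
    calc ‖∫ t in Set.Ioi (0:ℝ), Complex.exp (Complex.I * z * t) * ((g' t : ℝ) : ℂ)‖
        ≤ ∫ t in Set.Ioi (0:ℝ), ‖Complex.exp (Complex.I * z * t) * ((g' t : ℝ) : ℂ)‖ :=
          norm_integral_le_integral_norm _
      _ = ∫ t in Set.Ioi (0:ℝ), |g' t| :=
          integral_congr_ae (Filter.Eventually.of_forall fun t => hnorm g' t)
      _ ≤ 2*(K+1+J) := hbd_g'
  constructor
  · linarith [habs1]
  · intro hz
    have hzpos : 0 < |z| := abs_pos.mpr hz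
    rw [le_div_iff₀ hzpos]
    calc ‖FTpos (fun t => Real.exp (-b * t) * (a * φ t)) z‖ * |z|
        = |z| * ‖FTpos (fun t => Real.exp (-b * t) * (a * φ t)) z‖ := mul_comm _ _
      _ ≤ 2*(K+1+J) := hmain
      _ ≤ 2*(K+1+J)+1 := by linarith
end

section
/- Under Assumption (A), for each ε ∈ {−1, 0, 1} there exists a constant C > 0 such that for every T > 2, with a_T := 1 + ε/T and Ψ a resolvent of a_T·φ, the essential supremum of Ψ^{(T)} : t ↦ Ψ(T·t) over the interval (0,1) is at most C. -/
open MeasureTheory Real Set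

open Filter
open scoped ENNReal NNReal

lemma exp_convex_bound (θ x : ℝ) (h0 : 0 ≤ θ) (h1 : θ ≤ 1) :
    Real.exp (-(θ * x)) ≤ 1 - θ + θ * Real.exp (-x) := by
  have h := convexOn_exp.2 (Set.mem_univ (-x)) (Set.mem_univ (0:ℝ)) h0
    (show (0:ℝ) ≤ 1 - θ by linarith) (by ring)
  simp only [smul_eq_mul, mul_zero, add_zero, Real.exp_zero, mul_one] at h
  calc Real.exp (-(θ * x)) = Real.exp (θ * (-x)) := by ring_nf
    _ ≤ θ * Real.exp (-x) + (1 - θ) := by simpa using h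
    _ = 1 - θ + θ * Real.exp (-x) := by ring

lemma ftc_bound (φ : ℝ → ℝ) (hd : Differentiable ℝ φ) (hd' : Integrable (deriv φ))
    (v u : ℝ) (hvu : v ≤ u) :
    φ v ≤ φ u + ∫ w in Ioc v u, |deriv φ w| := by
  have hftc : ∫ w in v..u, deriv φ w = φ u - φ v :=
    intervalIntegral.integral_deriv_eq_sub (fun x _ => (hd x)) (hd'.intervalIntegrable)
  have habs : |∫ w in v..u, deriv φ w| ≤ ∫ w in v..u, |deriv φ w| := by
    simpa using intervalIntegral.norm_integral_le_integral_norm (μ := volume)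
      (f := deriv φ) hvu
  rw [hftc] at habs
  rw [intervalIntegral.integral_of_le hvu] at habs
  have h2 := abs_le.1 habs
  have := h2.1
  linarith

lemma avg_bound (φ : ℝ → ℝ) (hint : Integrable φ)
    (hd : Differentiable ℝ φ) (hd' : Integrable (deriv φ))
    (A : ℝ) (hA : 0 < A) (v : ℝ) :
    φ v ≤ A⁻¹ * (∫ u in Ioc v (v+A), φ u) + ∫ u in Ioc v (v+A), |deriv φ u| := by
  set D := ∫ u in Ioc v (v+A), |deriv φ u| with hD
  have key : ∀ u ∈ Ioc v (v+A), φ v ≤ φ u + D := by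
    intro u hu
    refine (ftc_bound φ hd hd' v u hu.1.le).trans ?_
    have : ∫ w in Ioc v u, |deriv φ w| ≤ D := by
      apply setIntegral_mono_set (hd'.abs.integrableOn)
      · filter_upwards with w using abs_nonneg _
      · exact HasSubset.Subset.eventuallyLE (Ioc_subset_Ioc le_rfl hu.2)
    linarith
  have hmono : ∫ u in Ioc v (v+A), φ v ≤ ∫ u in Ioc v (v+A), (φ u + D) := by
    apply setIntegral_mono_on
    · exact integrableOn_const (by simp [Real.volume_Ioc])
    · exact (hint.integrableOn).add (integrableOn_const (by simp [Real.volume_Ioc]))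
    · exact measurableSet_Ioc
    · exact key
  rw [setIntegral_const] at hmono
  rw [integral_add (hint.integrableOn) (integrableOn_const (by simp [Real.volume_Ioc]))] at hmono
  rw [setIntegral_const] at hmono
  have hvol : (volume (Ioc v (v+A))).toReal = A := by
    simp [Real.volume_Ioc, hA.le]
  rw [measureReal_def, hvol] at hmono
  simp only [smul_eq_mul] at hmono
  have := mul_le_mul_of_nonneg_left hmono (le_of_lt (inv_pos.2 hA))
  rw [mul_add] at this
  calc φ v = A⁻¹ * (A * φ v) := by field_simp
    _ ≤ A⁻¹ * (∫ u in Ioc v (v+A), φ u) + A⁻¹ * (A * D) := by linarith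
    _ = A⁻¹ * (∫ u in Ioc v (v+A), φ u) + D := by field_simp

lemma smallA (φ : ℝ → ℝ) (hmeas : Measurable φ) (hpos : ∀ t, 0 ≤ φ t)
    (hint : Integrable φ) :
    ∃ A : ℝ, 0 < A ∧ (∫ t in Ioc (0:ℝ) A, φ t) ≤ 1/3 := by
  set F : ℕ → ℝ → ℝ := fun n t => (Ioc (0:ℝ) ((n:ℝ)+1)⁻¹).indicator φ t with hF
  have hlim : Tendsto (fun n => ∫ t, F n t) atTop (nhds (∫ _ : ℝ, (0:ℝ))) := by
    apply tendsto_integral_of_dominated_convergence φ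
    · intro n
      exact (hmeas.indicator measurableSet_Ioc).aestronglyMeasurable
    · exact hint
    · intro n
      filter_upwards with t
      rw [Real.norm_eq_abs, abs_of_nonneg (Set.indicator_nonneg (fun s _ => hpos s) t)]
      exact Set.indicator_le_self' (fun s _ => hpos s) t
    · filter_upwards with t
      rcases le_or_gt t 0 with h | h
      · have : ∀ n, F n t = 0 := fun n => Set.indicator_of_notMem (fun hm => absurd hm.1 (not_lt.2 h)) φ
        simpa [this] using tendsto_const_nhds
      · have : ∀ᶠ n : ℕ in atTop, F n t = 0 := by
          obtain ⟨N, hN⟩ := exists_nat_gt t⁻¹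
          filter_upwards [eventually_ge_atTop N] with n hn
          apply Set.indicator_of_notMem
          intro hm
          have h1 : ((n:ℝ)+1)⁻¹ < t := by
            rw [inv_lt_comm₀ (by positivity) h]
            calc t⁻¹ < N := hN
              _ ≤ (n:ℝ) := by exact_mod_cast hn
              _ < (n:ℝ)+1 := by linarith
          exact absurd hm.2 (not_le.2 h1)
        exact Tendsto.congr' (by filter_upwards [this] with n hn using hn.symm) tendsto_const_nhds
  simp only [integral_zero] at hlim
  have hev : ∀ᶠ n : ℕ in atTop, (∫ t, F n t) ≤ 1/3 :=
    hlim.eventually_le_const (show (0:ℝ) < 1/3 by norm_num)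
  obtain ⟨n, hn⟩ := hev.exists
  refine ⟨((n:ℝ)+1)⁻¹, by positivity, ?_⟩
  rw [← integral_indicator measurableSet_Ioc]
  exact hn

lemma lam0_exists (φ : ℝ → ℝ) (hmeas : Measurable φ) (hpos : ∀ t, 0 ≤ φ t)
    (hint : Integrable φ) :
    ∃ l : ℝ, 1 ≤ l ∧ (∫ t in Ioi (0:ℝ), Real.exp (-(l * t)) * φ t) ≤ 2/3 := by
  have hlim : Tendsto (fun n : ℕ => ∫ t in Ioi (0:ℝ), Real.exp (-((n:ℝ) * t)) * φ t)
      atTop (nhds (∫ _ : ℝ in Ioi (0:ℝ), (0:ℝ))) := by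
    apply tendsto_integral_of_dominated_convergence φ
    · intro n
      exact ((Real.measurable_exp.comp (measurable_const.mul measurable_id).neg).mul
        hmeas).aestronglyMeasurable
    · exact hint.integrableOn
    · intro n
      filter_upwards [ae_restrict_mem measurableSet_Ioi] with t ht
      rw [Real.norm_eq_abs, abs_of_nonneg (mul_nonneg (Real.exp_nonneg _) (hpos t))]
      calc Real.exp (-((n:ℝ) * t)) * φ t ≤ 1 * φ t := by
            apply mul_le_mul_of_nonneg_right _ (hpos t)
            rw [Real.exp_le_one_iff]
            simp only [neg_nonpos]
            exact mul_nonneg (Nat.cast_nonneg n) (le_of_lt ht)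
        _ = φ t := one_mul _
    · filter_upwards [ae_restrict_mem measurableSet_Ioi] with t ht
      have h1 : Tendsto (fun n : ℕ => Real.exp (-((n:ℝ) * t))) atTop (nhds 0) := by
        have : ∀ n : ℕ, Real.exp (-((n:ℝ) * t)) = (Real.exp (-t))^n := by
          intro n
          rw [← Real.exp_nat_mul]
          ring_nf
        rw [funext this]
        apply tendsto_pow_atTop_nhds_zero_of_lt_one (Real.exp_nonneg _)
        rw [Real.exp_lt_one_iff]
        linarith [ht.out]
      simpa using h1.mul_const (φ t)
  simp only [integral_zero] at hlim
  have hev : ∀ᶠ n : ℕ in atTop, (∫ t in Ioi (0:ℝ), Real.exp (-((n:ℝ) * t)) * φ t) ≤ 2/3 :=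
    hlim.eventually_le_const (show (0:ℝ) < 2/3 by norm_num)
  obtain ⟨n, hn1, hn⟩ := (hev.and (eventually_ge_atTop 1)).exists
  exact ⟨(n:ℝ), by exact_mod_cast hn, hn1⟩

lemma exp_mul_int (φ : ℝ → ℝ) (hmeas : Measurable φ) (hpos : ∀ t, 0 ≤ φ t)
    (hint : Integrable φ) (l : ℝ) (hl : 0 ≤ l) :
    IntegrableOn (fun t => Real.exp (-(l * t)) * φ t) (Ioi 0) := by
  apply Integrable.mono' (hint.integrableOn)
  · exact ((Real.measurable_exp.comp (measurable_const.mul measurable_id).neg).mul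
      hmeas).aestronglyMeasurable
  · filter_upwards [ae_restrict_mem measurableSet_Ioi] with t ht
    rw [Real.norm_eq_abs, abs_of_nonneg (mul_nonneg (Real.exp_nonneg _) (hpos t))]
    calc Real.exp (-(l * t)) * φ t ≤ 1 * φ t :=
          mul_le_mul_of_nonneg_right
            (by rw [Real.exp_le_one_iff]; simp only [neg_nonpos];
                exact mul_nonneg hl (le_of_lt ht)) (hpos t)
      _ = φ t := one_mul _

lemma laplace_key (φ : ℝ → ℝ) (hmeas : Measurable φ) (hpos : ∀ t, 0 ≤ φ t)
    (hint : Integrable φ) (hφtot : (∫ t in Ioi (0:ℝ), φ t) = 1)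
    (l0 : ℝ) (hl0 : 1 ≤ l0)
    (hL0 : (∫ t in Ioi (0:ℝ), Real.exp (-(l0 * t)) * φ t) ≤ 2/3)
    (T : ℝ) (hT : 2 < T) :
    (1 + 1/T) * (∫ t in Ioi (0:ℝ),
        Real.exp (-((l0 / ((T+1) * (1 - ∫ s in Ioi (0:ℝ), Real.exp (-(l0 * s)) * φ s))) * t)) * φ t)
      ≤ 1 := by
  set L0 : ℝ := ∫ s in Ioi (0:ℝ), Real.exp (-(l0 * s)) * φ s with hL0def
  have hL0nn : 0 ≤ L0 := by
    apply setIntegral_nonneg measurableSet_Ioi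
    intro t _
    exact mul_nonneg (Real.exp_nonneg _) (hpos t)
  set h0 : ℝ := 1 - L0 with hh0
  have hh03 : 1/3 ≤ h0 := by simp only [hh0]; linarith
  have hh0pos : 0 < h0 := by linarith
  set θ : ℝ := 1 / ((T+1) * h0) with hθdef
  have hθpos : 0 < θ := by
    apply div_pos one_pos
    apply mul_pos (by linarith) hh0pos
  have hθ1 : θ ≤ 1 := by
    rw [hθdef, div_le_one (mul_pos (by linarith) hh0pos)]
    calc (1:ℝ) = 3 * (1/3) := by norm_num
      _ ≤ (T+1) * h0 := by
          apply mul_le_mul (by linarith) hh03 (by norm_num) (by linarith)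
  have hldef : l0 / ((T+1) * h0) = θ * l0 := by
    rw [hθdef]; field_simp
  rw [hldef]
  set l : ℝ := θ * l0 with hl
  have hlpos : 0 < l := mul_pos hθpos (by linarith)
  -- pointwise bound
  have hpw : ∀ t ∈ Ioi (0:ℝ), Real.exp (-(l * t)) * φ t ≤
      ((1 - θ) * φ t + θ * (Real.exp (-(l0 * t)) * φ t)) := by
    intro t _
    have h := exp_convex_bound θ (l0 * t) hθpos.le hθ1
    have h2 : Real.exp (-(l * t)) = Real.exp (-(θ * (l0 * t))) := by rw [hl]; ring_nf
    rw [h2]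
    calc Real.exp (-(θ * (l0*t))) * φ t ≤ (1 - θ + θ * Real.exp (-(l0*t))) * φ t :=
          mul_le_mul_of_nonneg_right h (hpos t)
      _ = (1 - θ) * φ t + θ * (Real.exp (-(l0 * t)) * φ t) := by ring
  have hil : IntegrableOn (fun t => Real.exp (-(l * t)) * φ t) (Ioi 0) :=
    exp_mul_int φ hmeas hpos hint l hlpos.le
  have hil0 : IntegrableOn (fun t => Real.exp (-(l0 * t)) * φ t) (Ioi 0) :=
    exp_mul_int φ hmeas hpos hint l0 (by linarith)
  have hmono : (∫ t in Ioi (0:ℝ), Real.exp (-(l * t)) * φ t) ≤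
      ∫ t in Ioi (0:ℝ), ((1 - θ) * φ t + θ * (Real.exp (-(l0 * t)) * φ t)) := by
    apply setIntegral_mono_on hil
      ((hint.integrableOn.const_mul _).add (hil0.const_mul _)) measurableSet_Ioi hpw
  have heval : (∫ t in Ioi (0:ℝ), ((1 - θ) * φ t + θ * (Real.exp (-(l0 * t)) * φ t)))
      = (1 - θ) + θ * L0 := by
    rw [integral_add (hint.integrableOn.const_mul _) (hil0.const_mul _),
      integral_const_mul, integral_const_mul, hφtot, mul_one, ← hL0def]
  rw [heval] at hmono
  have hfinal : (1 - θ) + θ * L0 = 1 - θ * h0 := by rw [hh0]; ring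
  rw [hfinal] at hmono
  have hθh0 : θ * h0 = 1 / (T+1) := by
    rw [hθdef]; field_simp
  rw [hθh0] at hmono
  have hLnn : 0 ≤ ∫ t in Ioi (0:ℝ), Real.exp (-(l * t)) * φ t := by
    apply setIntegral_nonneg measurableSet_Ioi
    intro t _
    exact mul_nonneg (Real.exp_nonneg _) (hpos t)
  calc (1 + 1/T) * (∫ t in Ioi (0:ℝ), Real.exp (-(l * t)) * φ t)
      ≤ (1 + 1/T) * (1 - 1/(T+1)) := by
        apply mul_le_mul_of_nonneg_left hmono
        have : 0 < 1/T := by positivity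
        linarith
    _ = 1 := by field_simp; ring

lemma window_conv_bound (f U : ℝ → ℝ≥0∞) (hf : Measurable f) (hU : Measurable U)
    (A t : ℝ)
    (hwin : ∀ x : ℝ, (∫⁻ s in Ioc (x - A) x, U s) ≤ ENNReal.ofReal 2) :
    (∫⁻ s, (∫⁻ w in Ioc (t-s) (t-s+A), f w) * U s) ≤ (∫⁻ w, f w) * ENNReal.ofReal 2 := by
  have hE : MeasurableSet {p : ℝ × ℝ | p.1 + p.2 ∈ Ioc t (t+A)} := by
    exact (measurable_fst.add measurable_snd) measurableSet_Ioc
  have hmeas2 : Measurable (Function.uncurry fun s w =>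
      ({p : ℝ × ℝ | p.1 + p.2 ∈ Ioc t (t+A)}.indicator (fun _ => (1:ℝ≥0∞)) (s, w)) * f w * U s) := by
    apply Measurable.mul
    apply Measurable.mul
    · exact (measurable_one.indicator hE).comp measurable_id
    · exact hf.comp measurable_snd
    · exact hU.comp measurable_fst
  have key : ∀ s : ℝ, (∫⁻ w in Ioc (t-s) (t-s+A), f w) * U s
      = ∫⁻ w, ({p : ℝ × ℝ | p.1 + p.2 ∈ Ioc t (t+A)}.indicator (fun _ => (1:ℝ≥0∞)) (s, w)) * f w * U s := by
    intro s
    rw [← lintegral_indicator measurableSet_Ioc, ← lintegral_mul_const _ (hf.indicator measurableSet_Ioc)]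
    congr 1
    funext w
    by_cases hw : w ∈ Ioc (t-s) (t-s+A)
    · have hw' : (s, w) ∈ {p : ℝ × ℝ | p.1 + p.2 ∈ Ioc t (t+A)} := by
        simp only [mem_setOf_eq, mem_Ioc]
        constructor
        · linarith [hw.1]
        · linarith [hw.2]
      rw [Set.indicator_of_mem hw, Set.indicator_of_mem hw', one_mul]
    · have hw' : (s, w) ∉ {p : ℝ × ℝ | p.1 + p.2 ∈ Ioc t (t+A)} := by
        simp only [mem_setOf_eq, mem_Ioc] at *
        intro hc
        exact hw ⟨by linarith [hc.1], by linarith [hc.2]⟩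
      rw [Set.indicator_of_notMem hw, Set.indicator_of_notMem hw', zero_mul, zero_mul, zero_mul]
  calc (∫⁻ s, (∫⁻ w in Ioc (t-s) (t-s+A), f w) * U s)
      = ∫⁻ s, ∫⁻ w, ({p : ℝ × ℝ | p.1 + p.2 ∈ Ioc t (t+A)}.indicator (fun _ => (1:ℝ≥0∞)) (s, w)) * f w * U s := by
        apply lintegral_congr key
    _ = ∫⁻ w, ∫⁻ s, ({p : ℝ × ℝ | p.1 + p.2 ∈ Ioc t (t+A)}.indicator (fun _ => (1:ℝ≥0∞)) (s, w)) * f w * U s := by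
        exact lintegral_lintegral_swap hmeas2.aemeasurable
    _ = ∫⁻ w, f w * ∫⁻ s in Ioc (t-w) (t-w+A), U s := by
        apply lintegral_congr
        intro w
        rw [← lintegral_indicator measurableSet_Ioc, ← lintegral_const_mul _ (hU.indicator measurableSet_Ioc)]
        congr 1
        funext s
        by_cases hs : s ∈ Ioc (t-w) (t-w+A)
        · have hw' : (s, w) ∈ {p : ℝ × ℝ | p.1 + p.2 ∈ Ioc t (t+A)} := by
            simp only [mem_setOf_eq, mem_Ioc]
            exact ⟨by linarith [hs.1], by linarith [hs.2]⟩
          rw [Set.indicator_of_mem hs, Set.indicator_of_mem hw', one_mul, mul_comm]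
        · have hw' : (s, w) ∉ {p : ℝ × ℝ | p.1 + p.2 ∈ Ioc t (t+A)} := by
            simp only [mem_setOf_eq, mem_Ioc] at *
            intro hc
            exact hs ⟨by linarith [hc.1], by linarith [hc.2]⟩
          rw [Set.indicator_of_notMem hs, Set.indicator_of_notMem hw', zero_mul, zero_mul, mul_zero]
    _ ≤ ∫⁻ w, f w * ENNReal.ofReal 2 := by
        apply lintegral_mono
        intro w
        have := hwin (t-w+A)
        have h2 : t - w + A - A = t - w := by ring
        rw [h2] at this
        exact mul_le_mul_right this _
    _ = (∫⁻ w, f w) * ENNReal.ofReal 2 := lintegral_mul_const _ hf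

lemma tilted_bound (k u b d : ℝ → ℝ)
    (hk : Measurable k) (hk0 : ∀ t, 0 ≤ k t) (hkneg : ∀ t < 0, k t = 0)
    (hb : Measurable b) (hb0 : ∀ t, 0 ≤ b t) (hbint : Integrable b)
    (hd : Measurable d) (hd0 : ∀ t, 0 ≤ d t) (hdint : Integrable d)
    (hkb : ∀ t, k t ≤ b t)
    (hu : Measurable u) (hu0 : ∀ t, 0 ≤ u t)
    (hufin : ∀ r : ℝ, (∫⁻ t in Iic r, ENNReal.ofReal (u t)) < ⊤)
    (hktot : (∫⁻ t, ENNReal.ofReal (k t)) ≤ 1)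
    (A : ℝ) (hA : 0 < A)
    (hkA : (∫⁻ t in Iic A, ENNReal.ofReal (k t)) ≤ ENNReal.ofReal (1/2))
    (havg : ∀ v, b v ≤ A⁻¹ * (∫ w in Ioc v (v+A), b w) + ∫ w in Ioc v (v+A), d w)
    (heq : ∀ᵐ t : ℝ, u t = k t + ∫ s, k (t - s) * u s) :
    ∀ᵐ t : ℝ, u t ≤ 3 * (A⁻¹ * (∫ w, b w) + ∫ w, d w) := by
  set U : ℝ → ℝ≥0∞ := fun t => ENNReal.ofReal (u t) with hU
  set Kf : ℝ → ℝ≥0∞ := fun t => ENNReal.ofReal (k t) with hKf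
  have hUmeas : Measurable U := hu.ennreal_ofReal
  have hKmeas : Measurable Kf := hk.ennreal_ofReal
  -- a.e. inequality in ℝ≥0∞
  have hUae : ∀ᵐ t : ℝ, U t ≤ Kf t + ∫⁻ s, Kf (t - s) * U s := by
    filter_upwards [heq] with t ht
    by_cases hJ : Integrable (fun s => k (t - s) * u s)
    · have hJnn : 0 ≤ᵐ[volume] fun s => k (t - s) * u s :=
        ae_of_all _ fun s => mul_nonneg (hk0 _) (hu0 _)
      have h1 : ENNReal.ofReal (∫ s, k (t - s) * u s) = ∫⁻ s, Kf (t - s) * U s := by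
        rw [ofReal_integral_eq_lintegral_ofReal hJ hJnn]
        apply lintegral_congr
        intro s
        rw [ENNReal.ofReal_mul (hk0 _)]
      rw [hU]
      simp only
      rw [ht, ENNReal.ofReal_add (hk0 t) (integral_nonneg fun s => mul_nonneg (hk0 _) (hu0 _)), h1]
    · rw [integral_undef hJ] at ht
      rw [hU]
      simp only
      rw [ht, add_zero]
      exact le_add_right le_rfl
  -- window bound
  have hGb_le_one : ∀ r : ℝ, (∫⁻ x in Iic r, Kf x) ≤ 1 :=
    fun r => le_trans (lintegral_mono' Measure.restrict_le_self le_rfl) hktot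
  have hGb_neg : ∀ r : ℝ, r < 0 → (∫⁻ x in Iic r, Kf x) = 0 := by
    intro r hr
    have : ∀ᵐ x ∂(volume.restrict (Iic r)), Kf x = 0 := by
      filter_upwards [ae_restrict_mem measurableSet_Iic] with x hx
      rw [hKf]
      simp only
      rw [hkneg x (lt_of_le_of_lt hx hr), ENNReal.ofReal_zero]
    rw [lintegral_congr_ae this, lintegral_zero]
  have hwin : ∀ x : ℝ, (∫⁻ s in Ioc (x - A) x, U s) ≤ ENNReal.ofReal 2 := by
    intro x
    set W := ∫⁻ s in Ioc (x - A) x, U s with hW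
    have hsplit : (∫⁻ s in Iic x, U s) = (∫⁻ s in Iic (x - A), U s) + W := by
      rw [hW, ← lintegral_union measurableSet_Ioc (Iic_disjoint_Ioc le_rfl),
        Iic_union_Ioc_eq_Iic (by linarith : x - A ≤ x)]
    have hup : (∫⁻ t in Iic x, U t) ≤ (∫⁻ t in Iic x, Kf t) +
        ∫⁻ t in Iic x, (∫⁻ s, Kf (t - s) * U s) := by
      calc (∫⁻ t in Iic x, U t) ≤ ∫⁻ t in Iic x, (Kf t + ∫⁻ s, Kf (t - s) * U s) :=
            lintegral_mono_ae (ae_restrict_of_ae hUae)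
        _ = _ := lintegral_add_left hKmeas _
    have hGshift : ∀ s : ℝ, (∫⁻ t in Iic x, Kf (t - s)) = ∫⁻ t in Iic (x - s), Kf t := by
      intro s
      rw [← lintegral_indicator measurableSet_Iic, ← lintegral_indicator measurableSet_Iic]
      have hfe : (fun t => (Iic x).indicator (fun t' => Kf (t' - s)) t)
          = fun t => (Iic (x - s)).indicator Kf (t + -s) := by
        funext t
        by_cases h : t ≤ x
        · rw [Set.indicator_of_mem (mem_Iic.2 h),
            Set.indicator_of_mem (mem_Iic.2 (by linarith : t + -s ≤ x - s))]
          ring_nf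
        · rw [Set.indicator_of_notMem (fun hm => h (mem_Iic.1 hm)),
            Set.indicator_of_notMem (fun hm => h (by linarith [mem_Iic.1 hm]))]
      rw [hfe, lintegral_add_right_eq_self (fun t => (Iic (x - s)).indicator Kf t) (-s)]
    have hswap : (∫⁻ t in Iic x, ∫⁻ s, Kf (t - s) * U s)
        = ∫⁻ s, U s * (∫⁻ t in Iic (x - s), Kf t) := by
      rw [lintegral_lintegral_swap]
      · apply lintegral_congr
        intro s
        have hms : Measurable fun t : ℝ => Kf (t - s) :=
          hKmeas.comp (measurable_id.sub measurable_const)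
        rw [lintegral_mul_const _ hms, hGshift s, mul_comm]
      · exact ((hKmeas.comp ((measurable_fst.sub measurable_snd))).mul
          (hUmeas.comp measurable_snd)).aemeasurable
    -- split the s-integral
    have hsint : (∫⁻ s, U s * (∫⁻ t in Iic (x - s), Kf t))
        ≤ (∫⁻ s in Iic (x - A), U s) + W * ENNReal.ofReal (1/2) := by
      have hdecomp : (∫⁻ s, U s * (∫⁻ t in Iic (x - s), Kf t))
          = (∫⁻ s in Iic x, U s * (∫⁻ t in Iic (x - s), Kf t))
            + ∫⁻ s in (Iic x)ᶜ, U s * (∫⁻ t in Iic (x - s), Kf t) :=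
        (lintegral_add_compl _ (measurableSet_Iic (a := x))).symm
      have hcompl : (∫⁻ s in (Iic x)ᶜ, U s * (∫⁻ t in Iic (x - s), Kf t)) = 0 := by
        have h0 : ∀ᵐ s ∂(volume.restrict (Iic x)ᶜ), U s * (∫⁻ t in Iic (x - s), Kf t) = 0 := by
          filter_upwards [ae_restrict_mem measurableSet_Iic.compl] with s hs
          have hsx : ¬ s ≤ x := hs
          rw [hGb_neg (x - s) (by linarith [lt_of_not_ge hsx])]
          exact mul_zero _
        rw [lintegral_congr_ae h0, lintegral_zero]
      have hmid : (∫⁻ s in Iic x, U s * (∫⁻ t in Iic (x - s), Kf t))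
          = (∫⁻ s in Iic (x - A), U s * (∫⁻ t in Iic (x - s), Kf t))
            + ∫⁻ s in Ioc (x - A) x, U s * (∫⁻ t in Iic (x - s), Kf t) := by
        rw [← lintegral_union measurableSet_Ioc (Iic_disjoint_Ioc le_rfl),
          Iic_union_Ioc_eq_Iic (by linarith : x - A ≤ x)]
      have h1 : (∫⁻ s in Iic (x - A), U s * (∫⁻ t in Iic (x - s), Kf t))
          ≤ ∫⁻ s in Iic (x - A), U s := by
        apply setLIntegral_mono' measurableSet_Iic
        intro s _
        calc U s * (∫⁻ t in Iic (x - s), Kf t) ≤ U s * 1 :=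
              mul_le_mul_right (hGb_le_one (x - s)) _
          _ = U s := mul_one _
      have h2 : (∫⁻ s in Ioc (x - A) x, U s * (∫⁻ t in Iic (x - s), Kf t))
          ≤ W * ENNReal.ofReal (1/2) := by
        calc (∫⁻ s in Ioc (x - A) x, U s * (∫⁻ t in Iic (x - s), Kf t))
            ≤ ∫⁻ s in Ioc (x - A) x, U s * ENNReal.ofReal (1/2) := by
              apply setLIntegral_mono' measurableSet_Ioc
              intro s hs
              apply mul_le_mul_right
              calc (∫⁻ t in Iic (x - s), Kf t) ≤ ∫⁻ t in Iic A, Kf t :=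
                    lintegral_mono_set (Iic_subset_Iic.2 (by linarith [hs.1]))
                _ ≤ ENNReal.ofReal (1/2) := hkA
          _ = W * ENNReal.ofReal (1/2) := lintegral_mul_const _ hUmeas
      rw [hdecomp, hcompl, add_zero, hmid]
      exact add_le_add h1 h2
    -- put together and cancel
    have hWfin : W ≠ ⊤ := by
      have : W ≤ ∫⁻ s in Iic x, U s :=
        lintegral_mono_set (fun s hs => mem_Iic.2 hs.2)
      exact (lt_of_le_of_lt this (hufin x)).ne
    have hIfin : (∫⁻ s in Iic (x - A), U s) ≠ ⊤ := (hufin (x - A)).ne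
    have hmain : (∫⁻ s in Iic (x - A), U s) + W
        ≤ (∫⁻ s in Iic (x - A), U s) + (1 + W * ENNReal.ofReal (1/2)) := by
      calc (∫⁻ s in Iic (x - A), U s) + W = ∫⁻ s in Iic x, U s := hsplit.symm
        _ ≤ (∫⁻ t in Iic x, Kf t) + ∫⁻ t in Iic x, (∫⁻ s, Kf (t - s) * U s) := hup
        _ ≤ 1 + ((∫⁻ s in Iic (x - A), U s) + W * ENNReal.ofReal (1/2)) := by
            apply add_le_add (hGb_le_one x)
            rw [hswap]
            exact hsint
        _ = (∫⁻ s in Iic (x - A), U s) + (1 + W * ENNReal.ofReal (1/2)) := by ring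
    have hW2 : W ≤ 1 + W * ENNReal.ofReal (1/2) :=
      (ENNReal.add_le_add_iff_left hIfin).mp hmain
    -- convert to the reals
    have hRfin : (1 + W * ENNReal.ofReal (1/2)) ≠ ⊤ := by
      apply ENNReal.add_ne_top.2
      exact ⟨ENNReal.one_ne_top, ENNReal.mul_ne_top hWfin ENNReal.ofReal_ne_top⟩
    have htr := ENNReal.toReal_mono hRfin hW2
    rw [ENNReal.toReal_add ENNReal.one_ne_top (ENNReal.mul_ne_top hWfin ENNReal.ofReal_ne_top),
      ENNReal.toReal_mul, ENNReal.toReal_one, ENNReal.toReal_ofReal (by norm_num : (0:ℝ) ≤ 1/2)]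
      at htr
    have hwr : W.toReal ≤ 2 := by linarith
    calc W = ENNReal.ofReal W.toReal := (ENNReal.ofReal_toReal hWfin).symm
      _ ≤ ENNReal.ofReal 2 := ENNReal.ofReal_le_ofReal hwr
  -- Claim C : bound the convolution term, then conclude
  set Bf : ℝ → ℝ≥0∞ := fun w => ENNReal.ofReal (b w) with hBf
  set Df : ℝ → ℝ≥0∞ := fun w => ENNReal.ofReal (d w) with hDf
  have hBmeas : Measurable Bf := hb.ennreal_ofReal
  have hDmeas : Measurable Df := hd.ennreal_ofReal
  set f : ℝ → ℝ≥0∞ := fun w => ENNReal.ofReal A⁻¹ * Bf w + Df w with hf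
  have hfmeas : Measurable f := (hBmeas.const_mul _).add hDmeas
  set S : ℝ := A⁻¹ * (∫ w, b w) + ∫ w, d w with hS
  have hbi : 0 ≤ ∫ w, b w := integral_nonneg hb0
  have hdi : 0 ≤ ∫ w, d w := integral_nonneg hd0
  have hSnn : 0 ≤ S := by
    rw [hS]
    have : 0 ≤ A⁻¹ := inv_nonneg.2 hA.le
    positivity
  have hftot : (∫⁻ w, f w) ≤ ENNReal.ofReal S := by
    rw [hf]
    simp only
    rw [lintegral_add_left (hBmeas.const_mul _), lintegral_const_mul _ hBmeas]
    have hB : (∫⁻ w, Bf w) = ENNReal.ofReal (∫ w, b w) :=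
      (ofReal_integral_eq_lintegral_ofReal hbint (ae_of_all _ hb0)).symm
    have hD : (∫⁻ w, Df w) = ENNReal.ofReal (∫ w, d w) :=
      (ofReal_integral_eq_lintegral_ofReal hdint (ae_of_all _ hd0)).symm
    rw [hB, hD, hS, ENNReal.ofReal_add (by positivity) hdi,
      ENNReal.ofReal_mul (inv_nonneg.2 hA.le)]
  have havg' : ∀ v : ℝ, Bf v ≤ ∫⁻ w in Ioc v (v+A), f w := by
    intro v
    have h1 : (∫⁻ w in Ioc v (v+A), f w)
        = ENNReal.ofReal A⁻¹ * (∫⁻ w in Ioc v (v+A), Bf w) + ∫⁻ w in Ioc v (v+A), Df w := by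
      rw [hf]
      simp only
      rw [lintegral_add_left (hBmeas.const_mul _), lintegral_const_mul _ hBmeas]
    rw [h1]
    have hBw : (∫⁻ w in Ioc v (v+A), Bf w) = ENNReal.ofReal (∫ w in Ioc v (v+A), b w) :=
      (ofReal_integral_eq_lintegral_ofReal hbint.integrableOn (ae_of_all _ hb0)).symm
    have hDw : (∫⁻ w in Ioc v (v+A), Df w) = ENNReal.ofReal (∫ w in Ioc v (v+A), d w) :=
      (ofReal_integral_eq_lintegral_ofReal hdint.integrableOn (ae_of_all _ hd0)).symm
    rw [hBw, hDw, ← ENNReal.ofReal_mul (inv_nonneg.2 hA.le), ← ENNReal.ofReal_add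
      (mul_nonneg (inv_nonneg.2 hA.le) (setIntegral_nonneg measurableSet_Ioc fun w _ => hb0 w))
      (setIntegral_nonneg measurableSet_Ioc fun w _ => hd0 w)]
    exact ENNReal.ofReal_le_ofReal (havg v)
  have hconv : ∀ t : ℝ, (∫⁻ s, Kf (t - s) * U s) ≤ ENNReal.ofReal S * ENNReal.ofReal 2 := by
    intro t
    calc (∫⁻ s, Kf (t - s) * U s) ≤ ∫⁻ s, (∫⁻ w in Ioc (t-s) (t-s+A), f w) * U s := by
          apply lintegral_mono
          intro s
          apply mul_le_mul_left
          calc Kf (t - s) ≤ Bf (t - s) := ENNReal.ofReal_le_ofReal (hkb _)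
            _ ≤ _ := havg' (t - s)
      _ ≤ (∫⁻ w, f w) * ENNReal.ofReal 2 := window_conv_bound f U hfmeas hUmeas A t hwin
      _ ≤ ENNReal.ofReal S * ENNReal.ofReal 2 := mul_le_mul_left hftot _
  have hKbd : ∀ t : ℝ, Kf t ≤ ENNReal.ofReal S := by
    intro t
    calc Kf t ≤ Bf t := ENNReal.ofReal_le_ofReal (hkb _)
      _ ≤ ∫⁻ w in Ioc t (t+A), f w := havg' t
      _ ≤ ∫⁻ w, f w := lintegral_mono' Measure.restrict_le_self le_rfl
      _ ≤ ENNReal.ofReal S := hftot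
  filter_upwards [hUae] with t ht
  have hfin : U t ≤ ENNReal.ofReal (3 * S) := by
    calc U t ≤ Kf t + ∫⁻ s, Kf (t - s) * U s := ht
      _ ≤ ENNReal.ofReal S + ENNReal.ofReal S * ENNReal.ofReal 2 :=
          add_le_add (hKbd t) (hconv t)
      _ = ENNReal.ofReal (S + S * 2) := by
          rw [← ENNReal.ofReal_mul hSnn, ← ENNReal.ofReal_add hSnn (by positivity)]
      _ = ENNReal.ofReal (3 * S) := by ring_nf
  have : u t ≤ 3 * S := by
    have h3S : 0 ≤ 3 * S := by positivity
    exact (ENNReal.ofReal_le_ofReal_iff h3S).1 hfin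
  exact this

set_option maxHeartbeats 2000000 in
/-- Uniform essential-sup bound on `(0,1)` for the rescaled resolvent `Ψ^{(T)} : t ↦ Ψ(Tt)`
of the kernel `(1 + ε/T)·φ`, for `ε ∈ {-1, 0, 1}`. -/
theorem rescaled_resolvent_essSup_bound (φ : ℝ → ℝ) (hφ : AssumptionA φ) :
    ∀ ε : ℝ, (ε = -1 ∨ ε = 0 ∨ ε = 1) →
      ∃ C > 0, ∀ T : ℝ, 2 < T → ∀ Ψ : ℝ → ℝ,
        IsResolvent (fun t => (1 + ε / T) * φ t) Ψ →
        eLpNorm (fun t => Ψ (T * t)) ⊤ (volume.restrict (Set.Ioo (0 : ℝ) 1)) ≤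
          ENNReal.ofReal C := by
  obtain ⟨hmeas, hpos, hzero, hint, hsum, -, -, -, hdiff, ⟨K, hK⟩, hd'⟩ := hφ
  intro ε hε
  have hεb : -1 ≤ ε ∧ ε ≤ 1 := by rcases hε with h|h|h <;> subst h <;> norm_num
  -- integral over Iic 0 vanishes
  have hIic0 : ∀ r : ℝ, r ≤ 0 → (∫ t in Iic r, φ t) = 0 := by
    intro r hr
    rw [← setIntegral_congr_set Iio_ae_eq_Iic]
    rw [setIntegral_congr_fun measurableSet_Iio
      (fun t (ht : t ∈ Iio r) => hzero t (lt_of_lt_of_le ht hr))]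
    exact integral_zero _ _
  have hφIoi : (∫ t in Ioi (0:ℝ), φ t) = 1 := by
    have h := integral_add_compl (measurableSet_Iic (a := (0:ℝ))) hint
    rw [compl_Iic, hIic0 0 le_rfl, zero_add] at h
    rw [h, hsum]
  obtain ⟨A, hA, hAsmall⟩ := smallA φ hmeas hpos hint
  obtain ⟨l0, hl0, hl0small⟩ := lam0_exists φ hmeas hpos hint
  set Vd : ℝ := ∫ t, |deriv φ t| with hVd
  have hVdnn : 0 ≤ Vd := integral_nonneg (fun t => abs_nonneg _)
  have hAinn : 0 ≤ A⁻¹ := inv_nonneg.2 hA.le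
  set C1 : ℝ := 3 * (A⁻¹ * (3/2) + (3/2) * Vd) with hC1
  have hC1nn : 0 ≤ C1 := by positivity
  set C : ℝ := C1 * Real.exp (3 * l0) + 1 with hC
  have hCpos : 0 < C := by positivity
  clear_value Vd C1 C
  refine ⟨C, hCpos, ?_⟩
  intro T hT Ψ hΨ
  set a : ℝ := 1 + ε / T with ha
  obtain ⟨hΨmeas, hΨpos, hΨzero, hΨloc, hΨeq⟩ := hΨ
  have hT0 : (0:ℝ) < T := by linarith
  have hT1pos : (0:ℝ) ≤ 1/T := by positivity
  have hdivle : ε / T ≤ 1 / T := by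
    rw [div_eq_mul_one_div]
    nlinarith [hεb.2]
  have hdivge : -(1/T) ≤ ε / T := by
    rw [show ε / T = ε * (1/T) from div_eq_mul_one_div ε T]
    nlinarith [mul_nonneg (show (0:ℝ) ≤ ε + 1 by linarith [hεb.1]) hT1pos]
  have hTsmall : 1 / T < 1 / 2 := by
    apply one_div_lt_one_div_of_lt <;> linarith
  have ha32 : a ≤ 3/2 := by rw [ha]; linarith
  have ha05 : 1/2 ≤ a := by rw [ha]; linarith
  have ha0 : 0 ≤ a := le_trans (by norm_num : (0:ℝ) ≤ 1/2) ha05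
  -- the shrunken exponent
  set l : ℝ := l0 / ((T+1) * (1 - ∫ s in Ioi (0:ℝ), Real.exp (-(l0 * s)) * φ s)) with hld
  have hL0nn : 0 ≤ ∫ s in Ioi (0:ℝ), Real.exp (-(l0 * s)) * φ s :=
    setIntegral_nonneg measurableSet_Ioi fun t _ => mul_nonneg (Real.exp_nonneg _) (hpos t)
  have hh0 : 1/3 ≤ 1 - ∫ s in Ioi (0:ℝ), Real.exp (-(l0 * s)) * φ s := by linarith
  have hlpos : 0 < l := by
    rw [hld]
    apply div_pos (by linarith) (mul_pos (by linarith) (by linarith))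
  have hlT : l * T ≤ 3 * l0 := by
    rw [hld, div_mul_eq_mul_div,
      div_le_iff₀ (mul_pos (show (0:ℝ) < T+1 by linarith) (show (0:ℝ) < 1 - ∫ s in Ioi (0:ℝ), Real.exp (-(l0 * s)) * φ s by linarith))]
    calc l0 * T ≤ l0 * (T+1) := by nlinarith
      _ = (l0 * (T+1)) * 1 := (mul_one _).symm
      _ ≤ (l0 * (T+1)) * (3 * (1 - ∫ s in Ioi (0:ℝ), Real.exp (-(l0 * s)) * φ s)) := by
          apply mul_le_mul_of_nonneg_left (by linarith) (by nlinarith)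
      _ = 3 * l0 * ((T+1) * (1 - ∫ s in Ioi (0:ℝ), Real.exp (-(l0 * s)) * φ s)) := by ring
  have hkey : (1 + 1/T) * (∫ t in Ioi (0:ℝ), Real.exp (-(l * t)) * φ t) ≤ 1 := by
    have h := laplace_key φ hmeas hpos hint hφIoi l0 hl0 hl0small T hT
    rw [← hld] at h
    exact h
  clear_value l
  -- the tilted kernel and solution
  set k : ℝ → ℝ := fun t => Real.exp (-(l * t)) * (a * φ t) with hk
  set uu : ℝ → ℝ := fun t => Real.exp (-(l * t)) * Ψ t with huu
  set b : ℝ → ℝ := fun t => (3/2) * φ t with hb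
  set dd : ℝ → ℝ := fun t => (3/2) * |deriv φ t| with hdd
  have hexpm : Measurable fun t : ℝ => Real.exp (-(l * t)) :=
    Real.measurable_exp.comp (measurable_const.mul measurable_id).neg
  have hkmeas : Measurable k := hexpm.mul (hmeas.const_mul a)
  have hk0 : ∀ t, 0 ≤ k t := fun t =>
    mul_nonneg (Real.exp_nonneg _) (mul_nonneg ha0 (hpos t))
  have hkneg : ∀ t, t < 0 → k t = 0 := by
    intro t ht
    rw [hk]
    simp only
    rw [hzero t ht, mul_zero, mul_zero]
  have hkb : ∀ t, k t ≤ b t := by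
    intro t
    rcases lt_or_ge t 0 with h | h
    · rw [hkneg t h, hb]
      simp only
      rw [hzero t h, mul_zero]
    · rw [hk, hb]
      simp only
      have h1 : Real.exp (-(l * t)) ≤ 1 := by
        rw [Real.exp_le_one_iff]
        simp only [neg_nonpos]
        exact mul_nonneg hlpos.le h
      calc Real.exp (-(l * t)) * (a * φ t) ≤ 1 * (a * φ t) :=
            mul_le_mul_of_nonneg_right h1 (mul_nonneg ha0 (hpos t))
        _ = a * φ t := one_mul _
        _ ≤ (3/2) * φ t := mul_le_mul_of_nonneg_right ha32 (hpos t)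
  have hbmeas : Measurable b := hmeas.const_mul _
  have hb0 : ∀ t, 0 ≤ b t := fun t => mul_nonneg (by norm_num) (hpos t)
  have hbint : Integrable b := hint.const_mul _
  have hdm : Measurable dd := ((measurable_deriv φ).abs).const_mul _
  have hd0 : ∀ t, 0 ≤ dd t := fun t => mul_nonneg (by norm_num) (abs_nonneg _)
  have hdint : Integrable dd := hd'.abs.const_mul _
  have humeas : Measurable uu := hexpm.mul hΨmeas
  have hu0 : ∀ t, 0 ≤ uu t := fun t => mul_nonneg (Real.exp_nonneg _) (hΨpos t)
  -- finiteness of partial integrals of uu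
  have hufin : ∀ r : ℝ, (∫⁻ t in Iic r, ENNReal.ofReal (uu t)) < ⊤ := by
    intro r
    have hsub : Iic r ⊆ Iio 0 ∪ Icc 0 (max r 0) := by
      intro x hx
      rcases lt_or_ge x 0 with h | h
      · exact Or.inl h
      · exact Or.inr ⟨h, le_max_of_le_left (mem_Iic.1 hx)⟩
    calc (∫⁻ t in Iic r, ENNReal.ofReal (uu t))
        ≤ ∫⁻ t in Iio 0 ∪ Icc 0 (max r 0), ENNReal.ofReal (uu t) := lintegral_mono_set hsub
      _ ≤ (∫⁻ t in Iio 0, ENNReal.ofReal (uu t))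
          + ∫⁻ t in Icc 0 (max r 0), ENNReal.ofReal (uu t) := lintegral_union_le _ _ _
      _ < ⊤ := by
          have hz : (∫⁻ t in Iio 0, ENNReal.ofReal (uu t)) = 0 := by
            have h0 : ∀ᵐ t ∂(volume.restrict (Iio (0:ℝ))), ENNReal.ofReal (uu t) = 0 := by
              filter_upwards [ae_restrict_mem measurableSet_Iio] with t ht
              rw [huu]
              simp only
              rw [hΨzero t ht, mul_zero, ENNReal.ofReal_zero]
            rw [lintegral_congr_ae h0, lintegral_zero]
          have hfin2 : (∫⁻ t in Icc 0 (max r 0), ENNReal.ofReal (uu t)) < ⊤ := by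
            have hle : (∫⁻ t in Icc 0 (max r 0), ENNReal.ofReal (uu t))
                ≤ ∫⁻ t in Icc 0 (max r 0), ENNReal.ofReal (Ψ t) := by
              apply setLIntegral_mono' measurableSet_Icc
              intro t ht
              apply ENNReal.ofReal_le_ofReal
              rw [huu]
              simp only
              calc Real.exp (-(l * t)) * Ψ t ≤ 1 * Ψ t := by
                    apply mul_le_mul_of_nonneg_right _ (hΨpos t)
                    rw [Real.exp_le_one_iff]
                    simp only [neg_nonpos]
                    exact mul_nonneg hlpos.le ht.1
                _ = Ψ t := one_mul _
            have hint2 := (hΨloc.integrableOn_isCompact isCompact_Icc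
              (k := Icc (0:ℝ) (max r 0))).2
            rw [hasFiniteIntegral_iff_norm] at hint2
            apply lt_of_le_of_lt (hle.trans _) hint2
            apply lintegral_mono
            intro t
            exact ENNReal.ofReal_le_ofReal (le_abs_self _)
          rw [hz, zero_add]
          exact hfin2
  -- total mass of the tilted kernel
  have hkint : Integrable k := by
    apply Integrable.mono' hbint hkmeas.aestronglyMeasurable
    filter_upwards with t
    rw [Real.norm_eq_abs, abs_of_nonneg (hk0 t)]
    exact hkb t
  have hkIic0 : (∫ t in Iic (0:ℝ), k t) = 0 := by
    rw [← setIntegral_congr_set Iio_ae_eq_Iic]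
    rw [setIntegral_congr_fun measurableSet_Iio
      (fun t (ht : t ∈ Iio (0:ℝ)) => hkneg t ht)]
    exact integral_zero _ _
  have hkIoi : (∫ t in Ioi (0:ℝ), k t) = a * ∫ t in Ioi (0:ℝ), Real.exp (-(l * t)) * φ t := by
    rw [← integral_const_mul]
    apply setIntegral_congr_fun measurableSet_Ioi
    intro t _
    rw [hk]
    simp only
    ring
  have hLlnn : 0 ≤ ∫ t in Ioi (0:ℝ), Real.exp (-(l * t)) * φ t :=
    setIntegral_nonneg measurableSet_Ioi fun t _ => mul_nonneg (Real.exp_nonneg _) (hpos t)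
  have hktot : (∫⁻ t, ENNReal.ofReal (k t)) ≤ 1 := by
    rw [← ofReal_integral_eq_lintegral_ofReal hkint (ae_of_all _ hk0)]
    rw [← ENNReal.ofReal_one]
    apply ENNReal.ofReal_le_ofReal
    have hsplitk := integral_add_compl (measurableSet_Iic (a := (0:ℝ))) hkint
    rw [compl_Iic, hkIic0, zero_add] at hsplitk
    rw [← hsplitk, hkIoi]
    calc a * (∫ t in Ioi (0:ℝ), Real.exp (-(l * t)) * φ t)
        ≤ (1 + 1/T) * (∫ t in Ioi (0:ℝ), Real.exp (-(l * t)) * φ t) := by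
          apply mul_le_mul_of_nonneg_right _ hLlnn
          rw [ha]; linarith
      _ ≤ 1 := hkey
  -- kernel mass near zero
  have hkA : (∫⁻ t in Iic A, ENNReal.ofReal (k t)) ≤ ENNReal.ofReal (1/2) := by
    have h1 : (∫⁻ t in Iic A, ENNReal.ofReal (k t)) ≤ ∫⁻ t in Iic A, ENNReal.ofReal (b t) := by
      apply setLIntegral_mono' measurableSet_Iic
      intro t _
      exact ENNReal.ofReal_le_ofReal (hkb t)
    have h2 : (∫⁻ t in Iic A, ENNReal.ofReal (b t)) = ENNReal.ofReal (∫ t in Iic A, b t) :=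
      (ofReal_integral_eq_lintegral_ofReal hbint.integrableOn (ae_of_all _ hb0)).symm
    have h3 : (∫ t in Iic A, b t) ≤ 1/2 := by
      have hsp : (∫ t in Iic A, φ t) = (∫ t in Iic (0:ℝ), φ t) + ∫ t in Ioc (0:ℝ) A, φ t := by
        rw [← setIntegral_union (Iic_disjoint_Ioc le_rfl) measurableSet_Ioc
          hint.integrableOn hint.integrableOn, Iic_union_Ioc_eq_Iic hA.le]
      rw [hIic0 0 le_rfl, zero_add] at hsp
      have hbA : (∫ t in Iic A, b t) = (3/2) * ∫ t in Iic A, φ t := by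
        rw [← integral_const_mul]
      rw [hbA, hsp]
      linarith
    calc (∫⁻ t in Iic A, ENNReal.ofReal (k t)) ≤ ENNReal.ofReal (∫ t in Iic A, b t) := by
          rw [← h2]; exact h1
      _ ≤ ENNReal.ofReal (1/2) := ENNReal.ofReal_le_ofReal h3
  -- average bound for b
  have havg : ∀ v, b v ≤ A⁻¹ * (∫ w in Ioc v (v+A), b w) + ∫ w in Ioc v (v+A), dd w := by
    intro v
    have h := avg_bound φ hint hdiff hd' A hA v
    have h1 : (∫ w in Ioc v (v+A), b w) = (3/2) * ∫ w in Ioc v (v+A), φ w := by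
      rw [← integral_const_mul]
    have h2 : (∫ w in Ioc v (v+A), dd w) = (3/2) * ∫ w in Ioc v (v+A), |deriv φ w| := by
      rw [← integral_const_mul]
    rw [hb]
    simp only
    rw [h1, h2]
    calc (3/2) * φ v ≤ (3/2) * (A⁻¹ * (∫ u in Ioc v (v+A), φ u) + ∫ u in Ioc v (v+A), |deriv φ u|) := by
          linarith
      _ = A⁻¹ * ((3/2) * ∫ u in Ioc v (v+A), φ u) + (3/2) * ∫ u in Ioc v (v+A), |deriv φ u| := by
          ring
  -- the tilted equation
  have heq : ∀ᵐ t : ℝ, uu t = k t + ∫ s, k (t - s) * uu s := by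
    filter_upwards [hΨeq] with t ht0
    have ht : Ψ t = a * φ t + ∫ s, (a * φ (t - s)) * Ψ s := ht0
    have step1 : uu t = Real.exp (-(l * t)) * (a * φ t)
        + Real.exp (-(l * t)) * ∫ s, (a * φ (t - s)) * Ψ s := by
      rw [huu]
      simp only
      rw [ht]
      ring
    have step2 : Real.exp (-(l * t)) * (∫ s, (a * φ (t - s)) * Ψ s)
        = ∫ s, Real.exp (-(l * t)) * ((a * φ (t - s)) * Ψ s) := (integral_const_mul _ _).symm
    have step3 : (∫ s, Real.exp (-(l * t)) * ((a * φ (t - s)) * Ψ s))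
        = ∫ s, k (t - s) * uu s := by
      apply integral_congr_ae
      filter_upwards with s
      have hexp : Real.exp (-(l * t)) = Real.exp (-(l * (t - s))) * Real.exp (-(l * s)) := by
        rw [← Real.exp_add]
        ring_nf
      rw [hexp, hk, huu]
      simp only
      ring
    rw [step1, step2, step3]
  -- apply the key bound
  have htilted := tilted_bound k uu b dd hkmeas hk0 hkneg hbmeas hb0 hbint hdm hd0 hdint
    hkb humeas hu0 hufin hktot A hA hkA havg heq
  have hbtot : (∫ w, b w) = 3/2 := by
    rw [hb]
    simp only
    rw [integral_const_mul, hsum]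
    norm_num
  have hdtot : (∫ w, dd w) = (3/2) * Vd := by
    rw [hdd]
    simp only
    rw [integral_const_mul, hVd]
  have hae : ∀ᵐ s : ℝ, Ψ s ≤ C1 * Real.exp (l * s) := by
    filter_upwards [htilted] with s hs
    rw [hbtot, hdtot] at hs
    have hs2 : uu s ≤ C1 := by
      rw [hC1]
      exact hs
    have hid : Ψ s = Real.exp (l * s) * uu s := by
      rw [huu]
      simp only
      rw [← mul_assoc, ← Real.exp_add]
      simp
    rw [hid, mul_comm C1 (Real.exp (l * s))]
    exact mul_le_mul_of_nonneg_left hs2 (Real.exp_nonneg _)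
  -- transfer to the rescaled function
  have hTne : T ≠ 0 := ne_of_gt hT0
  have hmapae : ∀ᵐ t : ℝ, Ψ (T * t) ≤ C1 * Real.exp (l * (T * t)) := by
    have h1 : ∀ᵐ s ∂(Measure.map (fun t : ℝ => T * t) volume),
        Ψ s ≤ C1 * Real.exp (l * s) := by
      rw [Real.map_volume_mul_left hTne]
      exact Measure.ae_smul_measure hae _
    exact ae_of_ae_map (measurable_const_mul T).aemeasurable h1
  rw [eLpNorm_exponent_top]
  apply eLpNormEssSup_le_of_ae_bound (C := C)
  filter_upwards [ae_restrict_of_ae hmapae, ae_restrict_mem measurableSet_Ioo] with t htb htm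
  rw [Real.norm_eq_abs, abs_of_nonneg (hΨpos _)]
  calc Ψ (T * t) ≤ C1 * Real.exp (l * (T * t)) := htb
    _ ≤ C1 * Real.exp (3 * l0) := by
        apply mul_le_mul_of_nonneg_left _ hC1nn
        apply Real.exp_le_exp.2
        calc l * (T * t) = (l * T) * t := by ring
          _ ≤ (l * T) * 1 := by
              apply mul_le_mul_of_nonneg_left htm.2.le
              exact mul_nonneg hlpos.le hT0.le
          _ = l * T := mul_one _
          _ ≤ 3 * l0 := hlT
    _ ≤ C := by
        rw [hC]
        linarith
end

section
/- For every m > 0, ε > 0 and η > 0 there exists a twice continuously differentiable function Υ : ℝ → ℝ such that for all x ∈ ℝ: |x| − ε ≤ Υ(x) ≤ |x|, |Υ'(x)| ≤ 1, |Υ''(x)| ≤ 2·m²·e^{η/m²}/(ε·η), and additionally |Υ''(x)| ≤ 2·m²/(|x|·η) for all x ≠ 0. -/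
open Real

namespace YamadaAux

/-- derivative of the smoothstep `3t²-2t³` -/
noncomputable def gd (t : ℝ) : ℝ := 6 * t - 6 * t ^ 2

/-- smoothstep -/
noncomputable def sst (t : ℝ) : ℝ := 3 * t ^ 2 - 2 * t ^ 3

/-- clamp to [0,1] -/
noncomputable def cl (t : ℝ) : ℝ := min 1 (max 0 t)

/-- The second derivative of the Yamada function. -/
noncomputable def psi (c b x : ℝ) : ℝ := (c / |x|) * gd (cl (c * Real.log (|x| / b)))

/-- The first derivative of the Yamada function. -/
noncomputable def phi (c b x : ℝ) : ℝ := ∫ t in (0:ℝ)..x, psi c b t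

/-- The Yamada function. -/
noncomputable def ups (c b x : ℝ) : ℝ := ∫ t in (0:ℝ)..x, phi c b t

lemma cl_mem (t : ℝ) : cl t ∈ Set.Icc (0:ℝ) 1 := by
  constructor
  · exact le_min zero_le_one (le_max_left 0 t)
  · exact min_le_left 1 _

lemma gd_nonneg {t : ℝ} (h0 : 0 ≤ t) (h1 : t ≤ 1) : 0 ≤ gd t := by
  unfold gd; nlinarith

lemma gd_le (t : ℝ) : gd t ≤ 3 / 2 := by
  unfold gd; nlinarith [sq_nonneg (t - 1/2)]

lemma psi_nonneg (c b : ℝ) (hc : 0 < c) (x : ℝ) : 0 ≤ psi c b x := by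
  unfold psi
  exact mul_nonneg (div_nonneg hc.le (abs_nonneg x))
    (gd_nonneg (cl_mem _).1 (cl_mem _).2)

lemma psi_even (c b x : ℝ) : psi c b (-x) = psi c b x := by
  simp [psi, abs_neg]

lemma psi_le_abs (c b : ℝ) (hc : 0 < c) (x : ℝ) : psi c b x ≤ (3 * c / 2) / |x| := by
  unfold psi
  have h : gd (cl (c * Real.log (|x| / b))) ≤ 3 / 2 := gd_le _
  calc (c / |x|) * gd (cl (c * Real.log (|x| / b))) ≤ (c / |x|) * (3 / 2) := by
        exact mul_le_mul_of_nonneg_left h (div_nonneg hc.le (abs_nonneg x))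
    _ = (3 * c / 2) / |x| := by ring

lemma psi_eq_zero_below {c b : ℝ} (hc : 0 < c) (hb : 0 < b) {x : ℝ} (h : |x| ≤ b) :
    psi c b x = 0 := by
  rcases eq_or_ne x 0 with rfl | hx
  · simp [psi]
  · have habs : 0 < |x| := abs_pos.mpr hx
    have hlog : Real.log (|x| / b) ≤ 0 :=
      Real.log_nonpos (by positivity) ((div_le_one hb).mpr h)
    have hcl : cl (c * Real.log (|x| / b)) = 0 := by
      unfold cl
      have : c * Real.log (|x| / b) ≤ 0 := mul_nonpos_of_nonneg_of_nonpos hc.le hlog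
      rw [max_eq_left this, min_eq_right zero_le_one]
    unfold psi
    rw [hcl]
    simp [gd]

lemma psi_eq_zero_above {c b : ℝ} (hc : 0 < c) (hb : 0 < b) {x : ℝ}
    (h : b * Real.exp (1 / c) ≤ |x|) : psi c b x = 0 := by
  have habs : 0 < |x| := lt_of_lt_of_le (by positivity) h
  have hlog : 1 / c ≤ Real.log (|x| / b) := by
    rw [Real.le_log_iff_exp_le (by positivity)]
    rw [le_div_iff₀ hb]
    linarith [h]
  have h1 : 1 ≤ c * Real.log (|x| / b) := by
    have := mul_le_mul_of_nonneg_left hlog hc.le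
    rwa [mul_one_div, div_self hc.ne'] at this
  have hcl : cl (c * Real.log (|x| / b)) = 1 := by
    unfold cl
    rw [max_eq_right (le_trans zero_le_one h1), min_eq_left h1]
  unfold psi
  rw [hcl]
  simp [gd]

lemma psi_continuous (c b : ℝ) (hc : 0 < c) (hb : 0 < b) : Continuous (psi c b) := by
  rw [continuous_iff_continuousAt]
  intro x
  rcases eq_or_ne x 0 with rfl | hx
  · have hmem : Set.Ioo (-b) b ∈ nhds (0:ℝ) := Ioo_mem_nhds (by linarith) hb
    have hev : psi c b =ᶠ[nhds (0:ℝ)] fun _ => (0:ℝ) := by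
      filter_upwards [hmem] with t ht
      exact psi_eq_zero_below hc hb (abs_le.mpr ⟨ht.1.le, ht.2.le⟩)
    exact hev.continuousAt
  · have habs : ContinuousAt (fun y : ℝ => |y|) x := continuous_abs.continuousAt
    have hne : |x| ≠ 0 := abs_ne_zero.mpr hx
    have h1 : ContinuousAt (fun y : ℝ => c / |y|) x :=
      continuousAt_const.div habs hne
    have h2 : ContinuousAt (fun y : ℝ => Real.log (|y| / b)) x := by
      have hh := ContinuousAt.comp (x := x) (g := Real.log)
        (Real.continuousAt_log (x := |x| / b) (by positivity)) (habs.div_const b)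
      exact hh
    have h3 : ContinuousAt (fun y : ℝ => gd (cl (c * Real.log (|y| / b)))) x := by
      have hgd : Continuous gd := by unfold gd; continuity
      have hcl : Continuous cl :=
        continuous_const.min (continuous_const.max continuous_id)
      exact (hgd.continuousAt).comp ((hcl.continuousAt).comp (h2.const_mul c))
    exact h1.mul h3

lemma hasDerivAt_mid {c b : ℝ} (hc : 0 < c) (hb : 0 < b) {t : ℝ}
    (ht1 : b ≤ t) (ht2 : t ≤ b * Real.exp (1 / c)) :
    HasDerivAt (fun s => sst (c * Real.log (s / b))) (psi c b t) t := by
  have htpos : 0 < t := lt_of_lt_of_le hb ht1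
  -- derivative of inner function
  have hinner : HasDerivAt (fun s : ℝ => c * Real.log (s / b)) (c / t) t := by
    have h1 : HasDerivAt (fun s : ℝ => s / b) (1 / b) t := (hasDerivAt_id t).div_const b
    have h2 : HasDerivAt Real.log (t / b)⁻¹ (t / b) := Real.hasDerivAt_log (by positivity)
    have h4 := (h2.comp t h1).const_mul c
    refine h4.congr_deriv ?_
    field_simp
  have hout := ((hinner.pow 2).const_mul 3).sub ((hinner.pow 3).const_mul 2)
  have heq : (fun s => sst (c * Real.log (s / b)))
      = fun s => 3 * (c * Real.log (s / b)) ^ 2 - 2 * (c * Real.log (s / b)) ^ 3 := by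
    funext s; simp [sst]
  rw [heq]
  refine hout.congr_deriv ?_
  -- identify the value with psi
  set u : ℝ := c * Real.log (t / b) with hu
  have habs : |t| = t := abs_of_pos htpos
  have h0 : 0 ≤ u := by
    have : 0 ≤ Real.log (t / b) := Real.log_nonneg ((le_div_iff₀ hb).mpr (by linarith))
    positivity
  have h1 : u ≤ 1 := by
    have hlog : Real.log (t / b) ≤ 1 / c := by
      rw [Real.log_le_iff_le_exp (by positivity)]
      rw [div_le_iff₀ hb]
      linarith [ht2]
    calc u ≤ c * (1 / c) := mul_le_mul_of_nonneg_left hlog hc.le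
      _ = 1 := by field_simp
  have hcl : cl u = u := by
    unfold cl
    rw [max_eq_right h0, min_eq_right h1]
  unfold psi
  rw [habs, hcl]
  unfold gd
  push_cast
  ring

lemma intInt (c b : ℝ) (hc : 0 < c) (hb : 0 < b) (x y : ℝ) :
    IntervalIntegrable (psi c b) MeasureTheory.volume x y :=
  (psi_continuous c b hc hb).intervalIntegrable x y

lemma phi_below {c b : ℝ} (hc : 0 < c) (hb : 0 < b) {x : ℝ} (hx0 : 0 ≤ x) (hxb : x ≤ b) :
    phi c b x = 0 := by
  unfold phi
  rw [intervalIntegral.integral_congr (g := fun _ => (0:ℝ))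
    (fun t ht => ?_)]
  · simp
  · rw [Set.uIcc_of_le hx0] at ht
    exact psi_eq_zero_below hc hb (by rw [abs_of_nonneg ht.1]; linarith [ht.2])

lemma phi_mid {c b : ℝ} (hc : 0 < c) (hb : 0 < b) {x : ℝ} (hbx : b ≤ x)
    (hxa : x ≤ b * Real.exp (1 / c)) :
    phi c b x = sst (c * Real.log (x / b)) := by
  have h1 : phi c b x = phi c b b + ∫ t in b..x, psi c b t := by
    unfold phi
    rw [intervalIntegral.integral_add_adjacent_intervals (intInt c b hc hb 0 b)
      (intInt c b hc hb b x)]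
  have h2 : phi c b b = 0 := phi_below hc hb hb.le le_rfl
  have h3 : (∫ t in b..x, psi c b t)
      = sst (c * Real.log (x / b)) - sst (c * Real.log (b / b)) := by
    apply intervalIntegral.integral_eq_sub_of_hasDerivAt
    · intro t ht
      rw [Set.uIcc_of_le hbx] at ht
      exact hasDerivAt_mid hc hb ht.1 (le_trans ht.2 hxa)
    · exact intInt c b hc hb b x
  rw [h1, h2, h3, div_self hb.ne', Real.log_one]
  simp [sst]

lemma phi_at_top {c b : ℝ} (hc : 0 < c) (hb : 0 < b) {x : ℝ}
    (hax : b * Real.exp (1 / c) ≤ x) : phi c b x = 1 := by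
  set a := b * Real.exp (1 / c) with ha
  have hba : b ≤ a := by
    rw [ha]
    nlinarith [Real.one_le_exp (le_of_lt (by positivity : (0:ℝ) < 1 / c)), hb]
  have h1 : phi c b x = phi c b a + ∫ t in a..x, psi c b t := by
    unfold phi
    rw [intervalIntegral.integral_add_adjacent_intervals (intInt c b hc hb 0 a)
      (intInt c b hc hb a x)]
  have hapos : 0 < a := by positivity
  have h2 : (∫ t in a..x, psi c b t) = 0 := by
    rw [intervalIntegral.integral_congr (g := fun _ => (0:ℝ)) (fun t ht => ?_)]
    · simp
    · rw [Set.uIcc_of_le hax] at ht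
      exact psi_eq_zero_above hc hb (by rw [abs_of_nonneg (le_trans hapos.le ht.1)]; exact ht.1)
  have h3 : phi c b a = 1 := by
    rw [phi_mid hc hb hba le_rfl]
    have : a / b = Real.exp (1 / c) := by
      rw [ha]; field_simp
    rw [this, Real.log_exp, mul_one_div, div_self hc.ne']
    norm_num [sst]
  rw [h1, h2, h3, add_zero]

lemma sst_mem {t : ℝ} (h0 : 0 ≤ t) (h1 : t ≤ 1) : sst t ∈ Set.Icc (0:ℝ) 1 := by
  constructor
  · unfold sst; nlinarith
  · unfold sst; nlinarith [sq_nonneg (1 - t), mul_nonneg (sq_nonneg (1 - t)) h0]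

lemma phi_nonneg {c b : ℝ} (hc : 0 < c) {x : ℝ} (hx : 0 ≤ x) : 0 ≤ phi c b x :=
  intervalIntegral.integral_nonneg hx fun u _ => psi_nonneg c b hc u

lemma phi_le_one {c b : ℝ} (hc : 0 < c) (hb : 0 < b) {x : ℝ} (hx : 0 ≤ x) :
    phi c b x ≤ 1 := by
  rcases le_or_gt x b with hxb | hbx
  · rw [phi_below hc hb hx hxb]; norm_num
  · rcases le_or_gt x (b * Real.exp (1 / c)) with hxa | hax
    · rw [phi_mid hc hb hbx.le hxa]
      have h0 : 0 ≤ Real.log (x / b) := Real.log_nonneg ((le_div_iff₀ hb).mpr (by linarith))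
      have h1 : Real.log (x / b) ≤ 1 / c := by
        rw [Real.log_le_iff_le_exp (div_pos (hb.trans hbx) hb)]
        rw [div_le_iff₀ hb]
        linarith
      have hu0 : 0 ≤ c * Real.log (x / b) := mul_nonneg hc.le h0
      have hu1 : c * Real.log (x / b) ≤ 1 := by
        calc c * Real.log (x / b) ≤ c * (1 / c) := mul_le_mul_of_nonneg_left h1 hc.le
          _ = 1 := by field_simp
      exact (sst_mem hu0 hu1).2
    · rw [phi_at_top hc hb hax.le]

lemma phi_odd (c b : ℝ) (hc : 0 < c) (hb : 0 < b) (x : ℝ) :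
    phi c b (-x) = -phi c b x := by
  have h := intervalIntegral.integral_comp_neg (a := (0:ℝ)) (b := x) (f := psi c b)
  simp only [neg_zero] at h
  have h2 : (∫ t in (0:ℝ)..x, psi c b (-t)) = phi c b x := by
    apply intervalIntegral.integral_congr
    intro t _
    exact psi_even c b t
  have h3 : (∫ t in (-x)..(0:ℝ), psi c b t) = -phi c b (-x) := by
    rw [intervalIntegral.integral_symm]
    rfl
  rw [h2, h3] at h
  linarith

lemma phi_abs_le {c b : ℝ} (hc : 0 < c) (hb : 0 < b) (x : ℝ) : |phi c b x| ≤ 1 := by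
  rcases le_or_gt 0 x with hx | hx
  · rw [abs_le]
    exact ⟨by linarith [phi_nonneg hc (c := c) (b := b) hx], phi_le_one hc hb hx⟩
  · have hx' : 0 ≤ -x := by linarith
    have := phi_odd c b hc hb (-x)
    rw [neg_neg] at this
    rw [this, abs_neg, abs_le]
    exact ⟨by linarith [phi_nonneg hc (c := c) (b := b) hx'], phi_le_one hc hb hx'⟩

lemma phi_hasDerivAt (c b : ℝ) (hc : 0 < c) (hb : 0 < b) (x : ℝ) :
    HasDerivAt (phi c b) (psi c b x) x :=
  ((psi_continuous c b hc hb).integral_hasStrictDerivAt 0 x).hasDerivAt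

lemma phi_continuous (c b : ℝ) (hc : 0 < c) (hb : 0 < b) : Continuous (phi c b) := by
  have hdiff : Differentiable ℝ (phi c b) :=
    fun x => (phi_hasDerivAt c b hc hb x).differentiableAt
  exact hdiff.continuous

lemma ups_hasDerivAt (c b : ℝ) (hc : 0 < c) (hb : 0 < b) (x : ℝ) :
    HasDerivAt (ups c b) (phi c b x) x :=
  ((phi_continuous c b hc hb).integral_hasStrictDerivAt 0 x).hasDerivAt

lemma ups_even (c b : ℝ) (hc : 0 < c) (hb : 0 < b) (x : ℝ) :
    ups c b (-x) = ups c b x := by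
  have h := intervalIntegral.integral_comp_neg (a := (0:ℝ)) (b := x) (f := phi c b)
  simp only [neg_zero] at h
  have h2 : (∫ t in (0:ℝ)..x, phi c b (-t)) = -ups c b x := by
    rw [show (∫ t in (0:ℝ)..x, phi c b (-t)) = ∫ t in (0:ℝ)..x, -phi c b t from
      intervalIntegral.integral_congr fun t _ => phi_odd c b hc hb t,
      intervalIntegral.integral_neg]
    rfl
  have h3 : (∫ t in (-x)..(0:ℝ), phi c b t) = -ups c b (-x) := by
    rw [intervalIntegral.integral_symm]
    rfl
  rw [h2, h3] at h
  linarith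

lemma ups_nonneg {c b : ℝ} (hc : 0 < c) {x : ℝ} (hx : 0 ≤ x) : 0 ≤ ups c b x :=
  intervalIntegral.integral_nonneg hx fun u hu => phi_nonneg hc hu.1

lemma ups_le {c b : ℝ} (hc : 0 < c) (hb : 0 < b) {x : ℝ} (hx : 0 ≤ x) :
    ups c b x ≤ x := by
  have h : ups c b x ≤ ∫ _t in (0:ℝ)..x, (1:ℝ) := by
    unfold ups
    apply intervalIntegral.integral_mono_on hx
      ((phi_continuous c b hc hb).intervalIntegrable 0 x)
      (intervalIntegrable_const)
    intro t ht
    exact phi_le_one hc hb ht.1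
  simpa using h

lemma ups_ge {c b : ℝ} (hc : 0 < c) (hb : 0 < b) {x : ℝ} (hx : 0 ≤ x) :
    x - b * Real.exp (1 / c) ≤ ups c b x := by
  set a := b * Real.exp (1 / c) with ha
  have hapos : 0 < a := by positivity
  rcases le_or_gt x a with hxa | hax
  · have := ups_nonneg hc (c := c) (b := b) hx
    linarith
  · have h1 : ups c b x = ups c b a + ∫ t in a..x, phi c b t := by
      unfold ups
      rw [intervalIntegral.integral_add_adjacent_intervals
        ((phi_continuous c b hc hb).intervalIntegrable 0 a)
        ((phi_continuous c b hc hb).intervalIntegrable a x)]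
    have h2 : (∫ t in a..x, phi c b t) = x - a := by
      rw [intervalIntegral.integral_congr (g := fun _ => (1:ℝ)) (fun t ht => ?_)]
      · simp
      · rw [Set.uIcc_of_le hax.le] at ht
        exact phi_at_top hc hb ht.1
    have h3 := ups_nonneg hc (c := c) (b := b) hapos.le
    rw [h1, h2]
    linarith

end YamadaAux

open YamadaAux

/-- Existence of the Yamada-type function `Υ_{ε,η}`: a C² function with
`|x| - ε ≤ Υ(x) ≤ |x|`, `|Υ'| ≤ 1`, `|Υ''(x)| ≤ 2m²e^{η/m²}/(εη)` everywhere and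
`|Υ''(x)| ≤ 2m²/(|x|η)` for `x ≠ 0`. -/
theorem yamada_function_exists (m ε η : ℝ) (hm : 0 < m) (hε : 0 < ε) (hη : 0 < η) :
    ∃ Υ : ℝ → ℝ, ContDiff ℝ 2 Υ ∧
      (∀ x : ℝ, |x| - ε ≤ Υ x) ∧ (∀ x : ℝ, Υ x ≤ |x|) ∧
      (∀ x : ℝ, |deriv Υ x| ≤ 1) ∧
      (∀ x : ℝ, |deriv (deriv Υ) x| ≤ 2 * m ^ 2 * Real.exp (η / m ^ 2) / (ε * η)) ∧
      (∀ x : ℝ, x ≠ 0 → |deriv (deriv Υ) x| ≤ 2 * m ^ 2 / (|x| * η)) := by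
  set c : ℝ := 4 * m ^ 2 / (3 * η) with hcdef
  set b : ℝ := ε * Real.exp (-(3 * η / (4 * m ^ 2))) with hbdef
  have hc : 0 < c := by positivity
  have hb : 0 < b := by positivity
  have h1c : 1 / c = 3 * η / (4 * m ^ 2) := by
    rw [hcdef, one_div_div]
  have hba : b * Real.exp (1 / c) = ε := by
    rw [h1c, hbdef, mul_assoc, ← Real.exp_add]
    simp
  refine ⟨ups c b, ?_, ?_, ?_, ?_, ?_, ?_⟩
  · -- smoothness
    have hderiv : deriv (ups c b) = phi c b :=
      funext fun x => (ups_hasDerivAt c b hc hb x).deriv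
    have hderiv2 : deriv (phi c b) = psi c b :=
      funext fun x => (phi_hasDerivAt c b hc hb x).deriv
    rw [show (2 : WithTop ℕ∞) = 1 + 1 by norm_num, contDiff_succ_iff_deriv]
    refine ⟨fun x => (ups_hasDerivAt c b hc hb x).differentiableAt, by simp, ?_⟩
    rw [hderiv, contDiff_one_iff_deriv, hderiv2]
    exact ⟨fun x => (phi_hasDerivAt c b hc hb x).differentiableAt,
      psi_continuous c b hc hb⟩
  · -- lower bound
    intro x
    have habs : ups c b x = ups c b |x| := by
      rcases le_or_gt 0 x with hx | hx
      · rw [abs_of_nonneg hx]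
      · rw [abs_of_neg hx, ups_even c b hc hb x]
    rw [habs]
    have := ups_ge hc hb (abs_nonneg x) (c := c) (b := b)
    rw [hba] at this
    linarith
  · -- upper bound
    intro x
    have habs : ups c b x = ups c b |x| := by
      rcases le_or_gt 0 x with hx | hx
      · rw [abs_of_nonneg hx]
      · rw [abs_of_neg hx, ups_even c b hc hb x]
    rw [habs]
    exact ups_le hc hb (abs_nonneg x)
  · -- first derivative bound
    intro x
    rw [(ups_hasDerivAt c b hc hb x).deriv]
    exact phi_abs_le hc hb x
  · -- second derivative bound, global
    intro x
    have hd : deriv (ups c b) = phi c b :=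
      funext fun y => (ups_hasDerivAt c b hc hb y).deriv
    rw [hd, (phi_hasDerivAt c b hc hb x).deriv,
      abs_of_nonneg (psi_nonneg c b hc x)]
    have hkey : (3 * c / 2) / b = 2 * m ^ 2 * Real.exp (3 * η / (4 * m ^ 2)) / (ε * η) := by
      rw [hcdef, hbdef, Real.exp_neg]
      field_simp
      ring
    have hb1 : psi c b x ≤ (3 * c / 2) / b := by
      rcases le_or_gt |x| b with hxb | hbx
      · rw [psi_eq_zero_below hc hb hxb]
        positivity
      · calc psi c b x ≤ (3 * c / 2) / |x| := psi_le_abs c b hc x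
          _ ≤ (3 * c / 2) / b := by
            apply div_le_div_of_nonneg_left (by positivity) hb hbx.le
    have hexp : Real.exp (3 * η / (4 * m ^ 2)) ≤ Real.exp (η / m ^ 2) := by
      apply Real.exp_le_exp.mpr
      rw [div_le_div_iff₀ (by positivity) (by positivity)]
      nlinarith [sq_nonneg m, hη.le]
    calc psi c b x ≤ (3 * c / 2) / b := hb1
      _ = 2 * m ^ 2 * Real.exp (3 * η / (4 * m ^ 2)) / (ε * η) := hkey
      _ ≤ 2 * m ^ 2 * Real.exp (η / m ^ 2) / (ε * η) := by gcongr
  · -- second derivative bound, pointwise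
    intro x hx
    have hd : deriv (ups c b) = phi c b :=
      funext fun y => (ups_hasDerivAt c b hc hb y).deriv
    rw [hd, (phi_hasDerivAt c b hc hb x).deriv,
      abs_of_nonneg (psi_nonneg c b hc x)]
    have habs : 0 < |x| := abs_pos.mpr hx
    have hkey : (3 * c / 2) / |x| = 2 * m ^ 2 / (|x| * η) := by
      rw [hcdef]
      field_simp
      ring
    rw [← hkey]
    exact psi_le_abs c b hc x
end
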